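/- arXiv:math/0410560 — 8 statements merged into one kernel-verified Lean document; each statement's English description precedes it below -/
import Mathlib

section
/- Two-point reverse Bonami-Beckner inequality. Let f : {-1,1} → ℝ be a nonnegative function, let 0 < q < p < 1, and let ρ = √((1-p)/(1-q)). Then ( (|T_ρ f(1)|^q + |T_ρ f(-1)|^q)/2 )^{1/q} ≥ ( (f(1)^p + f(-1)^p)/2 )^{1/p}, where T_ρ f(x) = (f(1)+f(-1))/2 + ρ·x·(f(1)-f(-1))/2 for x ∈ {-1,1}. -/
open Real

private lemma aux_sinh_mul_cosh (v : ℝ) (hv : 0 ≤ v) : v ≤ Real.sinh v * Real.cosh v := by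
  have h := Real.self_le_sinh_iff.mpr (by linarith : (0:ℝ) ≤ 2*v)
  rw [Real.sinh_two_mul] at h
  linarith

private lemma aux_l1 (u : ℝ) (hu : 0 ≤ u) :
    u * Real.sinh u ≤ 2 * Real.cosh u * Real.log (Real.cosh u) := by
  set D : ℝ → ℝ := fun v => 2 * Real.log (Real.cosh v) - v * Real.sinh v / Real.cosh v with hDdef
  have hc : ∀ v : ℝ, Real.cosh v ≠ 0 := fun v => (Real.cosh_pos v).ne'
  have hD : ∀ v : ℝ, HasDerivAt D ((Real.sinh v * Real.cosh v - v) / Real.cosh v ^ 2) v := by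
    intro v
    have h1 : HasDerivAt (fun v => Real.log (Real.cosh v)) (Real.sinh v / Real.cosh v) v := by
      simpa using (Real.hasDerivAt_cosh v).log (hc v)
    have h2 : HasDerivAt (fun v : ℝ => v * Real.sinh v) (1 * Real.sinh v + v * Real.cosh v) v :=
      (hasDerivAt_id v).mul (Real.hasDerivAt_sinh v)
    have h3 : HasDerivAt (fun v : ℝ => v * Real.sinh v / Real.cosh v)
        (((1 * Real.sinh v + v * Real.cosh v) * Real.cosh v - v * Real.sinh v * Real.sinh v) /
          Real.cosh v ^ 2) v := h2.div (Real.hasDerivAt_cosh v) (hc v)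
    have h4 := (h1.const_mul (2:ℝ)).sub h3
    refine h4.congr_deriv ?_
    symm
    have hid : Real.cosh v ^ 2 - Real.sinh v ^ 2 = 1 := Real.cosh_sq_sub_sinh_sq v
    field_simp
    linear_combination v * hid
  have mono : MonotoneOn D (Set.Ici (0:ℝ)) := by
    apply monotoneOn_of_deriv_nonneg (convex_Ici 0)
    · exact fun v _ => ((hD v).differentiableAt.continuousAt).continuousWithinAt
    · exact fun v _ => ((hD v).differentiableAt).differentiableWithinAt
    · intro v hv
      rw [interior_Ici] at hv
      rw [(hD v).deriv]
      exact div_nonneg (by linarith [aux_sinh_mul_cosh v (le_of_lt hv)]) (sq_nonneg _)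
  have h0 : D 0 ≤ D u := mono Set.self_mem_Ici hu hu
  have hD0 : D 0 = 0 := by simp [hDdef]
  rw [hD0] at h0
  have : u * Real.sinh u / Real.cosh u ≤ 2 * Real.log (Real.cosh u) := by
    simp only [hDdef] at h0; linarith
  rw [div_le_iff₀ (Real.cosh_pos u)] at this
  linarith

private lemma aux_l2 (r t : ℝ) (hr0 : 0 ≤ r) (hr1 : r ≤ 1) (ht : 0 ≤ t) :
    Real.sinh (r * t) ≤ r * Real.sinh t := by
  set f : ℝ → ℝ := fun u => r * Real.sinh u - Real.sinh (r * u) with hfdef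
  have hD : ∀ u : ℝ, HasDerivAt f (r * Real.cosh u - Real.cosh (r * u) * r) u := by
    intro u
    have h1 : HasDerivAt (fun u : ℝ => Real.sinh (r * u)) (Real.cosh (r * u) * r) u := by
      have := ((hasDerivAt_id u).const_mul r).sinh
      simpa using this
    exact ((Real.hasDerivAt_sinh u).const_mul r).sub h1
  have mono : MonotoneOn f (Set.Ici (0:ℝ)) := by
    apply monotoneOn_of_deriv_nonneg (convex_Ici 0)
    · exact fun v _ => ((hD v).differentiableAt.continuousAt).continuousWithinAt
    · exact fun v _ => ((hD v).differentiableAt).differentiableWithinAt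
    · intro v hv
      rw [interior_Ici] at hv
      rw [(hD v).deriv]
      have : Real.cosh (r * v) ≤ Real.cosh v := by
        rw [Real.cosh_le_cosh]
        have hv' : (0:ℝ) < v := hv
        rw [abs_of_nonneg (mul_nonneg hr0 hv'.le), abs_of_nonneg hv'.le]
        nlinarith [mul_nonneg (sub_nonneg.mpr hr1) hv'.le]
      nlinarith
  have h0 : f 0 ≤ f t := mono Set.self_mem_Ici ht ht
  simp only [hfdef, mul_zero, Real.sinh_zero, sub_zero, mul_zero, sub_self] at h0
  linarith

private lemma aux_keyt (r t : ℝ) (hr0 : 0 < r) (hr1 : r < 1) (ht : 0 ≤ t) :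
    r * t * Real.sinh (r * t) - Real.cosh (r * t) * Real.log (Real.cosh (r * t)) ≤
      r ^ 2 * Real.sinh t * Real.sinh ((1 - r) * t) / (2 * (1 - r)) := by
  have hrt : 0 ≤ r * t := by positivity
  have h1 := aux_l1 (r * t) hrt
  have h2 := aux_l2 r t hr0.le hr1.le ht
  have h3 : (1 - r) * t ≤ Real.sinh ((1 - r) * t) :=
    Real.self_le_sinh_iff.mpr (by nlinarith)
  have hst : 0 ≤ Real.sinh t := Real.sinh_nonneg_iff.mpr ht
  have step1 : r * t * Real.sinh (r * t) - Real.cosh (r * t) * Real.log (Real.cosh (r * t)) ≤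
      r * t * Real.sinh (r * t) / 2 := by linarith
  have step2 : r * t * Real.sinh (r * t) / 2 ≤ r ^ 2 * t * Real.sinh t / 2 := by nlinarith
  have step3 : r ^ 2 * t * Real.sinh t / 2 ≤
      r ^ 2 * Real.sinh t * Real.sinh ((1 - r) * t) / (2 * (1 - r)) := by
    rw [div_le_div_iff₀ (by norm_num) (by nlinarith)]
    nlinarith [mul_le_mul_of_nonneg_left h3 (by positivity : (0:ℝ) ≤ r ^ 2 * Real.sinh t)]
  linarith

private lemma aux_keyx (r x : ℝ) (hr0 : 0 < r) (hr1 : r < 1) (hx0 : 0 < x) (hx1 : x < 1) :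
    ((1+x) ^ r * Real.log ((1+x) ^ r) + (1-x) ^ r * Real.log ((1-x) ^ r)) / 2
      - ((1+x) ^ r + (1-x) ^ r) / 2 * Real.log (((1+x) ^ r + (1-x) ^ r) / 2)
    ≤ r ^ 2 * x * ((1-x) ^ (r-1) - (1+x) ^ (r-1)) / (4 * (1-r)) := by
  have h1x : (0:ℝ) < 1 + x := by linarith
  have h2x : (0:ℝ) < 1 - x := by linarith
  set t : ℝ := Real.log ((1+x)/(1-x)) / 2 with htdef
  have hrat : 1 < (1+x)/(1-x) := by rw [lt_div_iff₀ h2x]; linarith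
  have ht : 0 < t := half_pos (Real.log_pos hrat)
  set E : ℝ := Real.exp t with hEdef
  have hE : 0 < E := Real.exp_pos t
  have hI : E * E * (1 - x) = 1 + x := by
    have h2t : E * E = (1+x)/(1-x) := by
      rw [hEdef, ← Real.exp_add, htdef]
      rw [show Real.log ((1+x)/(1-x)) / 2 + Real.log ((1+x)/(1-x)) / 2
            = Real.log ((1+x)/(1-x)) by ring]
      exact Real.exp_log (by positivity)
    rw [h2t, div_mul_cancel₀ _ h2x.ne']
  have hch : 0 < Real.cosh t := Real.cosh_pos t
  have hch_eq : Real.cosh t = (E + E⁻¹) / 2 := by rw [Real.cosh_eq, Real.exp_neg]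
  have hsh_eq : Real.sinh t = (E - E⁻¹) / 2 := by rw [Real.sinh_eq, Real.exp_neg]
  have hplus : 1 + x = E / Real.cosh t := by
    rw [hch_eq]; field_simp; linear_combination (-1 : ℝ) * hI
  have hminus : 1 - x = E⁻¹ / Real.cosh t := by
    rw [hch_eq]; field_simp; linear_combination hI
  have hxx : x = Real.sinh t / Real.cosh t := by
    rw [hsh_eq, hch_eq]; field_simp; linear_combination -hI
  set K : ℝ := Real.cosh t ^ r with hKdef
  have hK : 0 < K := Real.rpow_pos_of_pos hch r
  set u : ℝ := Real.exp (r * t) with hudef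
  have hu : 0 < u := Real.exp_pos _
  have hlogE : Real.log E = t := Real.log_exp t
  have hErpow : E ^ r = u := by
    rw [Real.rpow_def_of_pos hE, hlogE, mul_comm]
  have hEinvrpow : (E⁻¹) ^ r = u⁻¹ := by
    rw [Real.rpow_def_of_pos (inv_pos.mpr hE), Real.log_inv, hlogE, hudef, ← Real.exp_neg]
    ring_nf
  have hA : (1+x) ^ r = u / K := by
    rw [hplus, Real.div_rpow hE.le hch.le, hErpow]
  have hB : (1-x) ^ r = u⁻¹ / K := by
    rw [hminus, Real.div_rpow (inv_pos.mpr hE).le hch.le, hEinvrpow]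
  have hlogA : Real.log ((1+x) ^ r) = r * t - Real.log K := by
    rw [hA, Real.log_div hu.ne' hK.ne', hudef, Real.log_exp]
  have hlogB : Real.log ((1-x) ^ r) = -(r * t) - Real.log K := by
    rw [hB, Real.log_div (inv_pos.mpr hu).ne' hK.ne', Real.log_inv, hudef, Real.log_exp]
  have hAB : ((1+x) ^ r + (1-x) ^ r) / 2 = Real.cosh (r * t) / K := by
    rw [hA, hB, Real.cosh_eq, Real.exp_neg, ← hudef]
    ring
  have hlogAB : Real.log (((1+x) ^ r + (1-x) ^ r) / 2)
      = Real.log (Real.cosh (r * t)) - Real.log K := by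
    rw [hAB, Real.log_div (Real.cosh_pos _).ne' hK.ne']
  have hA1 : (1+x) ^ (r - 1) = ((1+x) ^ r) / (1 + x) := by
    rw [Real.rpow_sub h1x, Real.rpow_one]
  have hB1 : (1-x) ^ (r - 1) = ((1-x) ^ r) / (1 - x) := by
    rw [Real.rpow_sub h2x, Real.rpow_one]
  have hr1' : (1:ℝ) - r ≠ 0 := by linarith
  have eqL : ((1+x) ^ r * Real.log ((1+x) ^ r) + (1-x) ^ r * Real.log ((1-x) ^ r)) / 2
      - ((1+x) ^ r + (1-x) ^ r) / 2 * Real.log (((1+x) ^ r + (1-x) ^ r) / 2)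
      = (r * t * Real.sinh (r * t)
          - Real.cosh (r * t) * Real.log (Real.cosh (r * t))) / K := by
    rw [hlogA, hlogB, hlogAB, hAB, hA, hB, Real.sinh_eq (r*t), Real.cosh_eq (r*t),
      Real.exp_neg, ← hudef]
    field_simp
    ring
  have hsub1 : Real.exp ((1 - r) * t) = E / u := by
    rw [hEdef, hudef, ← Real.exp_sub]; ring_nf
  have hsub2 : Real.exp (-((1 - r) * t)) = u / E := by
    rw [hEdef, hudef, ← Real.exp_sub]; ring_nf
  have eqR : r ^ 2 * x * ((1-x) ^ (r-1) - (1+x) ^ (r-1)) / (4 * (1-r))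
      = r ^ 2 * Real.sinh t * Real.sinh ((1 - r) * t) / (2 * (1 - r)) / K := by
    rw [hA1, hB1, hA, hB, hplus, hminus, hxx, Real.sinh_eq ((1-r)*t), hsub1, hsub2]
    field_simp
    ring
  rw [eqL, eqR]
  have hkt := aux_keyt r t hr0 hr1 ht.le
  gcongr

private lemma aux_curve (p q s : ℝ) (hq : 0 < q) (hqp : q < p) (hp : p < 1)
    (hs0 : 0 < s) (hs1 : s ≤ 1) :
    (((1+s) ^ p + (1-s) ^ p) / 2) ^ (1/p) ≤
      (((1 + Real.sqrt ((1-p)/(1-q)) * s) ^ q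
        + (1 - Real.sqrt ((1-p)/(1-q)) * s) ^ q) / 2) ^ (1/q) := by
  have hp0 : 0 < p := hq.trans hqp
  have h1p : 0 < 1 - p := by linarith
  have h1q : 0 < 1 - q := by linarith
  set c0 : ℝ := Real.sqrt (1-p) * s with hc0def
  have hc0 : 0 < c0 := mul_pos (Real.sqrt_pos.mpr h1p) hs0
  set X : ℝ → ℝ := fun r => c0 / Real.sqrt (1-r) with hXdef
  have hXpos : ∀ r, r ≤ p → 0 < X r := by
    intro r hr
    exact div_pos hc0 (Real.sqrt_pos.mpr (by linarith))
  have hXle : ∀ r, q ≤ r → r ≤ p → X r ≤ 1 := by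
    intro r hr1 hr2
    rw [hXdef]
    simp only
    rw [div_le_one (Real.sqrt_pos.mpr (by linarith : (0:ℝ) < 1 - r))]
    calc c0 = Real.sqrt (1-p) * s := rfl
    _ ≤ Real.sqrt (1-p) * 1 := by
        exact mul_le_mul_of_nonneg_left hs1 (Real.sqrt_nonneg _)
    _ = Real.sqrt (1-p) := mul_one _
    _ ≤ Real.sqrt (1-r) := Real.sqrt_le_sqrt (by linarith)
  have hXlt : ∀ r, q ≤ r → r < p → X r < 1 := by
    intro r hr1 hr2
    rw [hXdef]
    simp only
    rw [div_lt_one (Real.sqrt_pos.mpr (by linarith : (0:ℝ) < 1 - r))]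
    calc c0 = Real.sqrt (1-p) * s := rfl
    _ ≤ Real.sqrt (1-p) * 1 := mul_le_mul_of_nonneg_left hs1 (Real.sqrt_nonneg _)
    _ = Real.sqrt (1-p) := mul_one _
    _ < Real.sqrt (1-r) := by
        apply Real.sqrt_lt_sqrt h1p.le
        linarith
  set Φ : ℝ → ℝ := fun r => ((1 + X r) ^ r + (1 - X r) ^ r) / 2 with hΦdef
  have hΦpos : ∀ r, q ≤ r → r ≤ p → 0 < Φ r := by
    intro r hr1 hr2
    have h1 : (0:ℝ) < (1 + X r) ^ r := Real.rpow_pos_of_pos (by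
      have := hXpos r hr2; linarith) r
    have h2 : (0:ℝ) ≤ (1 - X r) ^ r := Real.rpow_nonneg (by
      have := hXle r hr1 hr2; linarith) r
    rw [hΦdef]
    simp only
    positivity
  set G : ℝ → ℝ := fun r => Real.log (Φ r) / r with hGdef
  -- continuity of X at points with r < 1
  have hXcont : ∀ r, r < 1 → ContinuousAt X r := by
    intro r hr
    apply continuousAt_const.div
    · exact Real.continuous_sqrt.continuousAt.comp ((continuous_const.sub continuous_id).continuousAt)
    · exact (Real.sqrt_pos.mpr (by linarith)).ne'
  have hGcont : ContinuousOn G (Set.Icc q p) := by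
    intro r hr
    have hr1 : q ≤ r := hr.1
    have hr2 : r ≤ p := hr.2
    have hxc := hXcont r (by linarith)
    have h1 : ContinuousAt (fun r => (1 + X r) ^ r) r := by
      apply ContinuousAt.rpow (continuousAt_const.add hxc) continuousAt_id
      exact Or.inr (by simp only [id_eq]; linarith)
    have h2 : ContinuousAt (fun r => (1 - X r) ^ r) r := by
      apply ContinuousAt.rpow (continuousAt_const.sub hxc) continuousAt_id
      exact Or.inr (by simp only [id_eq]; linarith)
    have hΦc : ContinuousAt Φ r := ((h1.add h2).div_const 2)
    have : ContinuousAt G r := by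
      apply ContinuousAt.div
      · exact hΦc.log (hΦpos r hr1 hr2).ne'
      · exact continuousAt_id
      · exact (by linarith : (0:ℝ) < r).ne'
    exact this.continuousWithinAt
  -- derivative facts on the interior
  have hXderiv : ∀ r, q < r → r < p → HasDerivAt X (X r / (2 * (1-r))) r := by
    intro r hr1 hr2
    have h1r : (0:ℝ) < 1 - r := by linarith
    have hsq : Real.sqrt (1-r) ≠ 0 := (Real.sqrt_pos.mpr h1r).ne'
    have h0 : HasDerivAt (fun r : ℝ => 1 - r) (-1) r := by
      simpa using (hasDerivAt_id' r).const_sub (1:ℝ)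
    have hs' : HasDerivAt (fun r : ℝ => Real.sqrt (1-r)) (-(1 / (2 * Real.sqrt (1-r)))) r := by
      have := h0.sqrt h1r.ne'
      exact this.congr_deriv (by ring)
    have hdd := (hasDerivAt_const r c0).div hs' hsq
    refine hdd.congr_deriv ?_
    symm
    rw [Real.sq_sqrt h1r.le]
    simp only [hXdef]
    rw [zero_mul]
    field_simp
    ring
  have hΦderiv : ∀ r, q < r → r < p →
      HasDerivAt Φ
        ((X r / (2 * (1-r)) * r * (1 + X r) ^ (r-1) + 1 * (1 + X r) ^ r * Real.log (1 + X r)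
          + (-(X r / (2 * (1-r))) * r * (1 - X r) ^ (r-1)
            + 1 * (1 - X r) ^ r * Real.log (1 - X r))) / 2) r := by
    intro r hr1 hr2
    have hx0 := hXpos r hr2.le
    have hx1 := hXlt r hr1.le hr2
    have h1 : HasDerivAt (fun r => (1 + X r) ^ r)
        (X r / (2 * (1-r)) * r * (1 + X r) ^ (r-1)
          + 1 * (1 + X r) ^ r * Real.log (1 + X r)) r := by
      have hf : HasDerivAt (fun r => 1 + X r) (0 + X r / (2 * (1-r))) r :=
        (hasDerivAt_const r (1:ℝ)).add (hXderiv r hr1 hr2)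
      have := HasDerivAt.rpow hf (hasDerivAt_id r) (by linarith : 0 < 1 + X r)
      simpa using this
    have h2 : HasDerivAt (fun r => (1 - X r) ^ r)
        (-(X r / (2 * (1-r))) * r * (1 - X r) ^ (r-1)
          + 1 * (1 - X r) ^ r * Real.log (1 - X r)) r := by
      have hf : HasDerivAt (fun r => 1 - X r) (0 - X r / (2 * (1-r))) r :=
        (hasDerivAt_const r (1:ℝ)).sub (hXderiv r hr1 hr2)
      have := HasDerivAt.rpow hf (hasDerivAt_id r) (by linarith : 0 < 1 - X r)
      simpa using this
    exact (h1.add h2).div_const 2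
  have hGderiv : ∀ r, q < r → r < p →
      HasDerivAt G
        (((X r / (2 * (1-r)) * r * (1 + X r) ^ (r-1) + 1 * (1 + X r) ^ r * Real.log (1 + X r)
          + (-(X r / (2 * (1-r))) * r * (1 - X r) ^ (r-1)
            + 1 * (1 - X r) ^ r * Real.log (1 - X r))) / 2 / Φ r * r
          - Real.log (Φ r) * 1) / r ^ 2) r := by
    intro r hr1 hr2
    have hΦp := hΦpos r hr1.le hr2.le
    have := ((hΦderiv r hr1 hr2).log hΦp.ne').div (hasDerivAt_id r)
      (by simp only [id_eq]; exact (by linarith : (0:ℝ) < r).ne')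
    simp at this
    exact this.congr_deriv (by ring)
  have hanti : AntitoneOn G (Set.Icc q p) := by
    apply antitoneOn_of_deriv_nonpos (convex_Icc q p) hGcont
    · intro r hr
      rw [interior_Icc] at hr
      exact ((hGderiv r hr.1 hr.2).differentiableAt).differentiableWithinAt
    · intro r hr
      rw [interior_Icc] at hr
      obtain ⟨hr1, hr2⟩ := hr
      rw [(hGderiv r hr1 hr2).deriv]
      have hr0 : 0 < r := by linarith
      have hx0 := hXpos r hr2.le
      have hx1 := hXlt r hr1.le hr2
      have hΦp := hΦpos r hr1.le hr2.le
      apply div_nonpos_of_nonpos_of_nonneg _ (by positivity)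
      rw [sub_nonpos, mul_one]
      rw [div_mul_eq_mul_div, div_le_iff₀ hΦp]
      -- key inequality
      have hkey := aux_keyx r (X r) hr0 (by linarith) hx0 hx1
      rw [Real.log_rpow (by linarith : (0:ℝ) < 1 + X r),
        Real.log_rpow (by linarith : (0:ℝ) < 1 - X r)] at hkey
      have hΦexp : Φ r = ((1 + X r) ^ r + (1 - X r) ^ r) / 2 := rfl
      have expand : (X r / (2 * (1-r)) * r * (1 + X r) ^ (r-1)
            + 1 * (1 + X r) ^ r * Real.log (1 + X r)
            + (-(X r / (2 * (1-r))) * r * (1 - X r) ^ (r-1)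
              + 1 * (1 - X r) ^ r * Real.log (1 - X r))) / 2 * r
          = ((1 + X r) ^ r * (r * Real.log (1 + X r))
              + (1 - X r) ^ r * (r * Real.log (1 - X r))) / 2
            - r ^ 2 * X r * ((1 - X r) ^ (r-1) - (1 + X r) ^ (r-1)) / (4 * (1-r)) := by
        have h1r' : (1:ℝ) - r ≠ 0 := by linarith
        field_simp [h1r']
        ring
      rw [expand, hΦexp]
      linarith [hkey]
  -- evaluate at the endpoints
  have hXp : X p = s := by
    rw [hXdef]
    simp only
    rw [hc0def, mul_comm, mul_div_assoc, div_self (Real.sqrt_pos.mpr h1p).ne', mul_one]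
  have hXq : X q = Real.sqrt ((1-p)/(1-q)) * s := by
    rw [hXdef]
    simp only
    rw [hc0def, Real.sqrt_div' (1-p) h1q.le]
    ring
  have hGle : G p ≤ G q := hanti ⟨le_refl q, hqp.le⟩ ⟨hqp.le, le_refl p⟩ hqp.le
  have hΦq := hΦpos q (le_refl q) hqp.le
  have hΦp' := hΦpos p hqp.le (le_refl p)
  have e1 : (((1+s) ^ p + (1-s) ^ p) / 2) ^ (1/p) = Real.exp (G p) := by
    have hh : Φ p = ((1+s) ^ p + (1-s) ^ p) / 2 := by
      rw [hΦdef]; simp only; rw [hXp]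
    rw [← hh, Real.rpow_def_of_pos hΦp', hGdef]
    simp only
    rw [mul_one_div]
  have e2 : (((1 + Real.sqrt ((1-p)/(1-q)) * s) ^ q
        + (1 - Real.sqrt ((1-p)/(1-q)) * s) ^ q) / 2) ^ (1/q) = Real.exp (G q) := by
    have hh : Φ q = ((1 + Real.sqrt ((1-p)/(1-q)) * s) ^ q
        + (1 - Real.sqrt ((1-p)/(1-q)) * s) ^ q) / 2 := by
      rw [hΦdef]; simp only; rw [hXq]
    rw [← hh, Real.rpow_def_of_pos hΦq, hGdef]
    simp only
    rw [mul_one_div]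
  rw [e1, e2]
  exact Real.exp_le_exp.mpr hGle

private lemma aux_scale (t u v r : ℝ) (ht : 0 ≤ t) (hu : 0 ≤ u) (hv : 0 ≤ v) (hr : 0 < r) :
    (((t*u) ^ r + (t*v) ^ r) / 2) ^ (1/r) = t * ((u ^ r + v ^ r) / 2) ^ (1/r) := by
  rw [Real.mul_rpow ht hu, Real.mul_rpow ht hv,
    show t ^ r * u ^ r + t ^ r * v ^ r = t ^ r * (u ^ r + v ^ r) from by ring,
    mul_div_assoc, Real.mul_rpow (Real.rpow_nonneg ht r) (by positivity),
    ← Real.rpow_mul ht, show (r * (1/r)) = 1 from by field_simp, Real.rpow_one]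

private lemma aux_main (a b p q ρ : ℝ) (hb : 0 ≤ b) (hba : b ≤ a)
    (hq : 0 < q) (hqp : q < p) (hp : p < 1)
    (hρ : ρ = Real.sqrt ((1 - p) / (1 - q))) :
    ((a ^ p + b ^ p) / 2) ^ (1 / p) ≤
      ((((a + b) / 2 + ρ * (a - b) / 2) ^ q + ((a + b) / 2 - ρ * (a - b) / 2) ^ q) / 2)
        ^ (1 / q) := by
  have hp0 : 0 < p := hq.trans hqp
  have h1p : 0 < 1 - p := by linarith
  have h1q : 0 < 1 - q := by linarith
  have hρ0 : 0 < ρ := by rw [hρ]; positivity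
  have hρ1 : ρ ≤ 1 := by
    rw [hρ]
    exact Real.sqrt_le_one.mpr (by rw [div_le_one h1q]; linarith)
  have ha : 0 ≤ a := hb.trans hba
  rcases eq_or_lt_of_le ha with ha0 | ha0
  · -- a = 0 hence b = 0
    have hb0 : b = 0 := le_antisymm (hba.trans ha0.symm.le) hb
    rw [← ha0, hb0]
    norm_num
    rw [Real.zero_rpow hp0.ne', Real.zero_rpow hq.ne',
      Real.zero_rpow (by positivity : p⁻¹ ≠ 0), Real.zero_rpow (by positivity : q⁻¹ ≠ 0)]
  · rcases eq_or_lt_of_le hba with hab | hab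
    · -- b = a
      rw [hab,
        show (a+a)/2 + ρ*(a-a)/2 = a from by ring,
        show (a+a)/2 - ρ*(a-a)/2 = a from by ring,
        show (a ^ p + a ^ p)/2 = a ^ p from by ring,
        show (a ^ q + a ^ q)/2 = a ^ q from by ring,
        ← Real.rpow_mul ha0.le, ← Real.rpow_mul ha0.le,
        show p * (1/p) = 1 from by field_simp,
        show q * (1/q) = 1 from by field_simp]
    · -- b < a
      have hab' : (0:ℝ) < a + b := by linarith
      set S : ℝ := (a+b)/2 with hSdef
      have hSpos : 0 < S := by rw [hSdef]; linarith
      set s : ℝ := (a-b)/(a+b) with hsdef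
      have hs0 : 0 < s := div_pos (by linarith) hab'
      have hs1 : s ≤ 1 := by rw [hsdef, div_le_one hab']; linarith
      have hρs : 0 ≤ 1 - ρ*s := by nlinarith
      have ea : a = S*(1+s) := by rw [hSdef, hsdef]; field_simp; ring
      have eb : b = S*(1-s) := by rw [hSdef, hsdef]; field_simp; ring
      have ec : S + ρ*(a-b)/2 = S*(1+ρ*s) := by rw [hSdef, hsdef]; field_simp
      have ed : S - ρ*(a-b)/2 = S*(1-ρ*s) := by rw [hSdef, hsdef]; field_simp
      have key := aux_curve p q s hq hqp hp hs0 hs1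
      rw [← hρ] at key
      calc ((a ^ p + b ^ p)/2) ^ (1/p)
          = (((S*(1+s)) ^ p + (S*(1-s)) ^ p)/2) ^ (1/p) := by rw [← ea, ← eb]
        _ = S * (((1+s) ^ p + (1-s) ^ p)/2) ^ (1/p) :=
            aux_scale S (1+s) (1-s) p hSpos.le (by linarith) (by linarith) hp0
        _ ≤ S * (((1+ρ*s) ^ q + (1-ρ*s) ^ q)/2) ^ (1/q) := by
            apply mul_le_mul_of_nonneg_left _ hSpos.le
            exact key
        _ = (((S*(1+ρ*s)) ^ q + (S*(1-ρ*s)) ^ q)/2) ^ (1/q) :=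
            (aux_scale S (1+ρ*s) (1-ρ*s) q hSpos.le (by positivity) hρs hq).symm
        _ = (((S + ρ*(a-b)/2) ^ q + (S - ρ*(a-b)/2) ^ q)/2) ^ (1/q) := by rw [ec, ed]

/-- **Two-point reverse Bonami-Beckner inequality.** For nonnegative `f : {-1,1} → ℝ`
with values `a = f(1)`, `b = f(-1)`, `0 < q < p < 1` and `ρ = √((1-p)/(1-q))`:
`((|T_ρ f(1)|^q + |T_ρ f(-1)|^q)/2)^{1/q} ≥ ((f(1)^p + f(-1)^p)/2)^{1/p}`, where
`T_ρ f(x) = (f(1)+f(-1))/2 + ρ·x·(f(1)-f(-1))/2`. -/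
theorem two_point_reverse_bonami_beckner (a b p q ρ : ℝ) (ha : 0 ≤ a) (hb : 0 ≤ b)
    (hq : 0 < q) (hqp : q < p) (hp : p < 1)
    (hρ : ρ = Real.sqrt ((1 - p) / (1 - q))) :
    ((a ^ p + b ^ p) / 2) ^ (1 / p) ≤
      ((|(a + b) / 2 + ρ * (a - b) / 2| ^ q + |(a + b) / 2 - ρ * (a - b) / 2| ^ q) / 2)
        ^ (1 / q) := by
  have hp0 : 0 < p := hq.trans hqp
  have h1p : 0 < 1 - p := by linarith
  have h1q : 0 < 1 - q := by linarith
  have hρ0 : 0 < ρ := by rw [hρ]; positivity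
  have hρ1 : ρ ≤ 1 := by
    rw [hρ]
    exact Real.sqrt_le_one.mpr (by rw [div_le_one h1q]; linarith)
  have hc : 0 ≤ (a + b) / 2 + ρ * (a - b) / 2 := by nlinarith
  have hd : 0 ≤ (a + b) / 2 - ρ * (a - b) / 2 := by nlinarith
  rw [abs_of_nonneg hc, abs_of_nonneg hd]
  rcases le_total b a with h | h
  · exact aux_main a b p q ρ hb h hq hqp hp hρ
  · have haux := aux_main b a p q ρ ha h hq hqp hp hρ
    rw [show b ^ p + a ^ p = a ^ p + b ^ p from add_comm _ _,
      show (b+a)/2 + ρ*(b-a)/2 = (a+b)/2 - ρ*(a-b)/2 from by ring,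
      show (b+a)/2 - ρ*(b-a)/2 = (a+b)/2 + ρ*(a-b)/2 from by ring] at haux
    refine le_trans haux (le_of_eq ?_)
    rw [add_comm (((a + b) / 2 - ρ * (a - b) / 2) ^ q)]
end

section
/- Conditional form of the isoperimetric inequality. Let ρ ∈ [0,1), let S ⊆ {-1,1}^n have fractional size σ = |S|/2^n with σ ∈ (0,1], and let T ⊆ {-1,1}^n have fractional size σ^α for some α ≥ 0. Let x be chosen uniformly at random from S and let y be a ρ-correlated copy of x. Then Pr[y ∈ T] ≥ σ^{(√α + ρ)² / (1-ρ²)}. In particular, if |S| = |T| then Pr[y ∈ T] ≥ σ^{(1+ρ)/(1-ρ)}. -/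
open Finset Real

noncomputable section

/-- The sign of a Boolean bit: `true ↦ 1`, `false ↦ -1`. -/
def sgn (b : Bool) : ℝ := if b then 1 else -1

/-- `∏ᵢ (1/2 + (ρ/2) xᵢ yᵢ)`: the conditional probability that a `ρ`-correlated copy
of `x` equals `y`. -/
def corrWeight {n : ℕ} (ρ : ℝ) (x y : Fin n → Bool) : ℝ :=
  ∏ i, (1 / 2 + (ρ / 2) * sgn (x i) * sgn (y i))


lemma chi_hasDeriv {s : ℝ} (t : ℝ) (ht0 : 0 ≤ t) (ht1 : t < 1) (hs0 : 0 ≤ s) (hs1 : s ≤ 1) :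
    HasDerivAt (fun u => s * Real.log (1 + u) - s * Real.log (1 - u)
      - Real.log (1 + s * u) + Real.log (1 - s * u))
      (s / (1 + t) + s / (1 - t) - s / (1 + s * t) - s / (1 - s * t)) t := by
  have hst : s * t < 1 := by nlinarith
  have h1 : (0:ℝ) < 1 + t := by linarith
  have h2 : (0:ℝ) < 1 - t := by linarith
  have h3 : (0:ℝ) < 1 + s * t := by nlinarith
  have h4 : (0:ℝ) < 1 - s * t := by linarith
  have d1 : HasDerivAt (fun u : ℝ => Real.log (1 + u)) (1 / (1 + t)) t := by
    have : HasDerivAt (fun u : ℝ => 1 + u) 1 t := (hasDerivAt_id t).const_add 1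
    simpa using this.log h1.ne'
  have d2 : HasDerivAt (fun u : ℝ => Real.log (1 - u)) (-1 / (1 - t)) t := by
    have : HasDerivAt (fun u : ℝ => 1 - u) (-1) t := by
      simpa using (hasDerivAt_id t).const_sub 1
    simpa using this.log h2.ne'
  have d3 : HasDerivAt (fun u : ℝ => Real.log (1 + s * u)) (s / (1 + s * t)) t := by
    have : HasDerivAt (fun u : ℝ => 1 + s * u) s t := by
      simpa using ((hasDerivAt_id t).const_mul s).const_add 1
    simpa using this.log h3.ne'
  have d4 : HasDerivAt (fun u : ℝ => Real.log (1 - s * u)) (-s / (1 - s * t)) t := by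
    have : HasDerivAt (fun u : ℝ => 1 - s * u) (-s) t := by
      simpa using ((hasDerivAt_id t).const_mul s).const_sub 1
    simpa using this.log h4.ne'
  have := (((d1.const_mul s).sub (d2.const_mul s)).sub d3).add d4
  exact this.congr_deriv (by ring)

lemma L1 {s x : ℝ} (hs0 : 0 ≤ s) (hs1 : s ≤ 1) (hx0 : 0 ≤ x) (hx1 : x < 1) :
    (1 - x) ^ s * (1 + s * x) ≤ (1 + x) ^ s * (1 - s * x) := by
  set χ : ℝ → ℝ := fun u => s * Real.log (1 + u) - s * Real.log (1 - u)
      - Real.log (1 + s * u) + Real.log (1 - s * u) with hχ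
  have hmono : MonotoneOn χ (Set.Icc 0 x) := by
    apply monotoneOn_of_deriv_nonneg (convex_Icc 0 x)
    · intro t ht
      exact ((chi_hasDeriv t ht.1 (lt_of_le_of_lt ht.2 hx1) hs0 hs1)).continuousAt.continuousWithinAt
    · intro t ht
      rw [interior_Icc] at ht
      exact ((chi_hasDeriv t ht.1.le (lt_of_lt_of_le ht.2 hx1.le) hs0 hs1)).differentiableAt.differentiableWithinAt
    · intro t ht
      rw [interior_Icc] at ht
      obtain ⟨ht0, htx⟩ := ht
      have ht1 : t < 1 := lt_of_lt_of_le htx hx1.le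
      rw [(chi_hasDeriv t ht0.le ht1 hs0 hs1).deriv]
      have h1 : (0:ℝ) < 1 + t := by linarith
      have h2 : (0:ℝ) < 1 - t := by linarith
      have hst : s * t < 1 := by nlinarith
      have h3 : (0:ℝ) < 1 + s * t := by nlinarith
      have h4 : (0:ℝ) < 1 - s * t := by linarith
      rw [sub_sub, sub_nonneg, div_add_div _ _ h3.ne' h4.ne', div_add_div _ _ h1.ne' h2.ne',
        div_le_div_iff₀ (by positivity) (by positivity)]
      nlinarith [mul_nonneg (mul_nonneg hs0 (sub_nonneg.2 hs1)) (sq_nonneg t),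
        mul_nonneg (mul_nonneg (mul_nonneg hs0 hs0) (sub_nonneg.2 hs1)) (sq_nonneg t)]
  have h0x : χ 0 ≤ χ x := by
    apply hmono (Set.left_mem_Icc.2 hx0) (Set.right_mem_Icc.2 hx0) hx0
  have hχ0 : χ 0 = 0 := by simp [hχ]
  rw [hχ0] at h0x
  -- now exponentiate
  have h1 : (0:ℝ) < 1 + x := by linarith
  have h2 : (0:ℝ) < 1 - x := by linarith
  have hst : s * x < 1 := by nlinarith
  have h3 : (0:ℝ) < 1 + s * x := by nlinarith
  have h4 : (0:ℝ) < 1 - s * x := by linarith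
  have key : Real.log ((1 - x) ^ s * (1 + s * x)) ≤ Real.log ((1 + x) ^ s * (1 - s * x)) := by
    rw [Real.log_mul (by positivity) h3.ne', Real.log_mul (by positivity) h4.ne',
      Real.log_rpow h2, Real.log_rpow h1]
    simp only [hχ] at h0x
    linarith
  have := Real.exp_le_exp.2 key
  rwa [Real.exp_log (by positivity), Real.exp_log (by positivity)] at this

-- derivative of ψ(x) = (p/2) log(1 - (1-p)x²) - log(((1+x)^p + (1-x)^p)/2)
lemma psi_hasDeriv {p : ℝ} (hp0 : 0 < p) (hp1 : p ≤ 1) (t : ℝ) (ht0 : 0 < t) (ht1 : t < 1) :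
    HasDerivAt (fun u => p / 2 * Real.log (1 - (1 - p) * u ^ 2)
      - Real.log (((1 + u) ^ p + (1 - u) ^ p) / 2))
      (p / 2 * ((-(2 * ((1 - p) * t))) / (1 - (1 - p) * t ^ 2))
        - ((p * (1 + t) ^ (p - 1) - p * (1 - t) ^ (p - 1)) / 2) / (((1 + t) ^ p + (1 - t) ^ p) / 2)) t := by
  have h1 : (0:ℝ) < 1 + t := by linarith
  have h2 : (0:ℝ) < 1 - t := by linarith
  have h3 : (0:ℝ) < 1 - (1 - p) * t ^ 2 := by nlinarith
  have dA : HasDerivAt (fun u : ℝ => (1 + u) ^ p) (p * (1 + t) ^ (p - 1)) t := by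
    have hb : HasDerivAt (fun u : ℝ => 1 + u) 1 t := (hasDerivAt_id t).const_add 1
    have := hb.rpow_const (p := p) (Or.inl h1.ne')
    simpa using this
  have dB : HasDerivAt (fun u : ℝ => (1 - u) ^ p) (-(p * (1 - t) ^ (p - 1))) t := by
    have hb : HasDerivAt (fun u : ℝ => 1 - u) (-1) t := by
      simpa using (hasDerivAt_id t).const_sub 1
    have := hb.rpow_const (p := p) (Or.inl h2.ne')
    simpa using this
  have dQ : HasDerivAt (fun u : ℝ => 1 - (1 - p) * u ^ 2) (-(2 * ((1 - p) * t))) t := by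
    have : HasDerivAt (fun u : ℝ => (1 - p) * u ^ 2) ((1 - p) * (2 * t)) t := by
      simpa using ((hasDerivAt_pow 2 t).const_mul (1 - p))
    have := this.const_sub 1
    exact this.congr_deriv (by ring)
  have dlog1 : HasDerivAt (fun u : ℝ => Real.log (1 - (1 - p) * u ^ 2))
      ((-(2 * ((1 - p) * t))) / (1 - (1 - p) * t ^ 2)) t := dQ.log h3.ne'
  have hABpos : (0:ℝ) < (1 + t) ^ p + (1 - t) ^ p := by positivity
  have dS : HasDerivAt (fun u : ℝ => ((1 + u) ^ p + (1 - u) ^ p) / 2)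
      ((p * (1 + t) ^ (p - 1) - p * (1 - t) ^ (p - 1)) / 2) t := by
    simpa [sub_eq_add_neg] using (dA.add dB).div_const 2
  have dlog2 : HasDerivAt (fun u : ℝ => Real.log (((1 + u) ^ p + (1 - u) ^ p) / 2))
      (((p * (1 + t) ^ (p - 1) - p * (1 - t) ^ (p - 1)) / 2) / (((1 + t) ^ p + (1 - t) ^ p) / 2)) t :=
    dS.log (by positivity)
  exact (dlog1.const_mul (p / 2)).sub dlog2

lemma KL {p x : ℝ} (hp0 : 0 < p) (hp1 : p ≤ 1) (hx0 : 0 ≤ x) (hx1 : x ≤ 1) :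
    (1 + x) ^ p + (1 - x) ^ p ≤ 2 * (1 - (1 - p) * x ^ 2) ^ (p / 2) := by
  set ψ : ℝ → ℝ := fun u => p / 2 * Real.log (1 - (1 - p) * u ^ 2)
      - Real.log (((1 + u) ^ p + (1 - u) ^ p) / 2) with hψ
  have hcont : ContinuousOn ψ (Set.Icc 0 1) := by
    apply ContinuousOn.sub
    · apply ContinuousOn.mul continuousOn_const
      apply ContinuousOn.log
      · fun_prop
      · intro t ht
        obtain ⟨ht0, ht1⟩ := ht
        have h : t ^ 2 ≤ 1 := by nlinarith
        nlinarith
    · apply ContinuousOn.log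
      · apply ContinuousOn.div _ continuousOn_const (by norm_num)
        apply ContinuousOn.add
        · exact (continuousOn_const.add continuousOn_id).rpow_const
            (fun t ht => Or.inr hp0.le)
        · exact (continuousOn_const.sub continuousOn_id).rpow_const
            (fun t ht => Or.inr hp0.le)
      · intro t ht
        obtain ⟨ht0, ht1⟩ := ht
        have : (0:ℝ) < (1 + t) ^ p := Real.rpow_pos_of_pos (by linarith) p
        have : (0:ℝ) ≤ (1 - t) ^ p := Real.rpow_nonneg (by linarith) p
        positivity
  have hmono : MonotoneOn ψ (Set.Icc 0 1) := by
    apply monotoneOn_of_deriv_nonneg (convex_Icc 0 1) hcont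
    · intro t ht
      rw [interior_Icc] at ht
      exact (psi_hasDeriv hp0 hp1 t ht.1 ht.2).differentiableAt.differentiableWithinAt
    · intro t ht
      rw [interior_Icc] at ht
      obtain ⟨ht0, ht1⟩ := ht
      rw [(psi_hasDeriv hp0 hp1 t ht0 ht1).deriv]
      have h1 : (0:ℝ) < 1 + t := by linarith
      have h2 : (0:ℝ) < 1 - t := by linarith
      have h3 : (0:ℝ) < 1 - (1 - p) * t ^ 2 := by nlinarith
      set A := (1 + t) ^ p with hA
      set B := (1 - t) ^ p with hB
      have hApos : 0 < A := Real.rpow_pos_of_pos h1 p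
      have hBpos : 0 < B := Real.rpow_pos_of_pos h2 p
      have hA' : (1 + t) ^ (p - 1) = A / (1 + t) := by
        rw [hA, Real.rpow_sub h1, Real.rpow_one]
      have hB' : (1 - t) ^ (p - 1) = B / (1 - t) := by
        rw [hB, Real.rpow_sub h2, Real.rpow_one]
      rw [hA', hB']
      -- key: from L1, B*(1+t)*(1-(1-p)*t) ≥ A*(1-t)*(1+(1-p)*t)
      have hL1 : (1 - t) ^ (1 - p) * (1 + (1 - p) * t) ≤ (1 + t) ^ (1 - p) * (1 - (1 - p) * t) :=
        L1 (by linarith) (by linarith) ht0.le ht1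
      have hsplit1 : (1 + t) = A * (1 + t) ^ (1 - p) := by
        rw [hA, ← Real.rpow_add h1]; norm_num
      have hsplit2 : (1 - t) = B * (1 - t) ^ (1 - p) := by
        rw [hB, ← Real.rpow_add h2]; norm_num
      have key : A * (1 - t) * (1 + (1 - p) * t) ≤ B * (1 + t) * (1 - (1 - p) * t) := by
        calc A * (1 - t) * (1 + (1 - p) * t)
            = A * B * ((1 - t) ^ (1 - p) * (1 + (1 - p) * t)) := by
              conv_lhs => rw [hsplit2]
              ring
          _ ≤ A * B * ((1 + t) ^ (1 - p) * (1 - (1 - p) * t)) := by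
              apply mul_le_mul_of_nonneg_left hL1 (by positivity)
          _ = B * (1 + t) * (1 - (1 - p) * t) := by
              conv_rhs => rw [hsplit1]
              ring
      -- now show derivative nonneg
      have hval : p / 2 * ((-(2 * ((1 - p) * t))) / (1 - (1 - p) * t ^ 2))
          - ((p * (A / (1 + t)) - p * (B / (1 - t))) / 2) / ((A + B) / 2)
          = p * (B * (1 + t) * (1 - (1 - p) * t) - A * (1 - t) * (1 + (1 - p) * t))
            / ((1 + t) * (1 - t) * (A + B) * (1 - (1 - p) * t ^ 2)) := by
        field_simp
        ring
      rw [hval]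
      apply div_nonneg _ (by positivity)
      apply mul_nonneg hp0.le
      linarith [key]
  have h01 : ψ 0 ≤ ψ x := hmono (Set.left_mem_Icc.2 (by norm_num)) ⟨hx0, hx1⟩ hx0
  have hψ0 : ψ 0 = 0 := by simp [hψ]
  rw [hψ0] at h01
  have h1 : (0:ℝ) < 1 + x := by linarith
  have h3 : (0:ℝ) < 1 - (1 - p) * x ^ 2 := by
    have h : x ^ 2 ≤ 1 := by nlinarith
    nlinarith
  have hsum : (0:ℝ) < ((1 + x) ^ p + (1 - x) ^ p) / 2 := by
    have : (0:ℝ) < (1 + x) ^ p := Real.rpow_pos_of_pos h1 p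
    have h2 : (0:ℝ) ≤ (1 - x) ^ p := Real.rpow_nonneg (by linarith) p
    positivity
  simp only [hψ, sub_nonneg] at h01
  have := Real.exp_le_exp.2 h01
  rw [Real.exp_log hsum] at this
  have hrhs : Real.exp (p / 2 * Real.log (1 - (1 - p) * x ^ 2))
      = (1 - (1 - p) * x ^ 2) ^ (p / 2) := by
    rw [Real.rpow_def_of_pos h3]; ring_nf
  rw [hrhs] at this
  linarith

noncomputable def Mp (p a b : ℝ) : ℝ := ((a ^ p + b ^ p) / 2) ^ (1 / p)

lemma Mp_nonneg {p a b : ℝ} (ha : 0 ≤ a) (hb : 0 ≤ b) : 0 ≤ Mp p a b := by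
  have h1 := Real.rpow_nonneg ha p
  have h2 := Real.rpow_nonneg hb p
  exact Real.rpow_nonneg (by linarith) _

lemma Mp_comm (p a b : ℝ) : Mp p a b = Mp p b a := by unfold Mp; rw [add_comm]

lemma Msq' {p a b : ℝ} (hp0 : 0 < p) (hp1 : p ≤ 1) (hb : 0 ≤ b) (hab : b ≤ a) :
    Mp p a b ^ 2 ≤ ((a + b) / 2) ^ 2 - (1 - p) * ((a - b) / 2) ^ 2 := by
  have ha : 0 ≤ a := le_trans hb hab
  rcases eq_or_lt_of_le (by linarith : (0:ℝ) ≤ a + b) with h0 | hsum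
  · -- a = b = 0
    have ha0 : a = 0 := by linarith
    have hb0 : b = 0 := by linarith
    subst ha0; subst hb0
    have hMp0 : Mp p 0 0 = 0 := by
      unfold Mp
      rw [Real.zero_rpow hp0.ne']
      norm_num
      exact Real.zero_rpow (inv_ne_zero hp0.ne')
    rw [hMp0]
    norm_num
  · set u : ℝ := (a + b) / 2 with hu
    have hupos : 0 < u := by positivity
    set x : ℝ := (a - b) / (a + b) with hx
    have hx0 : 0 ≤ x := by
      apply div_nonneg (by linarith) (by linarith)
    have hx1 : x ≤ 1 := by
      rw [hx, div_le_one hsum]; linarith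
    have hax : a = u * (1 + x) := by
      rw [hu, hx]; field_simp; ring
    have hbx : b = u * (1 - x) := by
      rw [hu, hx]; field_simp; ring
    have h1x : (0:ℝ) ≤ 1 + x := by linarith
    have h2x : (0:ℝ) ≤ 1 - x := by linarith
    have hap : a ^ p = u ^ p * (1 + x) ^ p := by
      rw [hax, Real.mul_rpow hupos.le h1x]
    have hbp : b ^ p = u ^ p * (1 - x) ^ p := by
      rw [hbx, Real.mul_rpow hupos.le h2x]
    have hKL := KL hp0 hp1 hx0 hx1
    have hs : (0:ℝ) < 1 - (1 - p) * x ^ 2 := by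
      have hx2 : x ^ 2 ≤ 1 := by nlinarith
      nlinarith
    have hmean : (a ^ p + b ^ p) / 2 ≤ u ^ p * (1 - (1 - p) * x ^ 2) ^ (p / 2) := by
      rw [hap, hbp]
      have hup : 0 ≤ u ^ p := Real.rpow_nonneg hupos.le p
      calc (u ^ p * (1 + x) ^ p + u ^ p * (1 - x) ^ p) / 2
          = u ^ p * (((1 + x) ^ p + (1 - x) ^ p) / 2) := by ring
        _ ≤ u ^ p * ((1 - (1 - p) * x ^ 2) ^ (p / 2)) := by
            apply mul_le_mul_of_nonneg_left _ hup
            linarith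
    have hMle : Mp p a b ≤ u * (1 - (1 - p) * x ^ 2) ^ ((1:ℝ) / 2) := by
      unfold Mp
      calc ((a ^ p + b ^ p) / 2) ^ (1 / p)
          ≤ (u ^ p * (1 - (1 - p) * x ^ 2) ^ (p / 2)) ^ (1 / p) := by
            apply Real.rpow_le_rpow (by positivity) hmean (by positivity)
        _ = u * (1 - (1 - p) * x ^ 2) ^ ((1:ℝ) / 2) := by
            rw [Real.mul_rpow (Real.rpow_nonneg hupos.le p) (Real.rpow_nonneg hs.le _),
              ← Real.rpow_mul hupos.le, ← Real.rpow_mul hs.le,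
              mul_one_div, div_self hp0.ne', Real.rpow_one]
            congr 1
            rw [div_mul_div_comm, mul_one, mul_comm 2 p, ← div_div, div_self hp0.ne']
    have hsq : (u * (1 - (1 - p) * x ^ 2) ^ ((1:ℝ) / 2)) ^ 2
        = u ^ 2 * (1 - (1 - p) * x ^ 2) := by
      rw [mul_pow, ← Real.rpow_natCast ((1 - (1 - p) * x ^ 2) ^ ((1:ℝ)/2)) 2,
        ← Real.rpow_mul hs.le]
      norm_num
    have hMnn : 0 ≤ Mp p a b := Mp_nonneg ha hb
    have : Mp p a b ^ 2 ≤ u ^ 2 * (1 - (1 - p) * x ^ 2) := by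
      rw [← hsq]
      exact pow_le_pow_left₀ hMnn hMle 2
    have hux : u * x = (a - b) / 2 := by
      rw [hu, hx]; field_simp
    calc Mp p a b ^ 2 ≤ u ^ 2 * (1 - (1 - p) * x ^ 2) := this
      _ = u ^ 2 - (1 - p) * (u * x) ^ 2 := by ring
      _ = ((a + b) / 2) ^ 2 - (1 - p) * ((a - b) / 2) ^ 2 := by rw [hux, hu]

lemma Msq {p a b : ℝ} (hp0 : 0 < p) (hp1 : p ≤ 1) (ha : 0 ≤ a) (hb : 0 ≤ b) :
    Mp p a b ^ 2 ≤ ((a + b) / 2) ^ 2 - (1 - p) * ((a - b) / 2) ^ 2 := by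
  rcases le_total b a with h | h
  · exact Msq' hp0 hp1 hb h
  · have := Msq' hp0 hp1 ha h
    rw [Mp_comm] at this
    calc Mp p a b ^ 2 ≤ ((b + a) / 2) ^ 2 - (1 - p) * ((b - a) / 2) ^ 2 := this
      _ = ((a + b) / 2) ^ 2 - (1 - p) * ((a - b) / 2) ^ 2 := by ring

lemma amgm {σ τ X Y A C : ℝ} :
    (A ^ 2 - σ ^ 2 * X ^ 2) * (C ^ 2 - τ ^ 2 * Y ^ 2)
      ≤ (A * C - σ * τ * (X * Y)) ^ 2 := by
  nlinarith [sq_nonneg (σ * X * C - τ * Y * A)]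

lemma OD {p q ρ a b c d : ℝ} (hp0 : 0 < p) (hp1 : p ≤ 1) (hq0 : 0 < q) (hq1 : q ≤ 1)
    (hρ0 : 0 ≤ ρ) (hρpq : ρ ^ 2 ≤ (1 - p) * (1 - q))
    (ha : 0 ≤ a) (hb : 0 ≤ b) (hc : 0 ≤ c) (hd : 0 ≤ d) :
    4 * (Mp p a b * Mp q c d) ≤ (a + b) * (c + d) + ρ * ((a - b) * (c - d)) := by
  have hs0 : (0:ℝ) ≤ 1 - p := by linarith
  have ht0 : (0:ℝ) ≤ 1 - q := by linarith
  have hP2 : Mp p a b ^ 2 ≤ ((a + b) / 2) ^ 2 - (1 - p) * ((a - b) / 2) ^ 2 :=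
    Msq hp0 hp1 ha hb
  have hQ2 : Mp q c d ^ 2 ≤ ((c + d) / 2) ^ 2 - (1 - q) * ((c - d) / 2) ^ 2 :=
    Msq hq0 hq1 hc hd
  have hPnn : 0 ≤ Mp p a b := Mp_nonneg ha hb
  have hQnn : 0 ≤ Mp q c d := Mp_nonneg hc hd
  have hXA : |(a - b) / 2| ≤ (a + b) / 2 := by
    rw [abs_le]; constructor <;> · linarith
  have hYC : |(c - d) / 2| ≤ (c + d) / 2 := by
    rw [abs_le]; constructor <;> · linarith
  have hXnn := abs_nonneg ((a - b) / 2)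
  have hYnn := abs_nonneg ((c - d) / 2)
  have hρle : ρ ≤ Real.sqrt ((1 - p) * (1 - q)) := by
    have := Real.sqrt_le_sqrt hρpq
    rwa [Real.sqrt_sq hρ0] at this
  have hst1 : Real.sqrt ((1 - p) * (1 - q)) ≤ 1 := by
    have h := Real.sqrt_le_sqrt (show (1 - p) * (1 - q) ≤ 1 by nlinarith)
    rwa [Real.sqrt_one] at h
  have hstnn : 0 ≤ Real.sqrt ((1 - p) * (1 - q)) := Real.sqrt_nonneg _
  have hsplit : Real.sqrt ((1 - p) * (1 - q)) = Real.sqrt (1 - p) * Real.sqrt (1 - q) :=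
    Real.sqrt_mul hs0 _
  rw [hsplit] at hρle hst1 hstnn
  have hRnn : 0 ≤ (a + b) / 2 * ((c + d) / 2)
      - Real.sqrt (1 - p) * Real.sqrt (1 - q) * (|(a - b) / 2| * |(c - d) / 2|) := by
    have h1 : Real.sqrt (1 - p) * Real.sqrt (1 - q) * (|(a - b) / 2| * |(c - d) / 2|)
        ≤ 1 * (((a + b) / 2) * ((c + d) / 2)) := by
      apply mul_le_mul hst1 (mul_le_mul hXA hYC hYnn (by positivity)) (by positivity) (by norm_num)
    linarith
  have hPQR : Mp p a b * Mp q c d ≤ (a + b) / 2 * ((c + d) / 2)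
      - Real.sqrt (1 - p) * Real.sqrt (1 - q) * (|(a - b) / 2| * |(c - d) / 2|) := by
    have hsq2 : (Mp p a b * Mp q c d) ^ 2 ≤ ((a + b) / 2 * ((c + d) / 2)
        - Real.sqrt (1 - p) * Real.sqrt (1 - q) * (|(a - b) / 2| * |(c - d) / 2|)) ^ 2 := by
      have step1 : Mp p a b ^ 2 * Mp q c d ^ 2
          ≤ (((a + b) / 2) ^ 2 - (1 - p) * ((a - b) / 2) ^ 2)
            * (((c + d) / 2) ^ 2 - (1 - q) * ((c - d) / 2) ^ 2) :=
        mul_le_mul hP2 hQ2 (pow_nonneg hQnn 2) (le_trans (pow_nonneg hPnn 2) hP2)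
      have hsp : Real.sqrt (1 - p) ^ 2 = 1 - p := Real.sq_sqrt hs0
      have htq : Real.sqrt (1 - q) ^ 2 = 1 - q := Real.sq_sqrt ht0
      have step2 := amgm (σ := Real.sqrt (1 - p)) (τ := Real.sqrt (1 - q))
        (X := |(a - b) / 2|) (Y := |(c - d) / 2|) (A := (a + b) / 2) (C := (c + d) / 2)
      rw [hsp, htq, sq_abs, sq_abs] at step2
      calc (Mp p a b * Mp q c d) ^ 2 = Mp p a b ^ 2 * Mp q c d ^ 2 := by ring
        _ ≤ _ := le_trans step1 step2
    calc Mp p a b * Mp q c d = Real.sqrt ((Mp p a b * Mp q c d) ^ 2) := by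
          rw [Real.sqrt_sq (mul_nonneg hPnn hQnn)]
      _ ≤ Real.sqrt (((a + b) / 2 * ((c + d) / 2)
          - Real.sqrt (1 - p) * Real.sqrt (1 - q) * (|(a - b) / 2| * |(c - d) / 2|)) ^ 2) :=
          Real.sqrt_le_sqrt hsq2
      _ = _ := Real.sqrt_sq hRnn
  have hfinal : (a + b) / 2 * ((c + d) / 2)
      - Real.sqrt (1 - p) * Real.sqrt (1 - q) * (|(a - b) / 2| * |(c - d) / 2|)
      ≤ (a + b) / 2 * ((c + d) / 2) + ρ * ((a - b) / 2 * ((c - d) / 2)) := by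
    have h1 : -(ρ * ((a - b) / 2 * ((c - d) / 2))) ≤ ρ * (|(a - b) / 2| * |(c - d) / 2|) := by
      calc -(ρ * ((a - b) / 2 * ((c - d) / 2)))
          ≤ |(-(ρ * ((a - b) / 2 * ((c - d) / 2))))| := le_abs_self _
        _ = ρ * (|(a - b) / 2| * |(c - d) / 2|) := by
            rw [abs_neg, abs_mul, abs_mul, abs_of_nonneg hρ0]
    have h2 : ρ * (|(a - b) / 2| * |(c - d) / 2|)
        ≤ Real.sqrt (1 - p) * Real.sqrt (1 - q) * (|(a - b) / 2| * |(c - d) / 2|) :=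
      mul_le_mul_of_nonneg_right hρle (by positivity)
    linarith
  have hmain := le_trans hPQR hfinal
  have hring : 4 * ((a + b) / 2 * ((c + d) / 2) + ρ * ((a - b) / 2 * ((c - d) / 2)))
      = (a + b) * (c + d) + ρ * ((a - b) * (c - d)) := by ring
  linarith



lemma corrWeight_nonneg {n : ℕ} {ρ : ℝ} (hρ0 : 0 ≤ ρ) (hρ1 : ρ ≤ 1) (x y : Fin n → Bool) :
    0 ≤ corrWeight ρ x y := by
  unfold corrWeight
  apply Finset.prod_nonneg
  intro i _
  unfold sgn
  rcases Bool.eq_false_or_eq_true (x i) with h | h <;> rcases Bool.eq_false_or_eq_true (y i) with h' | h' <;>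
    simp [h, h'] <;> linarith

lemma corrWeight_cons {n : ℕ} (ρ : ℝ) (a b : Bool) (x y : Fin n → Bool) :
    corrWeight ρ (Fin.cons a x) (Fin.cons b y)
      = (1 / 2 + (ρ / 2) * sgn a * sgn b) * corrWeight ρ x y := by
  unfold corrWeight
  rw [Fin.prod_univ_succ]
  simp [Fin.cons_zero, Fin.cons_succ]

lemma sum_cons {n : ℕ} (H : (Fin (n + 1) → Bool) → ℝ) :
    ∑ z, H z = ∑ a : Bool, ∑ x : Fin n → Bool, H (Fin.cons a x) := by
  calc ∑ z, H z = ∑ p : Bool × (Fin n → Bool), H (Fin.cons p.1 p.2) :=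
        (Fintype.sum_equiv (Fin.consEquiv (fun _ => Bool)) (fun p => H (Fin.cons p.1 p.2)) H
          (fun p => rfl)).symm
    _ = ∑ a : Bool, ∑ x : Fin n → Bool, H (Fin.cons a x) :=
        Fintype.sum_prod_type (f := fun p => H (Fin.cons p.1 p.2))

-- normalized p-norm
noncomputable def Np (n : ℕ) (p : ℝ) (f : (Fin n → Bool) → ℝ) : ℝ :=
  ((∑ x, f x ^ p) / 2 ^ n) ^ (1 / p)

lemma Np_nonneg {n : ℕ} {p : ℝ} {f : (Fin n → Bool) → ℝ} (hf : ∀ x, 0 ≤ f x) :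
    0 ≤ Np n p f := by
  apply Real.rpow_nonneg
  apply div_nonneg _ (by positivity)
  exact Finset.sum_nonneg fun x _ => Real.rpow_nonneg (hf x) p

lemma Np_rpow {n : ℕ} {p : ℝ} (hp : p ≠ 0) {f : (Fin n → Bool) → ℝ} (hf : ∀ x, 0 ≤ f x) :
    Np n p f ^ p = (∑ x, f x ^ p) / 2 ^ n := by
  unfold Np
  have hs : 0 ≤ ∑ x, f x ^ p := Finset.sum_nonneg fun x _ => Real.rpow_nonneg (hf x) p
  rw [← Real.rpow_mul (div_nonneg hs (by positivity)), one_div, inv_mul_cancel₀ hp,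
    Real.rpow_one]

theorem tensor (ρ p q : ℝ) (hρ0 : 0 ≤ ρ) (hρ1 : ρ ≤ 1) (hp0 : 0 < p) (hp1 : p ≤ 1)
    (hq0 : 0 < q) (hq1 : q ≤ 1) (hρpq : ρ ^ 2 ≤ (1 - p) * (1 - q)) :
    ∀ n (f g : (Fin n → Bool) → ℝ), (∀ x, 0 ≤ f x) → (∀ x, 0 ≤ g x) →
    2 ^ n * (Np n p f * Np n q g) ≤ ∑ x, ∑ y, f x * g y * corrWeight ρ x y := by
  intro n
  induction n with
  | zero =>
    intro f g hf hg
    have hcw : ∀ x y : Fin 0 → Bool, corrWeight ρ x y = 1 := by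
      intro x y; unfold corrWeight; simp
    have hNf : Np 0 p f = f default := by
      unfold Np
      simp only [pow_zero, div_one]
      rw [Finset.sum_eq_single_of_mem default (Finset.mem_univ _)
        (fun b _ hb => absurd (Subsingleton.elim b default) hb)]
      rw [← Real.rpow_mul (hf default), mul_one_div, div_self hp0.ne', Real.rpow_one]
    have hNg : Np 0 q g = g default := by
      unfold Np
      simp only [pow_zero, div_one]
      rw [Finset.sum_eq_single_of_mem default (Finset.mem_univ _)
        (fun b _ hb => absurd (Subsingleton.elim b default) hb)]
      rw [← Real.rpow_mul (hg default), mul_one_div, div_self hq0.ne', Real.rpow_one]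
    rw [hNf, hNg]
    have hval : ∀ x y : Fin 0 → Bool, f x * g y * corrWeight ρ x y = f default * g default := by
      intro x y
      rw [hcw, Subsingleton.elim x default, Subsingleton.elim y default, mul_one]
    have hrhs : ∑ x : Fin 0 → Bool, ∑ y : Fin 0 → Bool, f x * g y * corrWeight ρ x y
        = f default * g default := by
      rw [Finset.sum_eq_single_of_mem default (Finset.mem_univ _)
        (fun b _ hb => absurd (Subsingleton.elim b default) hb),
        Finset.sum_eq_single_of_mem default (Finset.mem_univ _)
        (fun b _ hb => absurd (Subsingleton.elim b default) hb), hval]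
    rw [hrhs, pow_zero, one_mul]
  | succ n ih =>
    intro f g hf hg
    -- restricted functions
    set F : Bool → ℝ := fun a => Np n p (fun x => f (Fin.cons a x)) with hF
    set G : Bool → ℝ := fun b => Np n q (fun y => g (Fin.cons b y)) with hG
    have hFnn : ∀ a, 0 ≤ F a := fun a => Np_nonneg (fun x => hf _)
    have hGnn : ∀ b, 0 ≤ G b := fun b => Np_nonneg (fun y => hg _)
    -- the double sum decomposes
    have step1 : ∀ (a : Bool) (x : Fin n → Bool),
        ∑ y : Fin (n + 1) → Bool, f (Fin.cons a x) * g y * corrWeight ρ (Fin.cons a x) y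
        = ∑ b : Bool, ∑ y : Fin n → Bool, f (Fin.cons a x) * g (Fin.cons b y)
            * ((1 / 2 + (ρ / 2) * sgn a * sgn b) * corrWeight ρ x y) := by
      intro a x
      rw [sum_cons (fun y => f (Fin.cons a x) * g y * corrWeight ρ (Fin.cons a x) y)]
      apply Finset.sum_congr rfl
      intro b _
      apply Finset.sum_congr rfl
      intro y _
      rw [corrWeight_cons]
    have hsum : ∑ x, ∑ y, f x * g y * corrWeight ρ x y
        = ∑ a : Bool, ∑ b : Bool, (1 / 2 + (ρ / 2) * sgn a * sgn b)
            * ∑ x : Fin n → Bool, ∑ y : Fin n → Bool,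
              f (Fin.cons a x) * g (Fin.cons b y) * corrWeight ρ x y := by
      rw [sum_cons (fun x => ∑ y, f x * g y * corrWeight ρ x y)]
      apply Finset.sum_congr rfl
      intro a _
      calc ∑ x : Fin n → Bool, ∑ y : Fin (n + 1) → Bool,
              f (Fin.cons a x) * g y * corrWeight ρ (Fin.cons a x) y
          = ∑ x : Fin n → Bool, ∑ b : Bool, ∑ y : Fin n → Bool,
              f (Fin.cons a x) * g (Fin.cons b y)
                * ((1 / 2 + (ρ / 2) * sgn a * sgn b) * corrWeight ρ x y) :=
            Finset.sum_congr rfl (fun x _ => step1 a x)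
        _ = ∑ b : Bool, ∑ x : Fin n → Bool, ∑ y : Fin n → Bool,
              f (Fin.cons a x) * g (Fin.cons b y)
                * ((1 / 2 + (ρ / 2) * sgn a * sgn b) * corrWeight ρ x y) := Finset.sum_comm
        _ = ∑ b : Bool, (1 / 2 + (ρ / 2) * sgn a * sgn b)
              * ∑ x : Fin n → Bool, ∑ y : Fin n → Bool,
                f (Fin.cons a x) * g (Fin.cons b y) * corrWeight ρ x y := by
            apply Finset.sum_congr rfl
            intro b _
            rw [Finset.mul_sum]
            apply Finset.sum_congr rfl
            intro x _
            rw [Finset.mul_sum]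
            apply Finset.sum_congr rfl
            intro y _
            ring
    -- apply induction hypothesis
    have hw : ∀ a b : Bool, 0 ≤ 1 / 2 + (ρ / 2) * sgn a * sgn b := by
      intro a b
      unfold sgn
      rcases Bool.eq_false_or_eq_true a with h | h <;>
        rcases Bool.eq_false_or_eq_true b with h' | h' <;> simp [h, h'] <;> linarith
    have hIH : ∀ a b : Bool,
        (1 / 2 + (ρ / 2) * sgn a * sgn b) * (2 ^ n * (F a * G b))
          ≤ (1 / 2 + (ρ / 2) * sgn a * sgn b)
            * ∑ x : Fin n → Bool, ∑ y : Fin n → Bool,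
              f (Fin.cons a x) * g (Fin.cons b y) * corrWeight ρ x y := by
      intro a b
      exact mul_le_mul_of_nonneg_left
        (ih (fun x => f (Fin.cons a x)) (fun y => g (Fin.cons b y))
          (fun x => hf _) (fun y => hg _)) (hw a b)
    have hstep2 : ∑ a : Bool, ∑ b : Bool,
        (1 / 2 + (ρ / 2) * sgn a * sgn b) * (2 ^ n * (F a * G b))
        ≤ ∑ x, ∑ y, f x * g y * corrWeight ρ x y := by
      rw [hsum]
      apply Finset.sum_le_sum
      intro a _
      apply Finset.sum_le_sum
      intro b _
      exact hIH a b
    -- evaluate the Bool sums and apply OD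
    have hbool : ∑ a : Bool, ∑ b : Bool,
        (1 / 2 + (ρ / 2) * sgn a * sgn b) * (2 ^ n * (F a * G b))
        = 2 ^ n * (1 / 2) * ((F true + F false) * (G true + G false)
            + ρ * ((F true - F false) * (G true - G false))) := by
      simp [Fintype.sum_bool, sgn]
      ring
    have hOD := OD hp0 hp1 hq0 hq1 hρ0 hρpq (hFnn true) (hFnn false) (hGnn true) (hGnn false)
    -- identify Mp of F with Np (n+1) of f
    have hMpF : Mp p (F true) (F false) = Np (n + 1) p f := by
      unfold Mp
      have h1 : F true ^ p = (∑ x, f (Fin.cons true x) ^ p) / 2 ^ n :=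
        Np_rpow hp0.ne' (fun x => hf _)
      have h2 : F false ^ p = (∑ x, f (Fin.cons false x) ^ p) / 2 ^ n :=
        Np_rpow hp0.ne' (fun x => hf _)
      rw [h1, h2]
      unfold Np
      congr 1
      rw [sum_cons (fun z => f z ^ p), Fintype.sum_bool, pow_succ]
      ring
    have hMpG : Mp q (G true) (G false) = Np (n + 1) q g := by
      unfold Mp
      have h1 : G true ^ q = (∑ y, g (Fin.cons true y) ^ q) / 2 ^ n :=
        Np_rpow hq0.ne' (fun y => hg _)
      have h2 : G false ^ q = (∑ y, g (Fin.cons false y) ^ q) / 2 ^ n :=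
        Np_rpow hq0.ne' (fun y => hg _)
      rw [h1, h2]
      unfold Np
      congr 1
      rw [sum_cons (fun z => g z ^ q), Fintype.sum_bool, pow_succ]
      ring
    have hfinal : 2 ^ (n + 1) * (Np (n + 1) p f * Np (n + 1) q g)
        ≤ ∑ a : Bool, ∑ b : Bool, (1 / 2 + (ρ / 2) * sgn a * sgn b) * (2 ^ n * (F a * G b)) := by
      rw [hbool, ← hMpF, ← hMpG]
      have h2n : (0:ℝ) ≤ 2 ^ n := by positivity
      calc (2:ℝ) ^ (n + 1) * (Mp p (F true) (F false) * Mp q (G true) (G false))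
          = 2 ^ n * (1 / 2) * (4 * (Mp p (F true) (F false) * Mp q (G true) (G false))) := by
            rw [pow_succ]; ring
        _ ≤ 2 ^ n * (1 / 2) * ((F true + F false) * (G true + G false)
              + ρ * ((F true - F false) * (G true - G false))) := by
            apply mul_le_mul_of_nonneg_left hOD (by positivity)
    exact le_trans hfinal hstep2


lemma corrWeight_sum_one {n : ℕ} (ρ : ℝ) : ∀ x : Fin n → Bool, ∑ y, corrWeight ρ x y = 1 := by
  induction n with
  | zero =>
    intro x
    rw [Finset.sum_eq_single_of_mem default (Finset.mem_univ _)
      (fun b _ hb => absurd (Subsingleton.elim b default) hb)]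
    unfold corrWeight; simp
  | succ n ih =>
    intro x
    rw [sum_cons (fun y => corrWeight ρ x y)]
    have hx : x = Fin.cons (x 0) (Fin.tail x) := (Fin.cons_self_tail x).symm
    have : ∀ (b : Bool) (y : Fin n → Bool), corrWeight ρ x (Fin.cons b y)
        = (1 / 2 + (ρ / 2) * sgn (x 0) * sgn b) * corrWeight ρ (Fin.tail x) y := by
      intro b y
      conv_lhs => rw [hx]
      rw [corrWeight_cons]
    calc ∑ b : Bool, ∑ y : Fin n → Bool, corrWeight ρ x (Fin.cons b y)
        = ∑ b : Bool, ∑ y : Fin n → Bool,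
            (1 / 2 + (ρ / 2) * sgn (x 0) * sgn b) * corrWeight ρ (Fin.tail x) y :=
          Finset.sum_congr rfl fun b _ => Finset.sum_congr rfl fun y _ => this b y
      _ = ∑ b : Bool, (1 / 2 + (ρ / 2) * sgn (x 0) * sgn b)
            * ∑ y : Fin n → Bool, corrWeight ρ (Fin.tail x) y := by
          apply Finset.sum_congr rfl
          intro b _
          rw [Finset.mul_sum]
      _ = ∑ b : Bool, (1 / 2 + (ρ / 2) * sgn (x 0) * sgn b) := by
          apply Finset.sum_congr rfl
          intro b _
          rw [ih (Fin.tail x), mul_one]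
      _ = 1 := by
          rw [Fintype.sum_bool]
          unfold sgn
          rcases Bool.eq_false_or_eq_true (x 0) with h | h <;> simp [h] <;> ring

lemma indicator_Np {n : ℕ} (S : Finset (Fin n → Bool)) {p : ℝ} (hp0 : 0 < p) :
    Np n p (fun x => if x ∈ S then (1:ℝ) else 0) = ((S.card : ℝ) / 2 ^ n) ^ (1 / p) := by
  unfold Np
  congr 2
  have h : ∀ x : Fin n → Bool, ((if x ∈ S then (1:ℝ) else 0) ^ p) = if x ∈ S then 1 else 0 := by
    intro x
    split
    · exact Real.one_rpow p
    · exact Real.zero_rpow hp0.ne'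
  rw [Finset.sum_congr rfl (fun x _ => h x), Finset.sum_ite_mem, Finset.univ_inter,
    Finset.sum_const, nsmul_eq_mul, mul_one]

lemma indicator_J {n : ℕ} (ρ : ℝ) (S T : Finset (Fin n → Bool)) :
    ∑ x, ∑ y, (if x ∈ S then (1:ℝ) else 0) * (if y ∈ T then (1:ℝ) else 0) * corrWeight ρ x y
      = ∑ a ∈ S, ∑ b ∈ T, corrWeight ρ a b := by
  have h : ∀ x : Fin n → Bool,
      ∑ y, (if x ∈ S then (1:ℝ) else 0) * (if y ∈ T then (1:ℝ) else 0) * corrWeight ρ x y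
      = if x ∈ S then (∑ b ∈ T, corrWeight ρ x b) else 0 := by
    intro x
    by_cases hxS : x ∈ S
    · simp only [hxS, if_true]
      have : ∀ y : Fin n → Bool,
          ((1:ℝ) * if y ∈ T then (1:ℝ) else 0) * corrWeight ρ x y
          = if y ∈ T then corrWeight ρ x y else 0 := by
        intro y
        split <;> simp
      rw [Finset.sum_congr rfl (fun y _ => this y), Finset.sum_ite_mem, Finset.univ_inter]
    · simp [hxS]
  rw [Finset.sum_congr rfl (fun x _ => h x), Finset.sum_ite_mem, Finset.univ_inter]

/-- **Conditional form of the isoperimetric inequality.** Let `ρ ∈ [0,1)`,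
`S ⊆ {-1,1}^n` of fractional size `σ ∈ (0,1]` and `T ⊆ {-1,1}^n` of fractional size
`σ^α` with `α ≥ 0`. If `x` is uniform on `S` and `y` is a `ρ`-correlated copy of `x`,
then `Pr[y ∈ T] ≥ σ^{(√α + ρ)²/(1-ρ²)}`; in particular if `|S| = |T|` then
`Pr[y ∈ T] ≥ σ^{(1+ρ)/(1-ρ)}`. Here
`Pr[y ∈ T] = (1/|S|) Σ_{a ∈ S} Σ_{b ∈ T} ∏ᵢ (1/2 + (ρ/2) aᵢ bᵢ)`. -/
theorem cube_isoperimetric_conditional {n : ℕ} (ρ : ℝ) (hρ0 : 0 ≤ ρ) (hρ1 : ρ < 1)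
    (S T : Finset (Fin n → Bool)) (σ α : ℝ) (hσ0 : 0 < σ) (hσ1 : σ ≤ 1) (hα : 0 ≤ α)
    (hScard : (S.card : ℝ) = σ * 2 ^ n)
    (hTcard : (T.card : ℝ) = σ ^ α * 2 ^ n) :
    σ ^ ((Real.sqrt α + ρ) ^ 2 / (1 - ρ ^ 2)) ≤
        (∑ a ∈ S, ∑ b ∈ T, corrWeight ρ a b) / S.card ∧
      (S.card = T.card →
        σ ^ ((1 + ρ) / (1 - ρ)) ≤ (∑ a ∈ S, ∑ b ∈ T, corrWeight ρ a b) / S.card) := by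
  have h2n : (0:ℝ) < 2 ^ n := by positivity
  have hρ2 : (0:ℝ) < 1 - ρ ^ 2 := by nlinarith
  have hcardS_pos : (0:ℝ) < (S.card : ℝ) := by rw [hScard]; positivity
  have main : σ ^ ((Real.sqrt α + ρ) ^ 2 / (1 - ρ ^ 2)) ≤
      (∑ a ∈ S, ∑ b ∈ T, corrWeight ρ a b) / S.card := by
    rcases eq_or_lt_of_le hα with hα0 | hαpos
    · -- α = 0 : T = univ and the probability is 1
      have hα0 : α = 0 := hα0.symm
      subst hα0
      have hTuniv : T = Finset.univ := by
        apply Finset.eq_univ_of_card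
        have hcard : Fintype.card (Fin n → Bool) = 2 ^ n := by
          rw [Fintype.card_fun]
          simp
        rw [hcard]
        have : (T.card : ℝ) = ((2 ^ n : ℕ) : ℝ) := by
          rw [hTcard, Real.rpow_zero, one_mul]
          push_cast
          ring
        exact_mod_cast this
      have hJ : ∑ a ∈ S, ∑ b ∈ T, corrWeight ρ a b = (S.card : ℝ) := by
        rw [hTuniv, Finset.sum_congr rfl (fun a _ => corrWeight_sum_one ρ a),
          Finset.sum_const, nsmul_eq_mul, mul_one]
      rw [hJ, div_self hcardS_pos.ne']
      apply Real.rpow_le_one hσ0.le hσ1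
      positivity
    · -- α > 0
      set r := Real.sqrt α with hr
      have hrpos : 0 < r := Real.sqrt_pos.2 hαpos
      have hr2 : r ^ 2 = α := Real.sq_sqrt hα
      have hden1 : (0:ℝ) < 1 + ρ * r := by positivity
      have hden2 : (0:ℝ) < r + ρ := by positivity
      set p := (1 - ρ ^ 2) / (1 + ρ * r) with hp
      set q := r * (1 - ρ ^ 2) / (r + ρ) with hq
      have hp0 : 0 < p := by rw [hp]; positivity
      have hp1 : p ≤ 1 := by
        rw [hp, div_le_one hden1]
        nlinarith [mul_nonneg hρ0 hrpos.le]
      have hq0 : 0 < q := by rw [hq]; positivity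
      have hq1 : q ≤ 1 := by
        rw [hq, div_le_one hden2]
        nlinarith [mul_nonneg (mul_nonneg hρ0 hρ0) hrpos.le]
      have hρpq : ρ ^ 2 ≤ (1 - p) * (1 - q) := by
        have heq : (1 - p) * (1 - q) = ρ ^ 2 := by
          rw [hp, hq]
          field_simp
          ring
        linarith
      have htensor := tensor ρ p q hρ0 hρ1.le hp0 hp1 hq0 hq1 hρpq n
        (fun x => if x ∈ S then 1 else 0) (fun y => if y ∈ T then 1 else 0)
        (fun x => by positivity) (fun y => by positivity)
      rw [indicator_Np S hp0, indicator_Np T hq0, indicator_J] at htensor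
      have hSfrac : (S.card : ℝ) / 2 ^ n = σ := by
        rw [hScard]; field_simp
      have hTfrac : (T.card : ℝ) / 2 ^ n = σ ^ α := by
        rw [hTcard]; field_simp
      rw [hSfrac, hTfrac] at htensor
      rw [le_div_iff₀ hcardS_pos]
      have hexp : (r + ρ) ^ 2 / (1 - ρ ^ 2) + 1 = 1 / p + α / q := by
        rw [hp, hq, ← hr2]
        field_simp
        ring
      calc σ ^ ((r + ρ) ^ 2 / (1 - ρ ^ 2)) * (S.card : ℝ)
          = σ ^ ((r + ρ) ^ 2 / (1 - ρ ^ 2)) * σ ^ (1:ℝ) * 2 ^ n := by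
            rw [hScard, Real.rpow_one]; ring
        _ = σ ^ ((r + ρ) ^ 2 / (1 - ρ ^ 2) + 1) * 2 ^ n := by
            rw [Real.rpow_add hσ0]
        _ = σ ^ (1 / p + α / q) * 2 ^ n := by rw [hexp]
        _ = σ ^ (1 / p) * (σ ^ α) ^ (1 / q) * 2 ^ n := by
            rw [Real.rpow_add hσ0]
            congr 1
            rw [div_eq_mul_one_div α q, Real.rpow_mul hσ0.le]
        _ = 2 ^ n * (σ ^ (1 / p) * (σ ^ α) ^ (1 / q)) := by ring
        _ ≤ ∑ a ∈ S, ∑ b ∈ T, corrWeight ρ a b := htensor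
  refine ⟨main, fun hST => ?_⟩
  rcases eq_or_lt_of_le hσ1 with hσeq | hσlt
  · subst hσeq
    rw [Real.one_rpow] at main ⊢
    exact main
  · have hσα : σ ^ α = σ := by
      have h1 : σ * 2 ^ n = σ ^ α * 2 ^ n := by
        rw [← hScard, hST, hTcard]
      have := mul_right_cancel₀ h2n.ne' h1
      linarith
    have hα1 : α = 1 := by
      by_contra hne
      rcases lt_or_gt_of_ne hne with h | h
      · have hlt := Real.rpow_lt_rpow_of_exponent_gt hσ0 hσlt h
        rw [Real.rpow_one] at hlt
        linarith
      · have hlt := Real.rpow_lt_rpow_of_exponent_gt hσ0 hσlt h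
        rw [Real.rpow_one] at hlt
        linarith
    subst hα1
    have hexp2 : (Real.sqrt 1 + ρ) ^ 2 / (1 - ρ ^ 2) = (1 + ρ) / (1 - ρ) := by
      rw [Real.sqrt_one, div_eq_div_iff hρ2.ne' (by linarith : (1:ℝ) - ρ ≠ 0)]
      ring
    rw [← hexp2]
    exact main
end
end

section
/- Gaussian tail bound for the bivariate normal with correlation -ρ. Let ρ ∈ (0,1) and s, t > 0. Then ∫_s^∞ ∫_t^∞ (2π)^{-1}·(1-ρ²)^{-1/2}·exp( -(x² + 2ρxy + y²) / (2(1-ρ²)) ) dy dx ≤ ( √(1-ρ²) / (2π·s·(ρs + t)) ) · exp( -(s² + 2ρst + t²) / (2(1-ρ²)) ). -/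
open Real MeasureTheory Set Filter

lemma exp_shift_eq (a c x : ℝ) :
    Real.exp (-(a * (x - c))) = Real.exp (a * c) * Real.exp (-a * x) := by
  rw [← Real.exp_add]; ring_nf

lemma exp_shift_integrableOn (a c : ℝ) (ha : 0 < a) :
    IntegrableOn (fun x : ℝ => Real.exp (-(a * (x - c)))) (Ioi c) := by
  simp only [exp_shift_eq]
  exact (exp_neg_integrableOn_Ioi c ha).const_mul (Real.exp (a * c))

lemma exp_shift_integral (a c : ℝ) (ha : 0 < a) :
    ∫ x in Ioi c, Real.exp (-(a * (x - c))) = 1 / a := by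
  have hderiv : ∀ x ∈ Ici c, HasDerivAt (fun x => -Real.exp (-(a * (x - c))) / a)
      (Real.exp (-(a * (x - c)))) x := by
    intro x _
    have : HasDerivAt (fun x : ℝ => -(a * (x - c))) (-a) x := by
      exact (by simpa using (((hasDerivAt_id x).sub_const c).const_mul a).neg :
        HasDerivAt (-fun y => a * (y - c)) (-a) x)
    have := (this.exp.neg.div_const a)
    simpa [ha.ne'] using this
  have h1 : Tendsto (fun x : ℝ => Real.exp (-a * x)) atTop (nhds 0) :=
    tendsto_exp_atBot.comp (tendsto_id.const_mul_atTop_of_neg (neg_neg_iff_pos.2 ha))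
  have htend : Tendsto (fun x => -Real.exp (-(a * (x - c))) / a) atTop (nhds 0) := by
    have h2 := ((h1.const_mul (Real.exp (a * c))).neg.div_const a)
    simp only [exp_shift_eq a c]
    simpa using h2
  have := MeasureTheory.integral_Ioi_of_hasDerivAt_of_tendsto' hderiv
    (exp_shift_integrableOn a c ha) htend
  rw [this]; field_simp; simp

/-- **Gaussian tail bound for the bivariate normal with correlation `-ρ`.**
For `ρ ∈ (0,1)` and `s, t > 0`,
`∫_s^∞ ∫_t^∞ (2π)^{-1} (1-ρ²)^{-1/2} exp(-(x² + 2ρxy + y²)/(2(1-ρ²))) dy dx`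
is at most `(√(1-ρ²)/(2π s (ρs + t))) exp(-(s² + 2ρst + t²)/(2(1-ρ²)))`. -/
theorem bivariate_gaussian_tail_bound (ρ s t : ℝ) (hρ0 : 0 < ρ) (hρ1 : ρ < 1)
    (hs : 0 < s) (ht : 0 < t) :
    (∫ x in Set.Ici s, ∫ y in Set.Ici t,
        (2 * Real.pi)⁻¹ * (Real.sqrt (1 - ρ ^ 2))⁻¹ *
          Real.exp (-(x ^ 2 + 2 * ρ * x * y + y ^ 2) / (2 * (1 - ρ ^ 2)))) ≤
      (Real.sqrt (1 - ρ ^ 2) / (2 * Real.pi * s * (ρ * s + t))) *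
        Real.exp (-(s ^ 2 + 2 * ρ * s * t + t ^ 2) / (2 * (1 - ρ ^ 2))) := by
  set σ2 : ℝ := 1 - ρ ^ 2 with hσ2def
  have hσ2 : 0 < σ2 := by nlinarith
  have hσ2le : σ2 ≤ 1 := by nlinarith
  set r : ℝ := Real.sqrt σ2 with hrdef
  have hr : r ^ 2 = σ2 := Real.sq_sqrt hσ2.le
  have hrpos : 0 < r := Real.sqrt_pos.2 hσ2
  have hπ : 0 < Real.pi := Real.pi_pos
  set a : ℝ := s / σ2 with hadef
  set b : ℝ := (ρ * s + t) / σ2 with hbdef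
  have hρst : 0 < ρ * s + t := by positivity
  have ha : 0 < a := by positivity
  have hb : 0 < b := by positivity
  set E : ℝ := Real.exp (-(s ^ 2 + 2 * ρ * s * t + t ^ 2) / (2 * σ2)) with hEdef
  have hEpos : 0 < E := Real.exp_pos _
  have h2σ : (0:ℝ) < 2 * σ2 := by positivity
  -- pointwise exponent bound
  have hexp : ∀ x ∈ Ici s, ∀ y ∈ Ici t,
      Real.exp (-(x ^ 2 + 2 * ρ * x * y + y ^ 2) / (2 * σ2)) ≤
        E * (Real.exp (-(a * (x - s))) * Real.exp (-(b * (y - t)))) := by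
    intro x hx y hy
    simp only [mem_Ici] at hx hy
    rw [hEdef, ← Real.exp_add, ← Real.exp_add]
    apply Real.exp_le_exp.2
    have hQ : -(x ^ 2 + 2 * ρ * x * y + y ^ 2) ≤
        -(s ^ 2 + 2 * ρ * s * t + t ^ 2) - 2 * s * (x - s) - 2 * (ρ * s + t) * (y - t) := by
      nlinarith [sq_nonneg (x - s + (y - t)), mul_nonneg (mul_nonneg hρ0.le ht.le) (sub_nonneg.2 hx),
        mul_nonneg (sub_nonneg.2 hx) (sub_nonneg.2 hy), sq_nonneg (x - s), sq_nonneg (y - t)]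
    have heq : (-(s ^ 2 + 2 * ρ * s * t + t ^ 2) - 2 * s * (x - s) - 2 * (ρ * s + t) * (y - t))
        / (2 * σ2) = -(s ^ 2 + 2 * ρ * s * t + t ^ 2) / (2 * σ2)
          + -(a * (x - s)) + -(b * (y - t)) := by
      rw [hadef, hbdef]; field_simp; ring
    calc -(x ^ 2 + 2 * ρ * x * y + y ^ 2) / (2 * σ2)
        ≤ (-(s ^ 2 + 2 * ρ * s * t + t ^ 2) - 2 * s * (x - s) - 2 * (ρ * s + t) * (y - t))
          / (2 * σ2) := by apply div_le_div_of_nonneg_right hQ h2σ.le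
      _ = _ := by rw [heq]; ring
  -- inner integral bound
  have hinner : ∀ x ∈ Ici s,
      (∫ y in Ici t, (2 * Real.pi)⁻¹ * r⁻¹ *
          Real.exp (-(x ^ 2 + 2 * ρ * x * y + y ^ 2) / (2 * σ2))) ≤
        (2 * Real.pi)⁻¹ * r⁻¹ * E * Real.exp (-(a * (x - s))) * (1 / b) := by
    intro x hx
    have hgint : IntegrableOn
        (fun y => (2 * Real.pi)⁻¹ * r⁻¹ * E * Real.exp (-(a * (x - s))) *
          Real.exp (-(b * (y - t)))) (Ici t) := by
      rw [integrableOn_Ici_iff_integrableOn_Ioi]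
      exact (exp_shift_integrableOn b t hb).const_mul _
    have hmono : (∫ y in Ici t, (2 * Real.pi)⁻¹ * r⁻¹ *
          Real.exp (-(x ^ 2 + 2 * ρ * x * y + y ^ 2) / (2 * σ2))) ≤
        ∫ y in Ici t, (2 * Real.pi)⁻¹ * r⁻¹ * E * Real.exp (-(a * (x - s))) *
          Real.exp (-(b * (y - t))) := by
      apply integral_mono_of_nonneg
      · exact ae_of_all _ fun y => by positivity
      · exact hgint
      · refine (ae_restrict_iff' measurableSet_Ici).2 (ae_of_all _ fun y hy => ?_)
        have := hexp x hx y hy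
        calc (2 * Real.pi)⁻¹ * r⁻¹ *
            Real.exp (-(x ^ 2 + 2 * ρ * x * y + y ^ 2) / (2 * σ2))
            ≤ (2 * Real.pi)⁻¹ * r⁻¹ *
              (E * (Real.exp (-(a * (x - s))) * Real.exp (-(b * (y - t))))) := by
              apply mul_le_mul_of_nonneg_left this (by positivity)
          _ = _ := by ring
    refine hmono.trans_eq ?_
    rw [MeasureTheory.integral_Ici_eq_integral_Ioi, integral_const_mul _ _,
      exp_shift_integral b t hb]
  -- outer integral
  have houter : (∫ x in Ici s, ∫ y in Ici t, (2 * Real.pi)⁻¹ * r⁻¹ *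
        Real.exp (-(x ^ 2 + 2 * ρ * x * y + y ^ 2) / (2 * σ2))) ≤
      (2 * Real.pi)⁻¹ * r⁻¹ * E * (1 / b) * (1 / a) := by
    have hgint : IntegrableOn
        (fun x => (2 * Real.pi)⁻¹ * r⁻¹ * E * (1 / b) * Real.exp (-(a * (x - s)))) (Ici s) := by
      rw [integrableOn_Ici_iff_integrableOn_Ioi]
      exact (exp_shift_integrableOn a s ha).const_mul _
    have hmono : (∫ x in Ici s, ∫ y in Ici t, (2 * Real.pi)⁻¹ * r⁻¹ *
          Real.exp (-(x ^ 2 + 2 * ρ * x * y + y ^ 2) / (2 * σ2))) ≤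
        ∫ x in Ici s, (2 * Real.pi)⁻¹ * r⁻¹ * E * (1 / b) * Real.exp (-(a * (x - s))) := by
      apply integral_mono_of_nonneg
      · exact ae_of_all _ fun x => integral_nonneg fun y => by positivity
      · exact hgint
      · refine (ae_restrict_iff' measurableSet_Ici).2 (ae_of_all _ fun x hx => ?_)
        exact (hinner x hx).trans_eq (by ring)
    refine hmono.trans_eq ?_
    rw [MeasureTheory.integral_Ici_eq_integral_Ioi, integral_const_mul _ _,
      exp_shift_integral a s ha]
  refine houter.trans ?_
  -- final arithmetic
  have h1b : (1:ℝ) / b = σ2 / (ρ * s + t) := by rw [hbdef]; field_simp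
  have h1a : (1:ℝ) / a = σ2 / s := by rw [hadef]; field_simp
  rw [h1a, h1b]
  have heq : (2 * Real.pi)⁻¹ * r⁻¹ * E * (σ2 / (ρ * s + t)) * (σ2 / s) =
      (r * σ2) / (2 * Real.pi * s * (ρ * s + t)) * E := by
    rw [← hr]; field_simp
  rw [heq]
  have : (r * σ2) / (2 * Real.pi * s * (ρ * s + t)) ≤ r / (2 * Real.pi * s * (ρ * s + t)) := by
    apply div_le_div_of_nonneg_right ?_ (by positivity) |>.trans_eq rfl
    nlinarith
  exact mul_le_mul_of_nonneg_right this hEpos.le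
end

section
/- For every ρ ∈ (0,1), setting ν = 1/ρ² - 1, there exist a constant c > 0 and an integer K such that for all integers k ≥ K and all δ ∈ (0,1) with δ ≥ ( e^{c·√(ln k)} / k )^ν, one has δ^{1/k} + δ^{( (ln(1/δ))^{-1/2} + ρ )² / (1-ρ²)} > 1. -/
set_option maxHeartbeats 1000000


open Real

/-- For every `ρ ∈ (0,1)`, with `ν = 1/ρ² - 1`, there are `c > 0` and an integer `K`
such that for all integers `k ≥ K` and all `δ ∈ (0,1)` with
`δ ≥ (e^{c √(ln k)} / k)^ν`, one has
`δ^{1/k} + δ^{((ln(1/δ))^{-1/2} + ρ)² / (1-ρ²)} > 1`. -/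
theorem delta_power_inequality (ρ : ℝ) (hρ0 : 0 < ρ) (hρ1 : ρ < 1) :
    ∃ c : ℝ, 0 < c ∧ ∃ K : ℕ, ∀ k : ℕ, K ≤ k → ∀ δ : ℝ, 0 < δ → δ < 1 →
      (Real.exp (c * Real.sqrt (Real.log k)) / k) ^ (1 / ρ ^ 2 - 1) ≤ δ →
      1 < δ ^ (1 / (k : ℝ)) +
            δ ^ ((Real.log (1 / δ) ^ (-(1 / 2) : ℝ) + ρ) ^ 2 / (1 - ρ ^ 2)) := by
  have hρ2 : 0 < 1 - ρ ^ 2 := by nlinarith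
  set ν : ℝ := 1 / ρ ^ 2 - 1 with hν
  have hν' : ν = (1 - ρ ^ 2) / ρ ^ 2 := by rw [hν]; field_simp
  have hνpos : 0 < ν := by rw [hν']; positivity
  set c : ℝ := 2 * ρ * Real.sqrt ν / (1 - ρ ^ 2) + 1 with hc
  have hcpos : 0 < c := by positivity
  set A : ℝ := Real.log ν + 1 / (1 - ρ ^ 2) with hA
  set M : ℝ := max 4096 ((2 * A + 2) ^ 2) with hM
  clear_value ν c A
  refine ⟨c, hcpos, ⌈Real.exp M⌉₊, ?_⟩
  intro k hk δ hδ0 hδ1 hδk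
  have hk1 : 1 ≤ k := le_trans (Nat.one_le_ceil_iff.mpr (Real.exp_pos M)) hk
  have hkR : Real.exp M ≤ (k : ℝ) :=
    le_trans (Nat.le_ceil _) (by exact_mod_cast hk)
  have hkpos : (0 : ℝ) < k := lt_of_lt_of_le (Real.exp_pos M) hkR
  set y : ℝ := Real.log k with hy
  have hyM : M ≤ y := by
    rw [hy, ← Real.log_exp M]
    exact Real.log_le_log (Real.exp_pos M) hkR
  have hy4096 : (4096 : ℝ) ≤ y := le_trans (le_max_left _ _) hyM
  have hyA : (2 * A + 2) ^ 2 ≤ y := le_trans (le_max_right _ _) hyM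
  clear_value M
  have hy0 : 0 < y := by linarith
  set s : ℝ := Real.sqrt y with hs
  have hs0 : 0 ≤ s := Real.sqrt_nonneg y
  set t : ℝ := Real.sqrt s with ht
  have ht0 : 0 ≤ t := Real.sqrt_nonneg s
  have hs64 : (64 : ℝ) ≤ s := by
    rw [hs, show (64 : ℝ) = Real.sqrt 4096 by
      rw [show (4096 : ℝ) = 64 ^ 2 by norm_num, Real.sqrt_sq]; norm_num]
    exact Real.sqrt_le_sqrt hy4096
  have ht8 : (8 : ℝ) ≤ t := by
    rw [ht, show (8 : ℝ) = Real.sqrt 64 by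
      rw [show (64 : ℝ) = 8 ^ 2 by norm_num, Real.sqrt_sq]; norm_num]
    exact Real.sqrt_le_sqrt hs64
  have hst : s = t * t := (Real.mul_self_sqrt hs0).symm
  have hsA : 2 * A + 2 ≤ s := by
    calc 2 * A + 2 ≤ |2 * A + 2| := le_abs_self _
    _ = Real.sqrt ((2 * A + 2) ^ 2) := (Real.sqrt_sq_eq_abs _).symm
    _ ≤ s := Real.sqrt_le_sqrt hyA
  set L : ℝ := Real.log (1 / δ) with hLdef
  have hL : 0 < L := by
    rw [hLdef]
    apply Real.log_pos
    rw [lt_div_iff₀ hδ0]; linarith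
  have hlogδ : Real.log δ = -L := by
    rw [hLdef, one_div, Real.log_inv, neg_neg]
  set u : ℝ := Real.sqrt L with hu
  have hu0 : 0 ≤ u := Real.sqrt_nonneg L
  have hu2 : u ^ 2 = L := Real.sq_sqrt hL.le
  clear_value u
  -- from the hypothesis, L ≤ ν * (y - c*s)
  have hbase : (0 : ℝ) < Real.exp (c * s) / k := by positivity
  have hL1 : L ≤ ν * (y - c * s) := by
    have h1 := Real.log_le_log (Real.rpow_pos_of_pos hbase ν) hδk
    rw [Real.log_rpow hbase, Real.log_div (Real.exp_ne_zero _) (ne_of_gt hkpos),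
      Real.log_exp, hlogδ] at h1
    linarith [h1]
  have hLνy : L ≤ ν * y :=
    hL1.trans (mul_le_mul_of_nonneg_left (sub_le_self _ (by positivity)) hνpos.le)
  have hsL : u ≤ Real.sqrt ν * s := by
    rw [hu, hs, ← Real.sqrt_mul hνpos.le]
    exact Real.sqrt_le_sqrt hLνy
  have hlogL : Real.log L ≤ Real.log ν + Real.log y := by
    calc Real.log L ≤ Real.log (ν * y) := Real.log_le_log hL hLνy
    _ = Real.log ν + Real.log y := Real.log_mul (ne_of_gt hνpos) (ne_of_gt hy0)
  have hlogy : Real.log y ≤ 4 * t := by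
    have h1 : Real.log y = 4 * Real.log t := by
      rw [ht, hs, Real.log_sqrt hs0, hs, Real.log_sqrt hy0.le]; ring
    have h2 : Real.log t ≤ t - 1 := Real.log_le_sub_one_of_pos (by linarith)
    linarith
  have hρν : ρ ^ 2 * ν = 1 - ρ ^ 2 := by rw [hν']; field_simp
  have hBc : (1 - ρ ^ 2) * c = 2 * ρ * Real.sqrt ν + (1 - ρ ^ 2) := by
    rw [hc]; field_simp
  -- key: log L + (1 + ρ u)^2 / (1 - ρ^2) ≤ y
  have hlog2 : Real.log L ≤ s - 1 - 1 / (1 - ρ ^ 2) := by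
    have h4t : 4 * t ≤ s / 2 := by
      have := mul_le_mul_of_nonneg_right ht8 ht0
      rw [hst]; linarith
    have hAs : A ≤ s / 2 - 1 := by linarith [hsA]
    have : Real.log ν = A - 1 / (1 - ρ ^ 2) := by rw [hA]; ring
    linarith
  have hf1 : ρ ^ 2 * L ≤ (1 - ρ ^ 2) * (y - c * s) := by
    calc ρ ^ 2 * L ≤ ρ ^ 2 * (ν * (y - c * s)) :=
          mul_le_mul_of_nonneg_left hL1 (sq_nonneg ρ)
    _ = (1 - ρ ^ 2) * (y - c * s) := by rw [← mul_assoc, hρν]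
  have hBcs : (1 - ρ ^ 2) * c * s = 2 * ρ * Real.sqrt ν * s + (1 - ρ ^ 2) * s := by
    have := congrArg (· * s) hBc
    simpa [add_mul] using this
  have hf2 : 2 * ρ * u ≤ 2 * ρ * (Real.sqrt ν * s) := by
    have := mul_le_mul_of_nonneg_left hsL (by positivity : (0:ℝ) ≤ 2 * ρ)
    linarith
  have hBlogL : (1 - ρ ^ 2) * Real.log L ≤ (1 - ρ ^ 2) * s - (1 - ρ ^ 2) - 1 := by
    have h1 := mul_le_mul_of_nonneg_left hlog2 hρ2.le
    have h3 : (1 - ρ ^ 2) * (s - 1 - 1 / (1 - ρ ^ 2)) = (1 - ρ ^ 2) * s - (1 - ρ ^ 2) - 1 := by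
      field_simp
    linarith [h1, h3.ge, h3.le]
  have key' : 1 + 2 * ρ * u + ρ ^ 2 * L ≤ (y - Real.log L) * (1 - ρ ^ 2) := by
    linarith [hf1, hBcs, hf2, hBlogL]
  have key : Real.log L + (1 + ρ * u) ^ 2 / (1 - ρ ^ 2) ≤ y := by
    have hsq : (1 + ρ * u) ^ 2 = 1 + 2 * ρ * u + ρ ^ 2 * L := by
      rw [← hu2]; ring
    have h1 : (1 + ρ * u) ^ 2 / (1 - ρ ^ 2) ≤ y - Real.log L := by
      rw [div_le_iff₀ hρ2, hsq]; exact key'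
    linarith
  -- rewrite the two powers of δ
  set E : ℝ := (L ^ (-(1 / 2) : ℝ) + ρ) ^ 2 / (1 - ρ ^ 2) with hE
  have hLE : L * E = (1 + ρ * u) ^ 2 / (1 - ρ ^ 2) := by
    have h1 : L ^ (-(1 / 2) : ℝ) * u = 1 := by
      rw [hu, Real.sqrt_eq_rpow, ← Real.rpow_add hL]
      norm_num
    have h2 : (L ^ (-(1 / 2) : ℝ) + ρ) ^ 2 * L = (1 + ρ * u) ^ 2 := by
      have h3 : (L ^ (-(1 / 2) : ℝ) + ρ) * u = 1 + ρ * u := by rw [add_mul, h1]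
      calc (L ^ (-(1 / 2) : ℝ) + ρ) ^ 2 * L = ((L ^ (-(1 / 2) : ℝ) + ρ) * u) ^ 2 := by
            rw [mul_pow, hu2]
      _ = (1 + ρ * u) ^ 2 := by rw [h3]
    rw [hE, mul_comm L E, hE, div_mul_eq_mul_div, h2]
  have hpow1 : δ ^ (1 / (k : ℝ)) = Real.exp (-(L / k)) := by
    rw [Real.rpow_def_of_pos hδ0, hlogδ]; ring_nf
  have hpow2 : δ ^ E = Real.exp (-(L * E)) := by
    rw [Real.rpow_def_of_pos hδ0, hlogδ]; ring_nf
  rw [hpow1, hpow2]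
  have hpart1 : 1 - L / k < Real.exp (-(L / k)) := by
    have hne : -(L / (k : ℝ)) ≠ 0 := neg_ne_zero.mpr (ne_of_gt (by positivity))
    have := Real.add_one_lt_exp hne
    linarith
  have hpart2 : L / k ≤ Real.exp (-(L * E)) := by
    have h1 : L / k = Real.exp (Real.log L - Real.log k) := by
      rw [Real.exp_sub, Real.exp_log hL, Real.exp_log hkpos]
    rw [h1]
    apply Real.exp_le_exp.mpr
    rw [hLE]
    linarith [key]
  linarith
end

section
/- Exponential gap for non-dictator protocols on the path. For every ρ ∈ (0,1) and every n ≥ 1, there exists a constant c = c(ρ,n) ∈ (0,1) such that the following holds. Let x_0, x_1, …, x_k be {-1,1}^n-valued random variables with joint distribution Pr[x_0 = a_0,…,x_k = a_k] = 2^{-n}·∏_{j=1}^k ∏_{i=1}^n (1/2 + (ρ/2)·a_{j-1,i}·a_{j,i}) (i.e., x_0 uniform and each x_j a ρ-correlated copy of x_{j-1}). Then for every balanced function f : {-1,1}^n → {-1,1} that is not a dictator or anti-dictator (i.e., there is no coordinate i with f(x) = x_i for all x or f(x) = -x_i for all x), and for every k ≥ 1: Pr[f(x_0) = f(x_1) =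 ⋯ = f(x_k)] ≤ (1/2 + ρ/2)^k · c^k. -/
open Finset Real

noncomputable section

/-- A Boolean function on the cube is balanced if it takes each value on exactly
half of the `2^n` points. -/
def IsBalanced {n : ℕ} (f : (Fin n → Bool) → Bool) : Prop :=
  2 * (Finset.univ.filter fun x => f x = true).card = 2 ^ n

namespace PathGap

abbrev Cube (n : ℕ) := Fin n → Bool

variable {n : ℕ}

def chi (S : Finset (Fin n)) (x : Cube n) : ℝ := ∏ i ∈ S, sgn (x i)

def hat (g : Cube n → ℝ) (S : Finset (Fin n)) : ℝ := ∑ x, g x * chi S x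

def ip (f g : Cube n → ℝ) : ℝ := ∑ x, f x * g x

def Qf (ρ : ℝ) (g : Cube n → ℝ) : ℝ := ∑ x, ∑ y, g x * g y * corrWeight ρ x y

def ind (A : Finset (Cube n)) : Cube n → ℝ := fun x => if x ∈ A then 1 else 0

def opM (ρ : ℝ) (A : Finset (Cube n)) (v : Cube n → ℝ) : Cube n → ℝ :=
  fun x => ind A x * ∑ y, corrWeight ρ x y * (ind A y * v y)

lemma sgn_mul_self (b : Bool) : sgn b * sgn b = 1 := by cases b <;> simp [sgn]
lemma sgn_not (b : Bool) : sgn (!b) = -sgn b := by cases b <;> simp [sgn]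
lemma corrWeight_symm (ρ : ℝ) (x y : Cube n) : corrWeight ρ x y = corrWeight ρ y x := by
  unfold corrWeight; apply Finset.prod_congr rfl; intro i _; ring

lemma prod_one_add (r : ℝ) (x y : Cube n) :
    ∏ i, (1 + r * sgn (x i) * sgn (y i)) =
      ∑ S : Finset (Fin n), r ^ S.card * (chi S x * chi S y) := by
  have h : ∀ i ∈ (univ : Finset (Fin n)), (1 : ℝ) + r * sgn (x i) * sgn (y i)
      = (r * (sgn (x i) * sgn (y i))) + 1 := fun i _ => by ring
  rw [Finset.prod_congr rfl h, Finset.prod_add, Finset.powerset_univ]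
  apply Finset.sum_congr rfl
  intro S _
  simp only [Finset.prod_const_one, mul_one, Finset.prod_mul_distrib, Finset.prod_const, chi,
    Finset.prod_mul_distrib]

lemma corrWeight_eq (ρ : ℝ) (x y : Cube n) :
    corrWeight ρ x y = (∏ i, (1 + ρ * sgn (x i) * sgn (y i))) / 2 ^ n := by
  unfold corrWeight
  have h : ∀ i ∈ (univ : Finset (Fin n)), (1 / 2 + (ρ / 2) * sgn (x i) * sgn (y i))
      = (1 + ρ * sgn (x i) * sgn (y i)) / 2 := fun i _ => by ring
  rw [Finset.prod_congr rfl h, Finset.prod_div_distrib, Finset.prod_const, Finset.card_univ,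
    Fintype.card_fin]

lemma chi_delta (x y : Cube n) :
    ∑ S : Finset (Fin n), chi S x * chi S y = if x = y then (2 ^ n : ℝ) else 0 := by
  have h := prod_one_add (n := n) 1 x y
  simp only [one_pow, one_mul] at h
  rw [← h]
  by_cases hxy : x = y
  · subst hxy
    simp only [if_pos rfl]
    have h2 : ∀ i ∈ (univ : Finset (Fin n)), (1 : ℝ) + sgn (x i) * sgn (x i) = 2 := by
      intro i _; rw [sgn_mul_self]; norm_num
    rw [Finset.prod_congr rfl h2, Finset.prod_const, Finset.card_univ, Fintype.card_fin]
    simp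
  · simp only [if_neg hxy]
    obtain ⟨i, hi⟩ : ∃ i, x i ≠ y i := by
      by_contra hc; push_neg at hc; exact hxy (funext hc)
    apply Finset.prod_eq_zero (Finset.mem_univ i)
    have h3 : sgn (x i) * sgn (y i) = -1 := by
      cases hxi : x i <;> cases hyi : y i <;> simp_all [sgn]
    rw [h3]; ring

lemma quad_expand (r : ℝ) (g : Cube n → ℝ) :
    ∑ x, ∑ y, g x * g y * ∏ i, (1 + r * sgn (x i) * sgn (y i)) =
      ∑ S : Finset (Fin n), r ^ S.card * hat g S ^ 2 := by
  have h1 : ∀ S : Finset (Fin n), r ^ S.card * hat g S ^ 2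
      = ∑ x, ∑ y, g x * g y * (r ^ S.card * (chi S x * chi S y)) := by
    intro S
    unfold hat
    rw [sq, Finset.sum_mul_sum, Finset.mul_sum]
    apply Finset.sum_congr rfl; intro x _
    rw [Finset.mul_sum]
    apply Finset.sum_congr rfl; intro y _
    ring
  simp only [h1]
  conv_rhs => rw [Finset.sum_comm]
  apply Finset.sum_congr rfl; intro x _
  conv_rhs => rw [Finset.sum_comm]
  apply Finset.sum_congr rfl; intro y _
  rw [prod_one_add, Finset.mul_sum]

lemma parseval (g : Cube n → ℝ) :
    (2 ^ n : ℝ) * ip g g = ∑ S : Finset (Fin n), hat g S ^ 2 := by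
  have h := quad_expand (n := n) 1 g
  simp only [one_pow, one_mul] at h
  rw [← h]
  have hd : ∀ x y : Cube n, (∏ i, ((1:ℝ) + sgn (x i) * sgn (y i))) =
      if x = y then (2^n:ℝ) else 0 := by
    intro x y
    have h2 := prod_one_add (n := n) 1 x y
    simp only [one_pow, one_mul] at h2
    rw [h2, chi_delta]
  simp only [hd, mul_ite, mul_zero]
  simp only [Finset.sum_ite_eq, Finset.mem_univ, if_pos]
  unfold ip
  rw [Finset.mul_sum]
  exact Finset.sum_congr rfl fun x _ => by ring

lemma inversion (g : Cube n → ℝ) (x : Cube n) :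
    (2 ^ n : ℝ) * g x = ∑ S : Finset (Fin n), hat g S * chi S x := by
  have h1 : ∑ S : Finset (Fin n), hat g S * chi S x
      = ∑ S : Finset (Fin n), ∑ y, g y * (chi S y * chi S x) := by
    apply Finset.sum_congr rfl; intro S _
    unfold hat
    rw [Finset.sum_mul]
    apply Finset.sum_congr rfl; intro y _; ring
  rw [h1, Finset.sum_comm]
  have h2 : ∀ y : Cube n, ∑ S : Finset (Fin n), g y * (chi S y * chi S x)
      = g y * (if y = x then (2^n:ℝ) else 0) := by
    intro y; rw [← Finset.mul_sum, chi_delta]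
  simp only [h2, mul_ite, mul_zero]
  rw [Finset.sum_ite_eq', if_pos (Finset.mem_univ x), mul_comm]

lemma Qf_fourier (ρ : ℝ) (g : Cube n → ℝ) :
    (2 ^ n : ℝ) * Qf ρ g = ∑ S : Finset (Fin n), ρ ^ S.card * hat g S ^ 2 := by
  have h2 : (2:ℝ)^n ≠ 0 := by positivity
  rw [← quad_expand]
  unfold Qf
  rw [Finset.mul_sum]
  apply Finset.sum_congr rfl; intro x _
  rw [Finset.mul_sum]
  apply Finset.sum_congr rfl; intro y _
  rw [corrWeight_eq]
  field_simp

lemma ip_nonneg (g : Cube n → ℝ) : 0 ≤ ip g g :=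
  Finset.sum_nonneg fun x _ => mul_self_nonneg _

lemma Qf_nonneg (ρ : ℝ) (hρ0 : 0 ≤ ρ) (g : Cube n → ℝ) : 0 ≤ Qf ρ g := by
  have h2 : (0:ℝ) < 2 ^ n := by positivity
  have h := Qf_fourier ρ g
  have hnn : 0 ≤ ∑ S : Finset (Fin n), ρ ^ S.card * hat g S ^ 2 :=
    Finset.sum_nonneg fun S _ => mul_nonneg (pow_nonneg hρ0 _) (sq_nonneg _)
  nlinarith

lemma Qf_smul (ρ c : ℝ) (g : Cube n → ℝ) : Qf ρ (fun x => c * g x) = c ^ 2 * Qf ρ g := by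
  unfold Qf
  rw [Finset.mul_sum]
  apply Finset.sum_congr rfl; intro x _
  rw [Finset.mul_sum]
  apply Finset.sum_congr rfl; intro y _
  ring

lemma ip_smul (c : ℝ) (g : Cube n → ℝ) :
    ip (fun x => c * g x) (fun x => c * g x) = c ^ 2 * ip g g := by
  unfold ip
  rw [Finset.mul_sum]
  apply Finset.sum_congr rfl; intro x _
  ring

lemma ip_comm (f g : Cube n → ℝ) : ip f g = ip g f := by
  unfold ip; exact Finset.sum_congr rfl fun x _ => mul_comm _ _

lemma opM_sa (ρ : ℝ) (A : Finset (Cube n)) (f g : Cube n → ℝ) :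
    ip f (opM ρ A g) = ip (opM ρ A f) g := by
  unfold ip opM
  simp only [Finset.mul_sum, Finset.sum_mul]
  rw [Finset.sum_comm]
  apply Finset.sum_congr rfl; intro x _
  apply Finset.sum_congr rfl; intro y _
  rw [corrWeight_symm]
  ring

lemma ip_opM_eq_Qf (ρ : ℝ) (A : Finset (Cube n)) (g : Cube n → ℝ) :
    ip g (opM ρ A g) = Qf ρ (fun x => ind A x * g x) := by
  unfold ip opM Qf
  apply Finset.sum_congr rfl; intro x _
  rw [Finset.mul_sum, Finset.mul_sum]
  apply Finset.sum_congr rfl; intro y _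
  ring

lemma ip_opM_nonneg (ρ : ℝ) (hρ0 : 0 ≤ ρ) (A : Finset (Cube n)) (g : Cube n → ℝ) :
    0 ≤ ip g (opM ρ A g) := by
  rw [ip_opM_eq_Qf]; exact Qf_nonneg ρ hρ0 _

lemma ip_opM_le_of (ρ lam : ℝ) (hlam : 0 ≤ lam) (A : Finset (Cube n))
    (hbd : ∀ g : Cube n → ℝ, (∀ x ∉ A, g x = 0) → Qf ρ g ≤ lam * ip g g) :
    ∀ g : Cube n → ℝ, ip g (opM ρ A g) ≤ lam * ip g g := by
  intro g
  rw [ip_opM_eq_Qf]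
  have hs : ∀ x ∉ A, (ind A x * g x) = 0 := fun x hx => by simp [ind, hx]
  refine (hbd _ hs).trans ?_
  apply mul_le_mul_of_nonneg_left ?_ hlam
  unfold ip
  apply Finset.sum_le_sum; intro x _
  unfold ind
  by_cases hx : x ∈ A
  · simp [hx]
  · simpa [hx] using mul_self_nonneg (g x)

lemma opM_lin (ρ t : ℝ) (A : Finset (Cube n)) (f g : Cube n → ℝ) :
    opM ρ A (fun x => f x + t * g x) = fun x => opM ρ A f x + t * opM ρ A g x := by
  funext x
  unfold opM
  have h : ∀ y : Cube n, corrWeight ρ x y * (ind A y * (f y + t * g y))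
      = corrWeight ρ x y * (ind A y * f y) + t * (corrWeight ρ x y * (ind A y * g y)) :=
    fun y => by ring
  simp only [h, Finset.sum_add_distrib, ← Finset.mul_sum]
  ring

lemma B_cs (ρ : ℝ) (hρ0 : 0 ≤ ρ) (A : Finset (Cube n)) (f g : Cube n → ℝ) :
    (ip f (opM ρ A g)) ^ 2 ≤ ip f (opM ρ A f) * ip g (opM ρ A g) := by
  have hq : ∀ t : ℝ, 0 ≤ ip g (opM ρ A g) * (t * t) + (2 * ip f (opM ρ A g)) * t
      + ip f (opM ρ A f) := by
    intro t
    have h0 := ip_opM_nonneg ρ hρ0 A (fun x => f x + t * g x)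
    rw [opM_lin] at h0
    have hexp : ∀ x : Cube n, (f x + t * g x) * (opM ρ A f x + t * opM ρ A g x)
        = f x * opM ρ A f x + t * (g x * opM ρ A f x) + t * (f x * opM ρ A g x)
          + t * t * (g x * opM ρ A g x) := fun x => by ring
    unfold ip at h0 ⊢
    simp only [hexp, Finset.sum_add_distrib, ← Finset.mul_sum] at h0
    have hsym : ∑ x, g x * opM ρ A f x = ∑ x, f x * opM ρ A g x := by
      have h1 := opM_sa ρ A f g
      have h2 := ip_comm (opM ρ A f) g
      unfold ip at h1 h2
      rw [h1, h2]
    rw [hsym] at h0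
    nlinarith [h0]
  have hd := discrim_le_zero hq
  unfold discrim at hd
  nlinarith [hd]

lemma opM_norm_le (ρ lam : ℝ) (hρ0 : 0 ≤ ρ) (hlam : 0 ≤ lam) (A : Finset (Cube n))
    (hbd : ∀ g : Cube n → ℝ, ip g (opM ρ A g) ≤ lam * ip g g) (w : Cube n → ℝ) :
    ip (opM ρ A w) (opM ρ A w) ≤ lam * ip w (opM ρ A w) := by
  set v := opM ρ A w with hv
  have h1 : ip w (opM ρ A v) = ip v v := by rw [opM_sa, ← hv]
  have h2 := B_cs ρ hρ0 A w v
  rw [h1] at h2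
  have h3 : ip v (opM ρ A v) ≤ lam * ip v v := hbd v
  have h4 : 0 ≤ ip v v := ip_nonneg v
  have h5 : 0 ≤ ip w (opM ρ A w) := ip_opM_nonneg ρ hρ0 A w
  rcases eq_or_lt_of_le h4 with h6 | h6
  · rw [← h6]; positivity
  · have h7 : ip v v * ip v v ≤ (ip w (opM ρ A w) * lam) * ip v v := by nlinarith
    have := le_of_mul_le_mul_right (by linarith [h7] : ip v v * ip v v ≤ (lam * ip w (opM ρ A w)) * ip v v) h6
    linarith
lemma power_bound (ρ lam : ℝ) (hρ0 : 0 ≤ ρ) (hlam : 0 ≤ lam) (A : Finset (Cube n))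
    (hbd : ∀ g : Cube n → ℝ, (∀ x ∉ A, g x = 0) → Qf ρ g ≤ lam * ip g g) :
    ∀ k, ip (ind A) ((opM ρ A)^[k] (ind A)) ≤ lam ^ k * ip (ind A) (ind A) := by
  have hbd' := ip_opM_le_of ρ lam hlam A hbd
  set u := ind A with hu
  set M := opM ρ A with hM
  have hshift : ∀ i j : ℕ, ip (M^[i] u) (M^[j] u) = ip u (M^[i + j] u) := by
    intro i
    induction i with
    | zero => intro j; simp
    | succ i ih =>
      intro j
      have : ip (M^[i + 1] u) (M^[j] u) = ip (M^[i] u) (M^[j + 1] u) := by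
        rw [Function.iterate_succ_apply' M i u, Function.iterate_succ_apply' M j u,
          ← opM_sa]
      rw [this, ih (j + 1), show i + (j + 1) = i + 1 + j by omega]
  have key : ∀ k : ℕ, ip u (M^[2 * k] u) ≤ lam ^ (2 * k) * ip u u ∧
      ip u (M^[2 * k + 1] u) ≤ lam ^ (2 * k + 1) * ip u u := by
    intro k
    induction k with
    | zero =>
      constructor
      · simp
      · simpa using hbd' u
    | succ k ih =>
      have hw : ∀ m : ℕ, ip u (M^[2 * m] u) = ip (M^[m] u) (M^[m] u) := by
        intro m
        rw [show 2 * m = m + m by omega]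
        exact (hshift m m).symm
      have hwo : ∀ m : ℕ, ip u (M^[2 * m + 1] u) = ip (M^[m] u) (M (M^[m] u)) := by
        intro m
        rw [show 2 * m + 1 = m + (m + 1) by omega, ← hshift m (m + 1),
          Function.iterate_succ_apply' M m u]
      have hipu : 0 ≤ ip u u := ip_nonneg u
      have step1 : ip u (M^[2 * (k + 1)] u) ≤ lam ^ (2 * (k + 1)) * ip u u := by
        have e1 : ip u (M^[2 * (k + 1)] u) = ip (M (M^[k] u)) (M (M^[k] u)) := by
          rw [hw (k + 1), Function.iterate_succ_apply' M k u]
        rw [e1]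
        have h2 := opM_norm_le ρ lam hρ0 hlam A hbd' (M^[k] u)
        rw [← hM] at h2
        have h3 : ip (M^[k] u) (M (M^[k] u)) ≤ lam ^ (2 * k + 1) * ip u u := by
          rw [← hwo k]; exact ih.2
        calc ip (M (M^[k] u)) (M (M^[k] u)) ≤ lam * ip (M^[k] u) (M (M^[k] u)) := h2
          _ ≤ lam * (lam ^ (2 * k + 1) * ip u u) := by
              apply mul_le_mul_of_nonneg_left h3 hlam
          _ = lam ^ (2 * (k + 1)) * ip u u := by ring
      constructor
      · exact step1
      · have e2 : ip u (M^[2 * (k + 1) + 1] u) = ip (M^[k+1] u) (M (M^[k+1] u)) := hwo (k + 1)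
        rw [e2]
        have h2 : ip (M^[k+1] u) (M (M^[k+1] u)) ≤ lam * ip (M^[k+1] u) (M^[k+1] u) :=
          hbd' (M^[k+1] u)
        have h3 : ip (M^[k+1] u) (M^[k+1] u) ≤ lam ^ (2 * (k + 1)) * ip u u := by
          rw [← hw (k + 1)]; exact step1
        calc ip (M^[k+1] u) (M (M^[k+1] u)) ≤ lam * ip (M^[k+1] u) (M^[k+1] u) := h2
          _ ≤ lam * (lam ^ (2 * (k + 1)) * ip u u) := mul_le_mul_of_nonneg_left h3 hlam
          _ = lam ^ (2 * (k + 1) + 1) * ip u u := by ring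
  intro k
  rcases Nat.even_or_odd k with ⟨m, hm⟩ | ⟨m, hm⟩
  · have := (key m).1
    rwa [show 2 * m = k by omega] at this
  · have := (key m).2
    rwa [show 2 * m + 1 = k by omega] at this

lemma sum_fin_one (F : (Fin 1 → Cube n) → ℝ) :
    ∑ t : Fin 1 → Cube n, F t = ∑ z : Cube n, F (fun _ => z) :=
  Fintype.sum_equiv (Equiv.funUnique (Fin 1) (Cube n)) F (fun z => F fun _ => z)
    (fun t => congrArg F (funext fun j => by rw [Subsingleton.elim j 0]; rfl))

lemma iter_eq (ρ : ℝ) (A : Finset (Cube n)) :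
    ∀ (k : ℕ) (y : Cube n), (opM ρ A)^[k] (ind A) y =
      ∑ t : Fin (k+1) → Cube n,
        if t 0 = y ∧ ∀ j, t j ∈ A then
          ∏ j : Fin k, corrWeight ρ (t j.castSucc) (t j.succ) else 0 := by
  intro k
  induction k with
  | zero =>
    intro y
    rw [Function.iterate_zero_apply, sum_fin_one]
    simp only []
    have h : ∀ z : Cube n,
        (if (fun _ : Fin 1 => z) 0 = y ∧ (∀ j : Fin 1, (fun _ : Fin 1 => z) j ∈ A) then
          ∏ j : Fin 0, corrWeight ρ ((fun _ : Fin 1 => z) j.castSucc)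
            ((fun _ : Fin 1 => z) j.succ) else 0)
        = if z = y then (if z ∈ A then (1:ℝ) else 0) else 0 := by
      intro z
      by_cases h1 : z = y
      · subst h1
        by_cases h2 : z ∈ A
        · rw [if_pos ⟨rfl, fun _ => h2⟩, if_pos rfl, if_pos h2]
          simp
        · rw [if_neg (fun hc => h2 (hc.2 0)), if_pos rfl, if_neg h2]
      · rw [if_neg (fun hc => h1 hc.1), if_neg h1]
    rw [Finset.sum_congr rfl (fun z _ => h z), Finset.sum_ite_eq']
    simp [ind]
  | succ k ih =>
    intro y
    rw [Function.iterate_succ_apply']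
    have LHSe : opM ρ A ((opM ρ A)^[k] (ind A)) y
        = ind A y * ∑ s : Fin (k+1) → Cube n,
            (if (∀ j, s j ∈ A) then corrWeight ρ y (s 0) *
              ∏ j : Fin k, corrWeight ρ (s j.castSucc) (s j.succ) else 0) := by
      unfold opM
      congr 1
      calc ∑ z, corrWeight ρ y z * (ind A z * (opM ρ A)^[k] (ind A) z)
          = ∑ z, ∑ s : Fin (k+1) → Cube n,
              (if s 0 = z ∧ ∀ j, s j ∈ A then corrWeight ρ y z *
                ∏ j : Fin k, corrWeight ρ (s j.castSucc) (s j.succ) else 0) := by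
            apply Finset.sum_congr rfl; intro z _
            rw [ih z]
            simp only [Finset.mul_sum]
            apply Finset.sum_congr rfl; intro s _
            by_cases h : s 0 = z ∧ ∀ j, s j ∈ A
            · rw [if_pos h, if_pos h]
              have hz : ind A z = 1 := by
                unfold ind; rw [if_pos]; rw [← h.1]; exact h.2 0
              rw [hz]; ring
            · rw [if_neg h, if_neg h]; ring
        _ = ∑ s : Fin (k+1) → Cube n, ∑ z,
              (if s 0 = z ∧ ∀ j, s j ∈ A then corrWeight ρ y z *
                ∏ j : Fin k, corrWeight ρ (s j.castSucc) (s j.succ) else 0) :=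
            Finset.sum_comm
        _ = ∑ s : Fin (k+1) → Cube n,
            (if (∀ j, s j ∈ A) then corrWeight ρ y (s 0) *
              ∏ j : Fin k, corrWeight ρ (s j.castSucc) (s j.succ) else 0) := by
            apply Finset.sum_congr rfl; intro s _
            simp only [ite_and]
            rw [Finset.sum_ite_eq]
            simp
    rw [LHSe]
    have RHSe : (∑ t : Fin (k+2) → Cube n, if t 0 = y ∧ ∀ j, t j ∈ A then
          ∏ j : Fin (k+1), corrWeight ρ (t j.castSucc) (t j.succ) else 0)
        = ∑ s : Fin (k+1) → Cube n, if y ∈ A ∧ (∀ j, s j ∈ A) then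
            corrWeight ρ y (s 0) * ∏ j : Fin k, corrWeight ρ (s j.castSucc) (s j.succ)
          else 0 := by
      rw [← Equiv.sum_comp (Fin.consEquiv fun _ : Fin (k+2) => Cube n)]
      rw [Fintype.sum_prod_type]
      rw [Finset.sum_comm]
      apply Finset.sum_congr rfl; intro s _
      have hc : ∀ a : Cube n,
          ((Fin.cons a s : ∀ _ : Fin (k+2), Cube n) 0 = y ∧
            ∀ j : Fin (k+2), (Fin.cons a s : ∀ _ : Fin (k+2), Cube n) j ∈ A)
          ↔ (a = y ∧ (a ∈ A ∧ ∀ j : Fin (k+1), s j ∈ A)) := by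
        intro a
        rw [Fin.cons_zero, Fin.forall_fin_succ, Fin.cons_zero]
        simp [Fin.cons_succ]
      have hp : ∀ a : Cube n,
          (∏ j : Fin (k+1), corrWeight ρ ((Fin.cons a s : ∀ _ : Fin (k+2), Cube n) j.castSucc)
            ((Fin.cons a s : ∀ _ : Fin (k+2), Cube n) j.succ))
          = corrWeight ρ a (s 0) * ∏ j : Fin k, corrWeight ρ (s j.castSucc) (s j.succ) := by
        intro a
        rw [Fin.prod_univ_succ]
        have h1 : ∀ j : Fin k,
            corrWeight ρ ((Fin.cons a s : ∀ _ : Fin (k+2), Cube n) j.succ.castSucc)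
              ((Fin.cons a s : ∀ _ : Fin (k+2), Cube n) j.succ.succ)
            = corrWeight ρ (s j.castSucc) (s j.succ) := by
          intro j
          rw [← Fin.succ_castSucc, Fin.cons_succ, Fin.cons_succ]
        simp only [h1]
        rfl
      have hterm : ∀ a : Cube n,
          (if ((Fin.consEquiv fun _ : Fin (k+2) => Cube n) (a, s)) 0 = y ∧
              ∀ j : Fin (k+2), ((Fin.consEquiv fun _ : Fin (k+2) => Cube n) (a, s)) j ∈ A then
            ∏ j : Fin (k+1), corrWeight ρ
              (((Fin.consEquiv fun _ : Fin (k+2) => Cube n) (a, s)) j.castSucc)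
              (((Fin.consEquiv fun _ : Fin (k+2) => Cube n) (a, s)) j.succ)
          else 0)
          = if a = y then (if a ∈ A ∧ ∀ j : Fin (k+1), s j ∈ A then
              corrWeight ρ a (s 0) * ∏ j : Fin k, corrWeight ρ (s j.castSucc) (s j.succ)
            else 0) else 0 := by
        intro a
        have he : ((Fin.consEquiv fun _ : Fin (k+2) => Cube n) (a, s)) = Fin.cons a s := rfl
        rw [he, hp a]
        by_cases h1 : a = y
        · by_cases h2 : a ∈ A ∧ ∀ j : Fin (k+1), s j ∈ A
          · rw [if_pos ((hc a).mpr ⟨h1, h2⟩), if_pos h1, if_pos h2]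
          · rw [if_neg, if_pos h1, if_neg h2]
            intro hcon; exact h2 ((hc a).mp hcon).2
        · rw [if_neg, if_neg h1]
          intro hcon; exact h1 ((hc a).mp hcon).1
      simp only [hterm]
      rw [Finset.sum_ite_eq']
      simp only [Finset.mem_univ, if_pos]
    rw [RHSe]
    by_cases hy : y ∈ A
    · have : ind A y = 1 := by unfold ind; rw [if_pos hy]
      rw [this, one_mul]
      apply Finset.sum_congr rfl; intro s _
      by_cases hs : ∀ j : Fin (k+1), s j ∈ A
      · rw [if_pos hs, if_pos ⟨hy, hs⟩]
      · rw [if_neg hs, if_neg (fun hcon => hs hcon.2)]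
    · have : ind A y = 0 := by unfold ind; rw [if_neg hy]
      rw [this, zero_mul]
      symm
      apply Finset.sum_eq_zero; intro s _
      rw [if_neg (fun hcon => hy hcon.1)]

lemma path_eq (ρ : ℝ) (A : Finset (Cube n)) (k : ℕ) :
    (∑ x : Fin (k + 1) → Cube n,
      if ∀ j, x j ∈ A then ∏ j : Fin k, corrWeight ρ (x j.castSucc) (x j.succ) else 0) =
      ip (ind A) ((opM ρ A)^[k] (ind A)) := by
  unfold ip
  have h : ∀ y : Cube n, ind A y * (opM ρ A)^[k] (ind A) y
      = ∑ t : Fin (k+1) → Cube n, if t 0 = y ∧ ∀ j, t j ∈ A then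
          ∏ j : Fin k, corrWeight ρ (t j.castSucc) (t j.succ) else 0 := by
    intro y
    rw [iter_eq, Finset.mul_sum]
    apply Finset.sum_congr rfl; intro t _
    by_cases h : t 0 = y ∧ ∀ j, t j ∈ A
    · rw [if_pos h]
      have : ind A y = 1 := by unfold ind; rw [if_pos]; rw [← h.1]; exact h.2 0
      rw [this, one_mul]
    · rw [if_neg h, mul_zero]
  simp only [h]
  rw [Finset.sum_comm]
  apply Finset.sum_congr rfl; intro t _
  simp only [ite_and]
  rw [Finset.sum_ite_eq]
  simp

lemma ip_ind_ind (A : Finset (Cube n)) : ip (ind A) (ind A) = A.card := by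
  unfold ip ind
  simp [ite_and]

lemma sq_diff_sum (A : Finset (Cube n)) (g : Cube n → ℝ) :
    ∑ x ∈ A, ∑ y ∈ A, (g x - g y) ^ 2
      = 2 * A.card * (∑ x ∈ A, g x * g x) - 2 * (∑ x ∈ A, g x) ^ 2 := by
  have h : ∀ x ∈ A, ∑ y ∈ A, (g x - g y) ^ 2
      = (A.card : ℝ) * (g x * g x) - 2 * g x * (∑ y ∈ A, g y) + ∑ y ∈ A, g y * g y := by
    intro x _
    have h1 : ∀ y ∈ A, (g x - g y) ^ 2 = g x * g x - 2 * g x * g y + g y * g y :=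
      fun y _ => by ring
    rw [Finset.sum_congr rfl h1, Finset.sum_add_distrib, Finset.sum_sub_distrib,
      Finset.sum_const, ← Finset.mul_sum, nsmul_eq_mul]
  rw [Finset.sum_congr rfl h, Finset.sum_add_distrib, Finset.sum_sub_distrib,
    Finset.sum_const, ← Finset.mul_sum, nsmul_eq_mul]
  have h2 : ∑ x ∈ A, 2 * g x * (∑ y ∈ A, g y) = 2 * ((∑ x ∈ A, g x) * (∑ y ∈ A, g y)) := by
    rw [← Finset.sum_mul, ← Finset.mul_sum, mul_assoc]
  rw [h2]
  ring

lemma exists_max (ρ : ℝ) (A : Finset (Cube n)) (hAne : A.Nonempty) :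
    ∃ g0 : Cube n → ℝ, (∀ x ∉ A, g0 x = 0) ∧ ip g0 g0 = 1 ∧
      ∀ g : Cube n → ℝ, (∀ x ∉ A, g x = 0) → ip g g = 1 → Qf ρ g ≤ Qf ρ g0 := by
  set K : Set (Cube n → ℝ) := {g | (∀ x ∉ A, g x = 0) ∧ ip g g = 1} with hK
  have hclosed : IsClosed K := by
    have h1 : IsClosed {g : Cube n → ℝ | ∀ x ∉ A, g x = 0} := by
      have he : {g : Cube n → ℝ | ∀ x ∉ A, g x = 0}
          = ⋂ x ∈ {x : Cube n | x ∉ A}, {g : Cube n → ℝ | g x = 0} := by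
        ext g; simp
      rw [he]
      exact isClosed_biInter fun x _ => isClosed_eq (continuous_apply x) continuous_const
    have h2 : IsClosed {g : Cube n → ℝ | ip g g = 1} := by
      apply isClosed_eq _ continuous_const
      unfold ip
      exact continuous_finset_sum _ fun x _ => (continuous_apply x).mul (continuous_apply x)
    exact h1.inter h2
  have hsub : K ⊆ Metric.closedBall 0 1 := by
    intro g hg
    rw [Metric.mem_closedBall, dist_zero_right]
    rw [pi_norm_le_iff_of_nonneg zero_le_one]
    intro x
    rw [Real.norm_eq_abs, abs_le]
    have hx2 : g x * g x ≤ 1 := by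
      have h3 := Finset.single_le_sum (f := fun z => g z * g z)
        (fun i _ => mul_self_nonneg (g i)) (Finset.mem_univ x)
      have h4 : ip g g = 1 := hg.2
      unfold ip at h4
      linarith
    constructor <;> nlinarith
  have hcomp : IsCompact K := (isCompact_closedBall 0 1).of_isClosed_subset hclosed hsub
  have hne : K.Nonempty := by
    obtain ⟨a, ha⟩ := hAne
    refine ⟨fun x => if x = a then 1 else 0, fun x hx => ?_, ?_⟩
    · show (if x = a then (1:ℝ) else 0) = 0
      rw [if_neg]; rintro rfl; exact hx ha
    · unfold ip
      have hterm : ∀ x : Cube n, (if x = a then (1:ℝ) else 0) * (if x = a then 1 else 0)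
          = if x = a then 1 else 0 := by intro x; by_cases hx : x = a <;> simp [hx]
      rw [Finset.sum_congr rfl fun x _ => hterm x, Finset.sum_ite_eq']
      simp
  have hcont : ContinuousOn (Qf ρ) K := by
    apply Continuous.continuousOn
    unfold Qf
    exact continuous_finset_sum _ fun x _ => continuous_finset_sum _ fun y _ =>
      (((continuous_apply x).mul (continuous_apply y)).mul continuous_const)
  obtain ⟨g0, hg0K, hmax⟩ := hcomp.exists_isMaxOn hne hcont
  exact ⟨g0, hg0K.1, hg0K.2, fun g h1 h2 => hmax ⟨h1, h2⟩⟩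

set_option maxHeartbeats 2000000 in
lemma exists_lam (ρ : ℝ) (hρ0 : 0 < ρ) (hρ1 : ρ < 1) (hn : 1 ≤ n)
    (A : Finset (Cube n)) (hA : 2 * A.card = 2 ^ n)
    (hnd : ¬ ∃ i : Fin n, (∀ x : Cube n, x ∈ A ↔ x i = true) ∨
      (∀ x : Cube n, x ∈ A ↔ x i = false)) :
    ∃ lam : ℝ, 0 ≤ lam ∧ lam < (1 + ρ) / 2 ∧
      ∀ g : Cube n → ℝ, (∀ x ∉ A, g x = 0) → Qf ρ g ≤ lam * ip g g := by
  have hNpos : (0:ℝ) < 2 ^ n := by positivity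
  have hcA : (A.card : ℝ) = 2 ^ n / 2 := by
    have h := congrArg (fun m : ℕ => (m : ℝ)) hA
    push_cast at h
    linarith
  have hcApos : (0:ℝ) < A.card := by rw [hcA]; positivity
  have hAne : A.Nonempty := Finset.card_pos.mp (by exact_mod_cast hcApos)
  obtain ⟨g, hsupp, hip, hmax⟩ := exists_max ρ A hAne
  set lam := Qf ρ g with hlam
  have hlam0 : 0 ≤ lam := Qf_nonneg ρ hρ0.le g
  have hbound : ∀ h : Cube n → ℝ, (∀ x ∉ A, h x = 0) → Qf ρ h ≤ lam * ip h h := by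
    intro h hsh
    rcases eq_or_lt_of_le (ip_nonneg h) with h0 | h0
    · have hz : ∀ x, h x = 0 := by
        intro x
        have h1 : ∀ x ∈ (univ : Finset (Cube n)), 0 ≤ h x * h x := fun x _ => mul_self_nonneg _
        have h2 : (∑ x, h x * h x) = 0 := h0.symm
        exact mul_self_eq_zero.mp ((Finset.sum_eq_zero_iff_of_nonneg h1).mp h2 x (Finset.mem_univ x))
      have hq : Qf ρ h = 0 := by
        unfold Qf
        apply Finset.sum_eq_zero; intro x _
        apply Finset.sum_eq_zero; intro y _
        rw [hz x]; ring
      rw [hq, ← h0, mul_zero]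
    · set t := ip h h with ht
      have hst : Real.sqrt t ^ 2 = t := Real.sq_sqrt h0.le
      have hspos : 0 < Real.sqrt t := Real.sqrt_pos.mpr h0
      have hmem1 : ∀ x ∉ A, (Real.sqrt t)⁻¹ * h x = 0 := fun x hx => by rw [hsh x hx, mul_zero]
      have hmem2 : ip (fun x => (Real.sqrt t)⁻¹ * h x) (fun x => (Real.sqrt t)⁻¹ * h x) = 1 := by
        rw [ip_smul, ← ht, inv_pow, hst, inv_mul_cancel₀ (ne_of_gt h0)]
      have h3 := hmax _ hmem1 hmem2
      rw [Qf_smul] at h3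
      have hss : Real.sqrt t ^ 2 * ((Real.sqrt t)⁻¹ ^ 2 * Qf ρ h) = Qf ρ h := by
        rw [← mul_assoc, ← mul_pow, mul_inv_cancel₀ (ne_of_gt hspos), one_pow, one_mul]
      calc Qf ρ h = Real.sqrt t ^ 2 * ((Real.sqrt t)⁻¹ ^ 2 * Qf ρ h) := hss.symm
        _ ≤ Real.sqrt t ^ 2 * lam := mul_le_mul_of_nonneg_left h3 (sq_nonneg _)
        _ = lam * t := by rw [hst]; ring
  by_cases hstrict : lam < (1 + ρ) / 2
  · exact ⟨lam, hlam0, hstrict, hbound⟩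
  exfalso
  push_neg at hstrict
  have F1 : ∑ S : Finset (Fin n), hat g S ^ 2 = 2 ^ n := by
    rw [← parseval, hip, mul_one]
  have F2 : ∑ S : Finset (Fin n), ρ ^ S.card * hat g S ^ 2 = 2 ^ n * lam := by
    rw [← Qf_fourier, hlam]
  have hhat0 : hat g ∅ = ∑ x ∈ A, g x := by
    unfold hat chi
    simp only [Finset.prod_empty, mul_one]
    symm
    apply Finset.sum_subset (Finset.subset_univ A)
    intro x _ hx; exact hsupp x hx
  have hsumA2 : ∑ x ∈ A, g x * g x = 1 := by
    rw [← hip]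
    unfold ip
    apply Finset.sum_subset (Finset.subset_univ A)
    intro x _ hx; rw [hsupp x hx]; ring
  have hCS : (hat g ∅) ^ 2 ≤ (A.card : ℝ) := by
    have hid := sq_diff_sum A g
    have hnn : 0 ≤ ∑ x ∈ A, ∑ y ∈ A, (g x - g y)^2 :=
      Finset.sum_nonneg fun x _ => Finset.sum_nonneg fun y _ => sq_nonneg _
    rw [hsumA2, mul_one] at hid
    rw [hhat0]
    nlinarith [hid, hnn]
  have hsplit1 : hat g ∅ ^ 2 + ∑ S ∈ (univ : Finset (Finset (Fin n))).erase ∅, hat g S ^ 2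
      = 2 ^ n := by
    rw [Finset.add_sum_erase _ (fun S => hat g S ^ 2) (Finset.mem_univ ∅)]
    exact F1
  have hsplit2 : hat g ∅ ^ 2 + ∑ S ∈ (univ : Finset (Finset (Fin n))).erase ∅,
      ρ ^ S.card * hat g S ^ 2 = 2 ^ n * lam := by
    have h := Finset.add_sum_erase (univ : Finset (Finset (Fin n)))
      (fun S => ρ ^ S.card * hat g S ^ 2) (Finset.mem_univ ∅)
    rw [F2] at h
    simpa using h
  have hle : ∑ S ∈ (univ : Finset (Finset (Fin n))).erase ∅, ρ ^ S.card * hat g S ^ 2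
      ≤ ρ * ∑ S ∈ (univ : Finset (Finset (Fin n))).erase ∅, hat g S ^ 2 := by
    rw [Finset.mul_sum]
    apply Finset.sum_le_sum
    intro S hS
    have hSne : S ≠ ∅ := (Finset.mem_erase.mp hS).1
    have hc1 : 1 ≤ S.card := Finset.card_pos.mpr (Finset.nonempty_iff_ne_empty.mpr hSne)
    have hpp : ρ ^ S.card ≤ ρ := by
      have := pow_le_pow_of_le_one hρ0.le hρ1.le hc1
      rwa [pow_one] at this
    exact mul_le_mul_of_nonneg_right hpp (sq_nonneg _)
  have heq0 : hat g ∅ ^ 2 = (A.card : ℝ) := by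
    apply le_antisymm hCS
    nlinarith [hsplit1, hsplit2, hle, hcA, hstrict, hNpos]
  have hlameq : lam = (1 + ρ) / 2 := by
    apply le_antisymm _ hstrict
    nlinarith [hsplit1, hsplit2, hle, hcA, heq0, hNpos]
  have hhigh : ∀ S : Finset (Fin n), 2 ≤ S.card → hat g S = 0 := by
    intro S hS2
    have hSne : S ≠ ∅ := by
      intro h; rw [h, Finset.card_empty] at hS2; omega
    have hmem : S ∈ (univ : Finset (Finset (Fin n))).erase ∅ :=
      Finset.mem_erase.mpr ⟨hSne, Finset.mem_univ S⟩
    have hDnn : ∀ T ∈ (univ : Finset (Finset (Fin n))).erase ∅,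
        0 ≤ (ρ - ρ ^ T.card) * hat g T ^ 2 := by
      intro T hT
      have hTne := (Finset.mem_erase.mp hT).1
      have hc1 : 1 ≤ T.card := Finset.card_pos.mpr (Finset.nonempty_iff_ne_empty.mpr hTne)
      have hpp : ρ ^ T.card ≤ ρ := by
        have := pow_le_pow_of_le_one hρ0.le hρ1.le hc1
        rwa [pow_one] at this
      nlinarith [sq_nonneg (hat g T)]
    have hDsum : ∑ T ∈ (univ : Finset (Finset (Fin n))).erase ∅,
        (ρ - ρ ^ T.card) * hat g T ^ 2 = 0 := by
      have hexp : ∑ T ∈ (univ : Finset (Finset (Fin n))).erase ∅,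
          (ρ - ρ ^ T.card) * hat g T ^ 2
          = ρ * (∑ T ∈ (univ : Finset (Finset (Fin n))).erase ∅, hat g T ^ 2)
            - ∑ T ∈ (univ : Finset (Finset (Fin n))).erase ∅, ρ ^ T.card * hat g T ^ 2 := by
        rw [Finset.mul_sum, ← Finset.sum_sub_distrib]
        apply Finset.sum_congr rfl; intro T _; ring
      have hE : ∑ T ∈ (univ : Finset (Finset (Fin n))).erase ∅, hat g T ^ 2
          = 2 ^ n - hat g ∅ ^ 2 := by linarith [hsplit1]
      have hEρ : ∑ T ∈ (univ : Finset (Finset (Fin n))).erase ∅, ρ ^ T.card * hat g T ^ 2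
          = 2 ^ n * lam - hat g ∅ ^ 2 := by linarith [hsplit2]
      rw [hexp, hE, hEρ, heq0, hlameq, hcA]
      ring
    have hterm := (Finset.sum_eq_zero_iff_of_nonneg hDnn).mp hDsum S hmem
    have hppos : 0 < ρ - ρ ^ S.card := by
      have : ρ ^ S.card < ρ ^ 1 := pow_lt_pow_right_of_lt_one₀ hρ0 hρ1 (by omega)
      rw [pow_one] at this
      linarith
    have := mul_eq_zero.mp hterm
    rcases this with h | h
    · exact absurd h (ne_of_gt hppos)
    · exact sq_eq_zero_iff.mp h
  obtain ⟨a, ha⟩ := hAne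
  have hconst : ∀ x ∈ A, g x = g a := by
    have hsq : (∑ x ∈ A, g x)^2 = (A.card : ℝ) := by rw [← hhat0]; exact heq0
    have hzero : ∑ x ∈ A, ∑ y ∈ A, (g x - g y)^2 = 0 := by
      have hid := sq_diff_sum A g
      rw [hsumA2, mul_one, hsq] at hid
      rw [hid]; ring
    intro x hx
    have h1 : ∀ x ∈ A, 0 ≤ ∑ y ∈ A, (g x - g y)^2 :=
      fun x _ => Finset.sum_nonneg fun y _ => sq_nonneg _
    have h2 := (Finset.sum_eq_zero_iff_of_nonneg h1).mp hzero x hx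
    have h3 := (Finset.sum_eq_zero_iff_of_nonneg (fun y _ => sq_nonneg _)).mp h2 a ha
    have h4 := sq_eq_zero_iff.mp h3
    linarith [h4]
  set c := g a with hc
  have hhat0c : hat g ∅ = (A.card : ℝ) * c := by
    rw [hhat0, Finset.sum_congr rfl hconst, Finset.sum_const, nsmul_eq_mul]
  have hcne : c ≠ 0 := by
    intro h
    rw [h, mul_zero] at hhat0c
    rw [hhat0c] at heq0
    nlinarith [hcApos, heq0]
  set e : Fin n → ℝ := fun i => hat g {i} with he
  set a0 := hat g ∅ with ha0
  have hdec : ∀ x : Cube n, (2:ℝ)^n * g x = a0 + ∑ i, e i * sgn (x i) := by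
    intro x
    rw [inversion]
    have hnotmem : ∅ ∉ univ.image fun i : Fin n => ({i} : Finset (Fin n)) := by simp
    have hsubT : insert ∅ (univ.image fun i : Fin n => ({i} : Finset (Fin n))) ⊆
        (univ : Finset (Finset (Fin n))) := Finset.subset_univ _
    have hvan : ∀ S ∈ (univ : Finset (Finset (Fin n))),
        S ∉ insert ∅ (univ.image fun i : Fin n => ({i} : Finset (Fin n))) →
        hat g S * chi S x = 0 := by
      intro S _ hST
      have h2 : 2 ≤ S.card := by
        by_contra hlt
        push_neg at hlt
        have : S.card = 0 ∨ S.card = 1 := by omega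
        rcases this with h0 | h1
        · exact hST (by rw [Finset.card_eq_zero.mp h0]; exact Finset.mem_insert_self _ _)
        · obtain ⟨i, rfl⟩ := Finset.card_eq_one.mp h1
          exact hST (Finset.mem_insert_of_mem
            (Finset.mem_image_of_mem _ (Finset.mem_univ i)))
      rw [hhigh S h2, zero_mul]
    rw [← Finset.sum_subset hsubT hvan]
    rw [Finset.sum_insert hnotmem,
      Finset.sum_image (fun i _ j _ h => Finset.singleton_injective h)]
    unfold chi
    simp [Finset.prod_empty, Finset.prod_singleton]
    rfl
  set Hf : Cube n → ℝ := fun x => a0 + ∑ i, e i * sgn (x i) with hHf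
  set C : ℝ := 2^n * c with hCdef
  have hCne : C ≠ 0 := by
    intro h
    rcases mul_eq_zero.mp h with h1 | h1
    · exact absurd h1 (ne_of_gt hNpos)
    · exact hcne h1
  have hmemval : ∀ x : Cube n, (x ∈ A → Hf x = C) ∧ (x ∉ A → Hf x = 0) := by
    intro x
    constructor
    · intro hx
      have := hdec x
      rw [hconst x hx] at this
      simp only [hHf]
      rw [← this, hCdef]
    · intro hx
      have := hdec x
      rw [hsupp x hx, mul_zero] at this
      simp only [hHf]
      rw [← this]
  have hvals : ∀ x : Cube n, Hf x = 0 ∨ Hf x = C := by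
    intro x; by_cases hx : x ∈ A
    · exact Or.inr ((hmemval x).1 hx)
    · exact Or.inl ((hmemval x).2 hx)
  have hiff : ∀ x : Cube n, Hf x = C ↔ x ∈ A := by
    intro x
    constructor
    · intro h; by_contra hx
      rw [(hmemval x).2 hx] at h
      exact hCne h.symm
    · exact (hmemval x).1
  have hupd : ∀ (x : Cube n) (i : Fin n) (b : Bool),
      Hf (Function.update x i b) = Hf x - e i * sgn (x i) + e i * sgn b := by
    intro x i b
    simp only [hHf]
    have hfun : (fun l => e l * sgn (Function.update x i b l))
        = Function.update (fun l => e l * sgn (x l)) i (e i * sgn b) := by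
      funext l
      rcases eq_or_ne l i with rfl | hl
      · simp
      · simp [Function.update_of_ne hl]
    rw [hfun, Finset.sum_update_of_mem (Finset.mem_univ i),
      Finset.sum_eq_sum_sdiff_singleton_add (Finset.mem_univ i) (fun l => e l * sgn (x l))]
    ring
  have hsgnT : sgn true = 1 := rfl
  have hsgnF : sgn false = -1 := by simp [sgn]
  have hflip1 : ∀ i : Fin n, 2 * e i = 0 ∨ 2 * e i = C ∨ 2 * e i = -C := by
    intro i
    have h1 := hupd (fun _ => true) i false
    rw [hsgnF] at h1
    rw [show sgn ((fun _ : Fin n => true) i) = 1 from hsgnT] at h1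
    have h2 := hvals (Function.update (fun _ => true) i false)
    have h3 := hvals (fun _ => true)
    obtain ⟨HT, hHT⟩ : ∃ v : ℝ, Hf (fun _ : Fin n => true) = v := ⟨_, rfl⟩
    obtain ⟨Hu, hHu⟩ : ∃ v : ℝ, Hf (Function.update (fun _ : Fin n => true) i false) = v :=
      ⟨_, rfl⟩
    rw [hHT] at h1 h3
    rw [hHu] at h1 h2
    rcases h2 with h2 | h2 <;> rcases h3 with h3 | h3
    · left; linarith
    · right; left; linarith
    · right; right; linarith
    · left; linarith
  have hflip2 : ∀ i j : Fin n, i ≠ j →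
      (2*e i + 2*e j = 0 ∨ 2*e i + 2*e j = C ∨ 2*e i + 2*e j = -C) ∧
      (2*e i - 2*e j = 0 ∨ 2*e i - 2*e j = C ∨ 2*e i - 2*e j = -C) := by
    intro i j hij
    have hA1 := hupd (fun _ => true) i false
    rw [hsgnF] at hA1
    rw [show sgn ((fun _ : Fin n => true) i) = 1 from hsgnT] at hA1
    have hA2 := hupd (Function.update (fun _ => true) i false) j false
    have hxj : (Function.update (fun _ : Fin n => true) i false) j = true :=
      Function.update_of_ne (Ne.symm hij) _ _
    rw [hxj, hsgnT, hsgnF] at hA2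
    have hB := hupd (fun _ => true) j false
    rw [hsgnF] at hB
    rw [show sgn ((fun _ : Fin n => true) j) = 1 from hsgnT] at hB
    have h2 := hvals (Function.update (Function.update (fun _ => true) i false) j false)
    have h3 := hvals (fun _ => true)
    have h4 := hvals (Function.update (fun _ => true) i false)
    have h5 := hvals (Function.update (fun _ => true) j false)
    obtain ⟨HT, hHT⟩ : ∃ v : ℝ, Hf (fun _ : Fin n => true) = v := ⟨_, rfl⟩
    obtain ⟨Hu, hHu⟩ : ∃ v : ℝ, Hf (Function.update (fun _ : Fin n => true) i false) = v :=
      ⟨_, rfl⟩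
    obtain ⟨Hv, hHv⟩ : ∃ v : ℝ, Hf (Function.update (fun _ : Fin n => true) j false) = v :=
      ⟨_, rfl⟩
    obtain ⟨Huv, hHuv⟩ : ∃ v : ℝ,
        Hf (Function.update (Function.update (fun _ : Fin n => true) i false) j false) = v :=
      ⟨_, rfl⟩
    rw [hHT] at hA1 hB h3
    rw [hHu] at hA1 hA2 h4
    rw [hHv] at hB h5
    rw [hHuv] at hA2 h2
    constructor
    · rcases h2 with h2 | h2 <;> rcases h3 with h3 | h3
      · left; linarith
      · right; left; linarith
      · right; right; linarith
      · left; linarith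
    · rcases h4 with h4 | h4 <;> rcases h5 with h5 | h5
      · left; linarith
      · right; left; linarith
      · right; right; linarith
      · left; linarith
  have hone : ∃ i, e i ≠ 0 := by
    by_contra hall
    push_neg at hall
    obtain ⟨xb, hxb⟩ : ∃ x : Cube n, x ∉ A := by
      by_contra hcon; push_neg at hcon
      have huniv : A = univ := Finset.eq_univ_iff_forall.mpr hcon
      have hcu : ((univ : Finset (Cube n)).card : ℝ) = 2 ^ n := by
        rw [Finset.card_univ]
        simp [Fintype.card_fun]
      rw [huniv, hcu] at hcA
      nlinarith [hNpos]
    have h0 : Hf xb = 0 := (hmemval xb).2 hxb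
    have hCa : Hf a = C := (hmemval a).1 ha
    have hconst' : ∀ x : Cube n, Hf x = a0 := by
      intro x
      simp only [hHf]
      rw [Finset.sum_eq_zero (fun i _ => by rw [hall i]; ring)]
      ring
    rw [hconst'] at h0 hCa
    exact hCne (by linarith)
  obtain ⟨i, hei⟩ := hone
  have hothers : ∀ j, j ≠ i → e j = 0 := by
    intro j hj
    by_contra hej
    have h1 := hflip1 i
    have h2 := hflip1 j
    have h3 := hflip2 i j (fun h => hj (h.symm))
    have h1' : 2 * e i = C ∨ 2 * e i = -C := by
      rcases h1 with h | h
      · exact absurd (by linarith : e i = 0) hei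
      · exact h
    have h2' : 2 * e j = C ∨ 2 * e j = -C := by
      rcases h2 with h | h
      · exact absurd (by linarith : e j = 0) hej
      · exact h
    rcases h1' with h1' | h1' <;> rcases h2' with h2' | h2'
    · rcases h3.1 with h | h | h <;> exact hCne (by linarith)
    · rcases h3.2 with h | h | h <;> exact hCne (by linarith)
    · rcases h3.2 with h | h | h <;> exact hCne (by linarith)
    · rcases h3.1 with h | h | h <;> exact hCne (by linarith)
  have hcollapse : ∀ x : Cube n, Hf x = a0 + e i * sgn (x i) := by
    intro x
    simp only [hHf]
    congr 1
    apply Finset.sum_eq_single i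
    · intro j _ hj; rw [hothers j hj]; ring
    · intro h; exact absurd (Finset.mem_univ i) h
  have hT := hvals (fun _ => true)
  have hF := hvals (fun _ => false)
  rw [hcollapse] at hT hF
  rw [show sgn ((fun _ : Fin n => true) i) = 1 from hsgnT] at hT
  rw [show sgn ((fun _ : Fin n => false) i) = -1 from hsgnF] at hF
  apply hnd
  rcases hT with hT | hT <;> rcases hF with hF | hF
  · exact absurd (by linarith : e i = 0) hei
  · refine ⟨i, Or.inr fun x => ?_⟩
    constructor
    · intro hx
      have hxC := (hiff x).mpr hx
      rw [hcollapse x] at hxC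
      cases hxi : x i
      · rfl
      · rw [hxi, hsgnT] at hxC
        exact absurd (by linarith : C = 0) hCne
    · intro hx
      apply (hiff x).mp
      rw [hcollapse x, hx, hsgnF]
      linarith
  · refine ⟨i, Or.inl fun x => ?_⟩
    constructor
    · intro hx
      have hxC := (hiff x).mpr hx
      rw [hcollapse x] at hxC
      cases hxi : x i
      · rw [hxi, hsgnF] at hxC
        exact absurd (by linarith : C = 0) hCne
      · rfl
    · intro hx
      apply (hiff x).mp
      rw [hcollapse x, hx, hsgnT]
      linarith
  · exact absurd (by linarith : e i = 0) hei

end PathGap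

open PathGap in
/-- **Exponential gap for non-dictator protocols on the path.** For every
`ρ ∈ (0,1)` and `n ≥ 1` there is `c = c(ρ,n) ∈ (0,1)` such that: for the
path-indexed Markov chain `x_0, …, x_k` on `{-1,1}^n` (`x_0` uniform, each `x_j`
a `ρ`-correlated copy of `x_{j-1}`), every balanced `f : {-1,1}^n → {-1,1}` that
is neither a dictator nor an anti-dictator, and every `k ≥ 1`:
`Pr[f(x_0) = f(x_1) = ⋯ = f(x_k)] ≤ (1/2 + ρ/2)^k c^k`. -/
theorem path_nondictator_exponential_gap (ρ : ℝ) (hρ0 : 0 < ρ) (hρ1 : ρ < 1)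
    (n : ℕ) (hn : 1 ≤ n) :
    ∃ c : ℝ, 0 < c ∧ c < 1 ∧
      ∀ f : (Fin n → Bool) → Bool, IsBalanced f →
        (¬ ∃ i : Fin n, (∀ x, f x = x i) ∨ (∀ x, f x = !x i)) →
        ∀ k : ℕ, 1 ≤ k →
        (∑ x : Fin (k + 1) → Fin n → Bool,
            if ∀ j, f (x j) = f (x 0) then
              (∏ j : Fin k, corrWeight ρ (x j.castSucc) (x j.succ)) / 2 ^ n
            else 0) ≤
          (1 / 2 + ρ / 2) ^ k * c ^ k := by
  classical
  have hhalf : (0:ℝ) < (1 + ρ) / 2 := by linarith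
  have hNpos : (0:ℝ) < 2 ^ n := by positivity
  have hcube : Fintype.card (Cube n) = 2 ^ n := by
    simp [Fintype.card_fun]
  have key : ∀ f : (Fin n → Bool) → Bool, ∃ lam : ℝ, 0 ≤ lam ∧ lam < (1 + ρ) / 2 ∧
      ((IsBalanced f ∧ ¬ ∃ i : Fin n, (∀ x, f x = x i) ∨ (∀ x, f x = !x i)) →
        (∀ g : Cube n → ℝ, (∀ x ∉ (univ.filter fun x => f x = true), g x = 0) →
          Qf ρ g ≤ lam * ip g g) ∧
        (∀ g : Cube n → ℝ, (∀ x ∉ (univ.filter fun x => f x = false), g x = 0) →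
          Qf ρ g ≤ lam * ip g g)) := by
    intro f
    by_cases hval : IsBalanced f ∧ ¬ ∃ i : Fin n, (∀ x, f x = x i) ∨ (∀ x, f x = !x i)
    · obtain ⟨hbal, hnd⟩ := hval
      have hA1card : 2 * (univ.filter fun x : Cube n => f x = true).card = 2 ^ n := hbal
      have hA2card : 2 * (univ.filter fun x : Cube n => f x = false).card = 2 ^ n := by
        have hsum := Finset.card_filter_add_card_filter_not
          (s := (univ : Finset (Cube n))) (p := fun x => f x = true)
        rw [Finset.card_univ, hcube] at hsum
        have hco : (univ.filter fun x : Cube n => ¬ (f x = true))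
            = (univ.filter fun x : Cube n => f x = false) := by
          apply Finset.filter_congr
          intro x _
          cases hfx : f x <;> simp
        rw [hco] at hsum
        omega
      have hnd1 : ¬ ∃ i : Fin n, (∀ x : Cube n, x ∈ (univ.filter fun x => f x = true) ↔
          x i = true) ∨ (∀ x : Cube n, x ∈ (univ.filter fun x => f x = true) ↔ x i = false) := by
        rintro ⟨i, h | h⟩
        · refine hnd ⟨i, Or.inl fun x => ?_⟩
          have := h x
          simp only [Finset.mem_filter, Finset.mem_univ, true_and] at this
          cases hfx : f x <;> cases hxi : x i <;> simp_all
        · refine hnd ⟨i, Or.inr fun x => ?_⟩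
          have := h x
          simp only [Finset.mem_filter, Finset.mem_univ, true_and] at this
          cases hfx : f x <;> cases hxi : x i <;> simp_all
      have hnd2 : ¬ ∃ i : Fin n, (∀ x : Cube n, x ∈ (univ.filter fun x => f x = false) ↔
          x i = true) ∨ (∀ x : Cube n, x ∈ (univ.filter fun x => f x = false) ↔ x i = false) := by
        rintro ⟨i, h | h⟩
        · refine hnd ⟨i, Or.inr fun x => ?_⟩
          have := h x
          simp only [Finset.mem_filter, Finset.mem_univ, true_and] at this
          cases hfx : f x <;> cases hxi : x i <;> simp_all
        · refine hnd ⟨i, Or.inl fun x => ?_⟩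
          have := h x
          simp only [Finset.mem_filter, Finset.mem_univ, true_and] at this
          cases hfx : f x <;> cases hxi : x i <;> simp_all
      obtain ⟨l1, hl10, hl1lt, hl1⟩ := exists_lam ρ hρ0 hρ1 hn _ hA1card hnd1
      obtain ⟨l2, hl20, hl2lt, hl2⟩ := exists_lam ρ hρ0 hρ1 hn _ hA2card hnd2
      refine ⟨max l1 l2, le_max_of_le_left hl10, max_lt hl1lt hl2lt, fun _ => ⟨?_, ?_⟩⟩
      · intro g hg
        exact (hl1 g hg).trans (mul_le_mul_of_nonneg_right (le_max_left _ _) (ip_nonneg g))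
      · intro g hg
        exact (hl2 g hg).trans (mul_le_mul_of_nonneg_right (le_max_right _ _) (ip_nonneg g))
    · exact ⟨0, le_refl 0, hhalf, fun h => absurd h hval⟩
  choose lamf hlam0 hlamlt hlamb using key
  have hune : (univ : Finset ((Fin n → Bool) → Bool)).Nonempty := Finset.univ_nonempty
  set c : ℝ := (univ.sup' hune fun f => lamf f / ((1 + ρ) / 2)) ⊔ (1/2) with hc
  have hcpos : 0 < c := lt_of_lt_of_le (by norm_num) (le_max_right _ _)
  have hclt : c < 1 := by
    apply max_lt _ (by norm_num)
    rw [Finset.sup'_lt_iff]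
    intro f _
    rw [div_lt_one hhalf]
    exact hlamlt f
  refine ⟨c, hcpos, hclt, ?_⟩
  intro f hbal hnd k _
  set A1 : Finset (Cube n) := univ.filter fun x => f x = true with hA1
  set A2 : Finset (Cube n) := univ.filter fun x => f x = false with hA2
  obtain ⟨hb1, hb2⟩ := hlamb f ⟨hbal, hnd⟩
  have hlamc : lamf f ≤ (1 + ρ) / 2 * c := by
    have h1 : lamf f / ((1 + ρ) / 2) ≤ c :=
      le_trans (Finset.le_sup' (fun f => lamf f / ((1 + ρ) / 2)) (Finset.mem_univ f))
        (le_max_left _ _)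
    rw [div_le_iff₀ hhalf] at h1
    linarith
  have hpoint : ∀ x : Fin (k + 1) → Cube n,
      (if ∀ j, f (x j) = f (x 0) then
        (∏ j : Fin k, corrWeight ρ (x j.castSucc) (x j.succ)) / 2 ^ n else 0)
      = (if ∀ j, x j ∈ A1 then ∏ j : Fin k, corrWeight ρ (x j.castSucc) (x j.succ) else 0)
          / 2 ^ n
        + (if ∀ j, x j ∈ A2 then ∏ j : Fin k, corrWeight ρ (x j.castSucc) (x j.succ) else 0)
          / 2 ^ n := by
    intro x
    have hm1 : (∀ j, x j ∈ A1) ↔ ∀ j, f (x j) = true := by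
      simp [hA1, Finset.mem_filter]
    have hm2 : (∀ j, x j ∈ A2) ↔ ∀ j, f (x j) = false := by
      simp [hA2, Finset.mem_filter]
    by_cases h1 : ∀ j, f (x j) = true
    · have hcond : ∀ j, f (x j) = f (x 0) := fun j => by rw [h1 j, h1 0]
      have hnot2 : ¬ ∀ j, f (x j) = false := fun h => by
        have := h 0; rw [h1 0] at this; exact Bool.noConfusion this
      rw [if_pos hcond, if_pos (hm1.mpr h1), if_neg (fun h => hnot2 (hm2.mp h))]
      ring
    · by_cases h2 : ∀ j, f (x j) = false
      · have hcond : ∀ j, f (x j) = f (x 0) := fun j => by rw [h2 j, h2 0]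
        rw [if_pos hcond, if_neg (fun h => h1 (hm1.mp h)), if_pos (hm2.mpr h2)]
        ring
      · have hcond : ¬ ∀ j, f (x j) = f (x 0) := by
          intro h
          cases hfx : f (x 0)
          · exact h2 fun j => by rw [h j, hfx]
          · exact h1 fun j => by rw [h j, hfx]
        rw [if_neg hcond, if_neg (fun h => h1 (hm1.mp h)), if_neg (fun h => h2 (hm2.mp h))]
        ring
  have hA2card : 2 * A2.card = 2 ^ n := by
    have hsum := Finset.card_filter_add_card_filter_not
      (s := (univ : Finset (Cube n))) (p := fun x => f x = true)
    rw [Finset.card_univ, hcube] at hsum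
    have hco : (univ.filter fun x : Cube n => ¬ (f x = true)) = A2 := by
      apply Finset.filter_congr
      intro x _
      cases hfx : f x <;> simp
    rw [hco] at hsum
    have : A1.card + A2.card = 2 ^ n := hsum
    have hb : 2 * A1.card = 2 ^ n := hbal
    omega
  have hcards : (A1.card : ℝ) + (A2.card : ℝ) = 2 ^ n := by
    have hb : 2 * A1.card = 2 ^ n := hbal
    have hs : A1.card + A2.card = 2 ^ n := by omega
    have := congrArg (fun m : ℕ => (m : ℝ)) hs
    push_cast at this
    linarith
  calc (∑ x : Fin (k + 1) → Fin n → Bool,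
        if ∀ j, f (x j) = f (x 0) then
          (∏ j : Fin k, corrWeight ρ (x j.castSucc) (x j.succ)) / 2 ^ n else 0)
      = (∑ x : Fin (k + 1) → Cube n,
          if ∀ j, x j ∈ A1 then ∏ j : Fin k, corrWeight ρ (x j.castSucc) (x j.succ) else 0)
            / 2 ^ n
        + (∑ x : Fin (k + 1) → Cube n,
          if ∀ j, x j ∈ A2 then ∏ j : Fin k, corrWeight ρ (x j.castSucc) (x j.succ) else 0)
            / 2 ^ n := by
        rw [Finset.sum_congr rfl fun x _ => hpoint x, Finset.sum_add_distrib,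
          Finset.sum_div, Finset.sum_div]
    _ = ip (ind A1) ((opM ρ A1)^[k] (ind A1)) / 2 ^ n
        + ip (ind A2) ((opM ρ A2)^[k] (ind A2)) / 2 ^ n := by
        rw [path_eq, path_eq]
    _ ≤ (lamf f ^ k * A1.card) / 2 ^ n + (lamf f ^ k * A2.card) / 2 ^ n := by
        have hp1 := power_bound ρ (lamf f) hρ0.le (hlam0 f) A1 hb1 k
        have hp2 := power_bound ρ (lamf f) hρ0.le (hlam0 f) A2 hb2 k
        rw [ip_ind_ind] at hp1 hp2
        gcongr
    _ = lamf f ^ k * (((A1.card : ℝ) + (A2.card : ℝ)) / 2 ^ n) := by ring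
    _ = lamf f ^ k := by rw [hcards]; field_simp
    _ ≤ ((1 + ρ) / 2 * c) ^ k := pow_le_pow_left₀ (hlam0 f) hlamc k
    _ = (1 / 2 + ρ / 2) ^ k * c ^ k := by
        rw [mul_pow]
        congr 2
        ring
end
end

section
/- Bound for inhomogeneous Markov chains. Let S be a finite nonempty set, π a probability distribution on S with π(x) > 0 for all x, and M_1,…,M_k stochastic matrices on S, each reversible with respect to π. Suppose δ_1,…,δ_k ∈ (0,1] are such that for each i and every f : S → ℝ with Σ_x π(x)f(x) = 0, one has Σ_x π(x)·(M_i f)(x)² ≤ (1-δ_i)²·Σ_x π(x)·f(x)², where (M_i f)(x) = Σ_y M_i(x,y)f(y). Then for all subsets A_0, A_1, …, A_k ⊆ S: Σ_{x_0 ∈ A_0} Σ_{x_1 ∈ A_1} ⋯ Σ_{x_k ∈ A_k} π(x_0)·∏_{i=1}^k M_i(x_{i-1}, x_i) ≤ √(π(A_0))·√(π(A_k))·∏_{i=1}^k [ 1 - δ_i·( 1 - √(π(A_{i-1}))·√(π(A_i)) ) ]. -/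
open Finset

lemma l2_triangle {S : Type*} [Fintype S] (u v : S → ℝ) :
    Real.sqrt (∑ x, (u x + v x) ^ 2) ≤
      Real.sqrt (∑ x, u x ^ 2) + Real.sqrt (∑ x, v x ^ 2) := by
  have ha : (0:ℝ) ≤ ∑ x, u x ^ 2 := Finset.sum_nonneg fun x _ => sq_nonneg _
  have hb : (0:ℝ) ≤ ∑ x, v x ^ 2 := Finset.sum_nonneg fun x _ => sq_nonneg _
  have hcs : ∑ x, u x * v x ≤ Real.sqrt (∑ x, u x ^ 2) * Real.sqrt (∑ x, v x ^ 2) := by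
    calc ∑ x, u x * v x ≤ |∑ x, u x * v x| := le_abs_self _
    _ = Real.sqrt ((∑ x, u x * v x) ^ 2) := (Real.sqrt_sq_eq_abs _).symm
    _ ≤ Real.sqrt ((∑ x, u x ^ 2) * ∑ x, v x ^ 2) :=
        Real.sqrt_le_sqrt (Finset.sum_mul_sq_le_sq_mul_sq _ _ _)
    _ = _ := Real.sqrt_mul ha _
  have key : ∑ x, (u x + v x) ^ 2 ≤
      (Real.sqrt (∑ x, u x ^ 2) + Real.sqrt (∑ x, v x ^ 2)) ^ 2 := by
    have expand : ∑ x, (u x + v x) ^ 2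
        = (∑ x, u x ^ 2) + 2 * (∑ x, u x * v x) + ∑ x, v x ^ 2 := by
      rw [Finset.mul_sum, ← Finset.sum_add_distrib, ← Finset.sum_add_distrib]
      congr 1; ext x; ring
    rw [expand, add_sq, Real.sq_sqrt ha, Real.sq_sqrt hb]
    nlinarith [hcs]
  calc Real.sqrt (∑ x, (u x + v x) ^ 2) ≤ Real.sqrt ((Real.sqrt (∑ x, u x ^ 2) + Real.sqrt (∑ x, v x ^ 2)) ^ 2) := Real.sqrt_le_sqrt key
  _ = _ := Real.sqrt_sq (by positivity)

lemma wl2_triangle {S : Type*} [Fintype S] (π f g : S → ℝ) (hπ : ∀ x, 0 ≤ π x) :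
    Real.sqrt (∑ x, π x * (f x + g x) ^ 2) ≤
      Real.sqrt (∑ x, π x * f x ^ 2) + Real.sqrt (∑ x, π x * g x ^ 2) := by
  have h : ∀ (h : S → ℝ), ∑ x, π x * h x ^ 2 = ∑ x, (Real.sqrt (π x) * h x) ^ 2 := by
    intro h; congr 1; ext x; rw [mul_pow, Real.sq_sqrt (hπ x)]
  rw [h f, h g, h (fun x => f x + g x)]
  have : ∀ x, Real.sqrt (π x) * (f x + g x) = Real.sqrt (π x) * f x + Real.sqrt (π x) * g x :=
    fun x => by ring
  simp_rw [this]
  exact l2_triangle _ _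

lemma key_step {S : Type*} [Fintype S] [DecidableEq S]
    (π : S → ℝ) (hπ : ∀ x, 0 ≤ π x) (hπsum : ∑ x, π x = 1)
    (m : S → S → ℝ) (hmrow : ∀ x, ∑ y, m x y = 1)
    (hrev : ∀ x y, π x * m x y = π y * m y x)
    (δ : ℝ) (hδ0 : 0 ≤ δ) (hδ1 : δ ≤ 1)
    (hgap : ∀ f : S → ℝ, (∑ x, π x * f x) = 0 →
      ∑ x, π x * (∑ y, m x y * f y) ^ 2 ≤ (1 - δ) ^ 2 * ∑ x, π x * f x ^ 2)
    (A B : Finset S) (f : S → ℝ) (hsupp : ∀ x ∉ B, f x = 0) :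
    Real.sqrt (∑ x, π x * (if x ∈ A then ∑ y, m x y * f y else 0) ^ 2) ≤
      (1 - δ * (1 - Real.sqrt (∑ a ∈ A, π a) * Real.sqrt (∑ a ∈ B, π a))) *
        Real.sqrt (∑ x, π x * f x ^ 2) := by
  set c : ℝ := ∑ x, π x * f x with hc
  set nf : ℝ := Real.sqrt (∑ x, π x * f x ^ 2) with hnf
  have hnfsq : nf ^ 2 = ∑ x, π x * f x ^ 2 :=
    Real.sq_sqrt (Finset.sum_nonneg fun x _ => mul_nonneg (hπ x) (sq_nonneg _))
  have hnf0 : 0 ≤ nf := Real.sqrt_nonneg _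
  set g : S → ℝ := fun x => f x - c with hgdef
  -- g has mean zero
  have hg0 : ∑ x, π x * g x = 0 := by
    simp only [hgdef, mul_sub, Finset.sum_sub_distrib, ← Finset.sum_mul, hπsum]
    simp [hc]
  -- sum of π g²
  have hgsq : ∑ x, π x * g x ^ 2 = (∑ x, π x * f x ^ 2) - c ^ 2 := by
    have : ∀ x, π x * g x ^ 2 = π x * f x ^ 2 - 2 * c * (π x * f x) + c ^ 2 * π x := by
      intro x; simp only [hgdef]; ring
    rw [Finset.sum_congr rfl fun x _ => this x]
    rw [Finset.sum_add_distrib, Finset.sum_sub_distrib, ← Finset.mul_sum, ← Finset.mul_sum,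
      hπsum, ← hc]
    ring
  -- M f = M g + c
  have hmf : ∀ x, (∑ y, m x y * f y) = (∑ y, m x y * g y) + c := by
    intro x
    have : ∀ y, m x y * f y = m x y * g y + m x y * c := by
      intro y; simp only [hgdef]; ring
    rw [Finset.sum_congr rfl fun y _ => this y, Finset.sum_add_distrib, ← Finset.sum_mul,
      hmrow, one_mul]
  -- M g has mean zero
  have hMg0 : ∑ x, π x * (∑ y, m x y * g y) = 0 := by
    have e1 : ∀ x, π x * (∑ y, m x y * g y) = ∑ y, π x * m x y * g y := by
      intro x; rw [Finset.mul_sum]; congr 1; ext y; ring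
    rw [Finset.sum_congr rfl fun x _ => e1 x, Finset.sum_comm]
    have e2 : ∀ y, ∑ x, π x * m x y * g y = π y * g y := by
      intro y
      have : ∀ x, π x * m x y * g y = π y * (m y x * g y) := by
        intro x; rw [hrev x y]; ring
      rw [Finset.sum_congr rfl fun x _ => this x, ← Finset.mul_sum, ← Finset.sum_mul, hmrow]
      ring
    rw [Finset.sum_congr rfl fun y _ => e2 y, hg0]
  -- Claim A: ∑ π u² ≤ (1-δ)² nf², where u = Mf - δc
  have claimA : ∑ x, π x * ((∑ y, m x y * f y) - δ * c) ^ 2 ≤ ((1 - δ) * nf) ^ 2 := by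
    have e : ∀ x, π x * ((∑ y, m x y * f y) - δ * c) ^ 2
        = π x * (∑ y, m x y * g y) ^ 2
          + 2 * ((1 - δ) * c) * (π x * (∑ y, m x y * g y))
          + ((1 - δ) * c) ^ 2 * π x := by
      intro x; rw [hmf x]; ring
    rw [Finset.sum_congr rfl fun x _ => e x, Finset.sum_add_distrib, Finset.sum_add_distrib,
      ← Finset.mul_sum, hMg0, ← Finset.mul_sum, hπsum, mul_zero, add_zero, mul_one]
    have := hgap g hg0
    rw [hgsq] at this
    nlinarith [this, hnfsq]
  -- |c| ≤ √(π B) * nf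
  have hcbound : |c| ≤ Real.sqrt (∑ a ∈ B, π a) * nf := by
    have hcB : c = ∑ x ∈ B, Real.sqrt (π x) * (Real.sqrt (π x) * f x) := by
      rw [hc, ← Finset.sum_subset (Finset.subset_univ B)]
      · congr 1; ext x; rw [← mul_assoc, Real.mul_self_sqrt (hπ x)]
      · intro x _ hx; rw [hsupp x hx, mul_zero]
    have cs := Finset.sum_mul_sq_le_sq_mul_sq B (fun x => Real.sqrt (π x))
      (fun x => Real.sqrt (π x) * f x)
    have e1 : ∑ x ∈ B, Real.sqrt (π x) ^ 2 = ∑ a ∈ B, π a := by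
      congr 1; ext x; exact Real.sq_sqrt (hπ x)
    have e2 : ∑ x ∈ B, (Real.sqrt (π x) * f x) ^ 2 ≤ ∑ x, π x * f x ^ 2 := by
      apply Finset.sum_le_sum_of_subset_of_nonneg (Finset.subset_univ B) ?_ |>.trans_eq ?_
      · intro x _ _; positivity
      · congr 1; ext x; rw [mul_pow, Real.sq_sqrt (hπ x)]
    have hBnn : (0:ℝ) ≤ ∑ a ∈ B, π a := Finset.sum_nonneg fun x _ => hπ x
    have : c ^ 2 ≤ (∑ a ∈ B, π a) * nf ^ 2 := by
      rw [hcB, hnfsq]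
      calc (∑ x ∈ B, Real.sqrt (π x) * (Real.sqrt (π x) * f x)) ^ 2
          ≤ (∑ x ∈ B, Real.sqrt (π x) ^ 2) * ∑ x ∈ B, (Real.sqrt (π x) * f x) ^ 2 := cs
        _ ≤ (∑ a ∈ B, π a) * ∑ x, π x * f x ^ 2 := by
            rw [e1]; exact mul_le_mul_of_nonneg_left e2 hBnn
    calc |c| = Real.sqrt (c ^ 2) := (Real.sqrt_sq_eq_abs _).symm
      _ ≤ Real.sqrt ((∑ a ∈ B, π a) * nf ^ 2) := Real.sqrt_le_sqrt this
      _ = Real.sqrt (∑ a ∈ B, π a) * nf := by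
          rw [Real.sqrt_mul hBnn, Real.sqrt_sq hnf0]
  -- decompose the target
  have hsplit : ∀ x, (if x ∈ A then ∑ y, m x y * f y else 0)
      = (if x ∈ A then (∑ y, m x y * f y) - δ * c else 0) + (if x ∈ A then δ * c else 0) := by
    intro x; by_cases h : x ∈ A <;> simp [h]
  have hAnn : (0:ℝ) ≤ ∑ a ∈ A, π a := Finset.sum_nonneg fun x _ => hπ x
  have step1 : Real.sqrt (∑ x, π x * (if x ∈ A then ∑ y, m x y * f y else 0) ^ 2)
      ≤ Real.sqrt (∑ x, π x * (if x ∈ A then (∑ y, m x y * f y) - δ * c else 0) ^ 2)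
        + Real.sqrt (∑ x, π x * (if x ∈ A then δ * c else 0) ^ 2) := by
    simp_rw [hsplit]
    exact wl2_triangle π _ _ hπ
  have step2 : Real.sqrt (∑ x, π x * (if x ∈ A then (∑ y, m x y * f y) - δ * c else 0) ^ 2)
      ≤ (1 - δ) * nf := by
    have mono : ∑ x, π x * (if x ∈ A then (∑ y, m x y * f y) - δ * c else 0) ^ 2
        ≤ ∑ x, π x * ((∑ y, m x y * f y) - δ * c) ^ 2 := by
      apply Finset.sum_le_sum
      intro x _
      by_cases h : x ∈ A
      · simp [h]
      · simp only [h, if_false]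
        simp only [ne_eq, OfNat.ofNat_ne_zero, not_false_eq_true, zero_pow, mul_zero]
        exact mul_nonneg (hπ x) (sq_nonneg _)
    calc Real.sqrt (∑ x, π x * (if x ∈ A then (∑ y, m x y * f y) - δ * c else 0) ^ 2)
        ≤ Real.sqrt (((1 - δ) * nf) ^ 2) := Real.sqrt_le_sqrt (mono.trans claimA)
      _ = (1 - δ) * nf := Real.sqrt_sq (by nlinarith)
  have step3 : Real.sqrt (∑ x, π x * (if x ∈ A then δ * c else 0) ^ 2)
      ≤ δ * (Real.sqrt (∑ a ∈ A, π a) * Real.sqrt (∑ a ∈ B, π a) * nf) := by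
    have e : ∑ x, π x * (if x ∈ A then δ * c else 0) ^ 2 = (δ * c) ^ 2 * ∑ a ∈ A, π a := by
      rw [← Finset.sum_subset (Finset.subset_univ A) (fun x _ hx => by simp [hx])]
      have e2 : ∀ x ∈ A, π x * (if x ∈ A then δ * c else 0) ^ 2 = (δ * c) ^ 2 * π x :=
        fun x hx => by rw [if_pos hx]; ring
      rw [Finset.sum_congr rfl e2, ← Finset.mul_sum]
    rw [e, Real.sqrt_mul (sq_nonneg _), Real.sqrt_sq_eq_abs, abs_mul, abs_of_nonneg hδ0]
    calc δ * |c| * Real.sqrt (∑ a ∈ A, π a)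
        ≤ δ * (Real.sqrt (∑ a ∈ B, π a) * nf) * Real.sqrt (∑ a ∈ A, π a) := by
          apply mul_le_mul_of_nonneg_right (mul_le_mul_of_nonneg_left hcbound hδ0)
            (Real.sqrt_nonneg _)
      _ = δ * (Real.sqrt (∑ a ∈ A, π a) * Real.sqrt (∑ a ∈ B, π a) * nf) := by ring
  calc Real.sqrt (∑ x, π x * (if x ∈ A then ∑ y, m x y * f y else 0) ^ 2)
      ≤ (1 - δ) * nf + δ * (Real.sqrt (∑ a ∈ A, π a) * Real.sqrt (∑ a ∈ B, π a) * nf) :=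
        step1.trans (add_le_add step2 step3)
    _ = (1 - δ * (1 - Real.sqrt (∑ a ∈ A, π a) * Real.sqrt (∑ a ∈ B, π a))) * nf := by ring

lemma lambda_nonneg {a b d : ℝ} (ha : 0 ≤ a) (hb : 0 ≤ b) (hd0 : 0 ≤ d) (hd1 : d ≤ 1) :
    0 ≤ 1 - d * (1 - a * b) := by nlinarith [mul_nonneg ha hb]

lemma aux_chain {S : Type*} [Fintype S] [DecidableEq S]
    (π : S → ℝ) (hπpos : ∀ x, 0 < π x) (hπsum : ∑ x, π x = 1) :
    ∀ (k : ℕ) (M : Fin k → S → S → ℝ),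
      (∀ i x, ∑ y, M i x y = 1) →
      (∀ i x y, π x * M i x y = π y * M i y x) →
      ∀ (δ : Fin k → ℝ), (∀ i, 0 ≤ δ i) → (∀ i, δ i ≤ 1) →
      (∀ (i : Fin k) (f : S → ℝ), (∑ x, π x * f x) = 0 →
        ∑ x, π x * (∑ y, M i x y * f y) ^ 2 ≤ (1 - δ i) ^ 2 * ∑ x, π x * f x ^ 2) →
      ∀ (B : Fin (k + 1) → Finset S) (f : S → ℝ),
      (∑ x : Fin (k + 1) → S,
          if ∀ i, x i ∈ B i then
            π (x 0) * f (x 0) * ∏ i : Fin k, M i (x i.castSucc) (x i.succ)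
          else 0) ≤
        Real.sqrt (∑ x, π x * (if x ∈ B 0 then f x else 0) ^ 2) *
          Real.sqrt (∑ a ∈ B (Fin.last k), π a) *
          ∏ i : Fin k, (1 - δ i * (1 - Real.sqrt (∑ a ∈ B i.castSucc, π a) *
            Real.sqrt (∑ a ∈ B i.succ, π a))) := by
  have hπ : ∀ x, (0:ℝ) ≤ π x := fun x => (hπpos x).le
  intro k
  induction k with
  | zero =>
    intro M hMrow hrev δ hδ0 hδ1 hgap B f
    have e : (∑ x : Fin 1 → S, if ∀ i, x i ∈ B i then
          π (x 0) * f (x 0) * ∏ i : Fin 0, M i (x i.castSucc) (x i.succ) else 0)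
        = ∑ a ∈ B 0, π a * f a := by
      rw [Fintype.sum_equiv (Equiv.funUnique (Fin 1) S)
        _ (fun a => if a ∈ B 0 then π a * f a else 0)]
      · simp [Finset.sum_ite_mem]
      · intro x
        simp [Fin.forall_fin_one, Equiv.funUnique]
    rw [e]
    simp only [Finset.univ_eq_empty, Finset.prod_empty, mul_one, Fin.last_zero]
    -- Cauchy-Schwarz
    have hBnn : (0:ℝ) ≤ ∑ a ∈ B 0, π a := Finset.sum_nonneg fun x _ => hπ x
    have e3 : ∑ x, π x * (if x ∈ B 0 then f x else 0) ^ 2 = ∑ x ∈ B 0, π x * f x ^ 2 := by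
      rw [← Finset.sum_subset (Finset.subset_univ (B 0)) (fun x _ hx => by simp [hx])]
      exact Finset.sum_congr rfl fun x hx => by rw [if_pos hx]
    have cs := Finset.sum_mul_sq_le_sq_mul_sq (B 0) (fun x => Real.sqrt (π x) * f x)
      (fun x => Real.sqrt (π x))
    have e1 : ∑ x ∈ B 0, Real.sqrt (π x) * f x * Real.sqrt (π x) = ∑ a ∈ B 0, π a * f a := by
      refine Finset.sum_congr rfl fun x _ => ?_
      rw [mul_comm, ← mul_assoc, Real.mul_self_sqrt (hπ x)]
    have e2 : ∑ x ∈ B 0, (Real.sqrt (π x) * f x) ^ 2 = ∑ x ∈ B 0, π x * f x ^ 2 := by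
      refine Finset.sum_congr rfl fun x _ => ?_
      rw [mul_pow, Real.sq_sqrt (hπ x)]
    have e4 : ∑ x ∈ B 0, Real.sqrt (π x) ^ 2 = ∑ a ∈ B 0, π a :=
      Finset.sum_congr rfl fun x _ => Real.sq_sqrt (hπ x)
    rw [e1, e2, e4] at cs
    calc ∑ a ∈ B 0, π a * f a ≤ |∑ a ∈ B 0, π a * f a| := le_abs_self _
      _ = Real.sqrt ((∑ a ∈ B 0, π a * f a) ^ 2) := (Real.sqrt_sq_eq_abs _).symm
      _ ≤ Real.sqrt ((∑ x ∈ B 0, π x * f x ^ 2) * ∑ a ∈ B 0, π a) := Real.sqrt_le_sqrt cs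
      _ = Real.sqrt (∑ x, π x * (if x ∈ B 0 then f x else 0) ^ 2) *
            Real.sqrt (∑ a ∈ B 0, π a) := by
          rw [Real.sqrt_mul (Finset.sum_nonneg fun x _ =>
            mul_nonneg (hπ x) (sq_nonneg _)), e3]
  | succ k ih =>
    intro M hMrow hrev δ hδ0 hδ1 hgap B f
    set g : S → ℝ := fun x => if x ∈ B 0 then f x else 0 with hgdef
    set f' : S → ℝ := fun y => ∑ z, M 0 y z * g z with hf'def
    have hLHS : (∑ x : Fin (k + 2) → S, if ∀ i, x i ∈ B i then
          π (x 0) * f (x 0) * ∏ i : Fin (k + 1), M i (x i.castSucc) (x i.succ) else 0)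
        = ∑ x' : Fin (k + 1) → S, if ∀ i, x' i ∈ B i.succ then
            π (x' 0) * f' (x' 0) * ∏ i : Fin k, M i.succ (x' i.castSucc) (x' i.succ)
          else 0 := by
      rw [← Fintype.sum_equiv (Fin.consEquiv fun _ : Fin (k + 2) => S)
        (fun p : S × (Fin (k + 1) → S) =>
          if ∀ i, (Fin.cons p.1 p.2 : ∀ _ : Fin (k + 2), S) i ∈ B i then
            π ((Fin.cons p.1 p.2 : ∀ _ : Fin (k + 2), S) 0) *
              f ((Fin.cons p.1 p.2 : ∀ _ : Fin (k + 2), S) 0) *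
              ∏ i : Fin (k + 1), M i ((Fin.cons p.1 p.2 : ∀ _ : Fin (k + 2), S) i.castSucc)
                ((Fin.cons p.1 p.2 : ∀ _ : Fin (k + 2), S) i.succ)
          else 0) _ (fun p => rfl)]
      rw [Fintype.sum_prod_type, Finset.sum_comm]
      refine Finset.sum_congr rfl fun x' _ => ?_
      by_cases hQ : ∀ i : Fin (k + 1), x' i ∈ B i.succ
      · rw [if_pos hQ]
        have hterm : ∀ a : S, (if ∀ i, (Fin.cons a x' : ∀ _ : Fin (k + 2), S) i ∈ B i then
              π ((Fin.cons a x' : ∀ _ : Fin (k + 2), S) 0) *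
                f ((Fin.cons a x' : ∀ _ : Fin (k + 2), S) 0) *
                ∏ i : Fin (k + 1), M i ((Fin.cons a x' : ∀ _ : Fin (k + 2), S) i.castSucc)
                  ((Fin.cons a x' : ∀ _ : Fin (k + 2), S) i.succ)
              else 0)
            = (if a ∈ B 0 then π a * f a * M 0 a (x' 0) else 0) *
                ∏ i : Fin k, M i.succ (x' i.castSucc) (x' i.succ) := by
          intro a
          have hcond : (∀ i, (Fin.cons a x' : ∀ _ : Fin (k + 2), S) i ∈ B i)
              ↔ (a ∈ B 0 ∧ ∀ i : Fin (k + 1), x' i ∈ B i.succ) := by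
            constructor
            · intro h
              exact ⟨by simpa using h 0, fun i => by simpa using h i.succ⟩
            · rintro ⟨h0, h⟩ i
              refine Fin.cases ?_ ?_ i
              · simpa using h0
              · intro j; simpa using h j
          simp only [hcond, Fin.cons_zero]
          by_cases hA : a ∈ B 0
          · rw [if_pos ⟨hA, hQ⟩, if_pos hA, Fin.prod_univ_succ]
            simp only [Fin.castSucc_zero, Fin.cons_zero, Fin.succ_zero_eq_one,
              ← Fin.succ_castSucc, Fin.cons_succ]
            have h1 : (Fin.cons a x' : ∀ _ : Fin (k + 2), S) 1 = x' 0 := by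
              rw [← Fin.succ_zero_eq_one, Fin.cons_succ]
            rw [h1]
            ring
          · rw [if_neg (by tauto), if_neg hA, zero_mul]
        rw [Finset.sum_congr rfl fun a _ => hterm a, ← Finset.sum_mul]
        have hw : (∑ a, if a ∈ B 0 then π a * f a * M 0 a (x' 0) else 0)
            = π (x' 0) * f' (x' 0) := by
          have : ∀ a : S, (if a ∈ B 0 then π a * f a * M 0 a (x' 0) else 0)
              = π (x' 0) * (M 0 (x' 0) a * g a) := by
            intro a
            by_cases hA : a ∈ B 0
            · rw [if_pos hA, hgdef]
              simp only [if_pos hA]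
              rw [show π a * f a * M 0 a (x' 0) = π a * M 0 a (x' 0) * f a by ring,
                hrev 0 a (x' 0)]
              ring
            · rw [if_neg hA, hgdef]
              simp only [if_neg hA]
              ring
          rw [Finset.sum_congr rfl fun a _ => this a, ← Finset.mul_sum, hf'def]
        rw [hw]
      · rw [if_neg hQ]
        refine Finset.sum_eq_zero fun a _ => ?_
        rw [if_neg]
        intro h
        exact hQ fun i => by simpa using h i.succ
    rw [hLHS]
    have IH := ih (fun i => M i.succ) (fun i x => hMrow i.succ x)
      (fun i x y => hrev i.succ x y) (fun i => δ i.succ) (fun i => hδ0 i.succ)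
      (fun i => hδ1 i.succ) (fun i => hgap i.succ) (fun i => B i.succ) f'
    simp only [Fin.succ_last, Fin.succ_castSucc] at IH
    -- key step bound on the first factor
    have hkey := key_step π hπ hπsum (M 0) (hMrow 0) (hrev 0) (δ 0) (hδ0 0) (hδ1 0)
      (hgap 0) (B (Fin.succ 0)) (B 0) g (fun x hx => by rw [hgdef]; simp [hx])
    have hgg : ∀ x, (if x ∈ B (Fin.succ 0) then f' x else 0)
        = (if x ∈ B (Fin.succ 0) then ∑ y, M 0 x y * g y else 0) := fun x => rfl
    -- assemble
    have hs0 : (0:ℝ) ≤ Real.sqrt (∑ a ∈ B (Fin.last (k + 1)), π a) := Real.sqrt_nonneg _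
    have hP' : (0:ℝ) ≤ ∏ i : Fin k, (1 - δ i.succ *
        (1 - Real.sqrt (∑ a ∈ B i.succ.castSucc, π a) *
          Real.sqrt (∑ a ∈ B i.succ.succ, π a))) :=
      Finset.prod_nonneg fun i _ => lambda_nonneg (Real.sqrt_nonneg _) (Real.sqrt_nonneg _)
        (hδ0 i.succ) (hδ1 i.succ)
    have hN1 : Real.sqrt (∑ x, π x * (if x ∈ B (Fin.succ 0) then f' x else 0) ^ 2)
        ≤ (1 - δ 0 * (1 - Real.sqrt (∑ a ∈ B (0 : Fin (k + 1)).castSucc, π a) *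
            Real.sqrt (∑ a ∈ B (Fin.succ 0), π a))) *
          Real.sqrt (∑ x, π x * (if x ∈ B 0 then f x else 0) ^ 2) := by
      simp_rw [hgg]
      have hco : (1 - δ 0 * (1 - Real.sqrt (∑ a ∈ B (0 : Fin (k + 1)).castSucc, π a) *
            Real.sqrt (∑ a ∈ B (Fin.succ 0), π a)))
          = (1 - δ 0 * (1 - Real.sqrt (∑ a ∈ B (Fin.succ 0), π a) *
            Real.sqrt (∑ a ∈ B 0, π a))) := by
        rw [Fin.castSucc_zero]; ring
      rw [hco]
      exact hkey
    calc (∑ x' : Fin (k + 1) → S, if ∀ i, x' i ∈ B i.succ then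
            π (x' 0) * f' (x' 0) * ∏ i : Fin k, M i.succ (x' i.castSucc) (x' i.succ)
          else 0)
        ≤ Real.sqrt (∑ x, π x * (if x ∈ B (Fin.succ 0) then f' x else 0) ^ 2) *
            Real.sqrt (∑ a ∈ B (Fin.last (k + 1)), π a) *
            ∏ i : Fin k, (1 - δ i.succ *
              (1 - Real.sqrt (∑ a ∈ B i.succ.castSucc, π a) *
                Real.sqrt (∑ a ∈ B i.succ.succ, π a))) := IH
      _ ≤ ((1 - δ 0 * (1 - Real.sqrt (∑ a ∈ B (0 : Fin (k + 1)).castSucc, π a) *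
              Real.sqrt (∑ a ∈ B (Fin.succ 0), π a))) *
            Real.sqrt (∑ x, π x * (if x ∈ B 0 then f x else 0) ^ 2)) *
            Real.sqrt (∑ a ∈ B (Fin.last (k + 1)), π a) *
            ∏ i : Fin k, (1 - δ i.succ *
              (1 - Real.sqrt (∑ a ∈ B i.succ.castSucc, π a) *
                Real.sqrt (∑ a ∈ B i.succ.succ, π a))) := by
          apply mul_le_mul_of_nonneg_right _ hP'
          exact mul_le_mul_of_nonneg_right hN1 hs0
      _ = Real.sqrt (∑ x, π x * (if x ∈ B 0 then f x else 0) ^ 2) *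
            Real.sqrt (∑ a ∈ B (Fin.last (k + 1)), π a) *
            ∏ i : Fin (k + 1), (1 - δ i *
              (1 - Real.sqrt (∑ a ∈ B i.castSucc, π a) *
                Real.sqrt (∑ a ∈ B i.succ, π a))) := by
          rw [Fin.prod_univ_succ]
          ring

/-- **Bound for inhomogeneous Markov chains.** Let `π` be a fully supported
probability distribution on a finite nonempty set `S`, and let `M_1, …, M_k` be
stochastic matrices on `S`, reversible with respect to `π`, with spectral gaps at
least `δ_i ∈ (0,1]` (expressed by the contraction property on mean-zero functions).
Then for all subsets `A_0, …, A_k ⊆ S`, the probability that the inhomogeneous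
chain started from `π` satisfies `X_i ∈ A_i` for all `i` is at most
`√(π(A_0)) √(π(A_k)) ∏_i [1 - δ_i (1 - √(π(A_{i-1})) √(π(A_i)))]`. -/
theorem inhomogeneous_markov_chain_bound {S : Type*} [Fintype S] [Nonempty S]
    [DecidableEq S]
    (π : S → ℝ) (hπpos : ∀ x, 0 < π x) (hπsum : ∑ x, π x = 1)
    (k : ℕ) (M : Fin k → S → S → ℝ)
    (hMnn : ∀ i x y, 0 ≤ M i x y) (hMrow : ∀ i x, ∑ y, M i x y = 1)
    (hrev : ∀ i x y, π x * M i x y = π y * M i y x)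
    (δ : Fin k → ℝ) (hδ0 : ∀ i, 0 < δ i) (hδ1 : ∀ i, δ i ≤ 1)
    (hgap : ∀ (i : Fin k) (f : S → ℝ), (∑ x, π x * f x) = 0 →
      ∑ x, π x * (∑ y, M i x y * f y) ^ 2 ≤ (1 - δ i) ^ 2 * ∑ x, π x * f x ^ 2)
    (A : Fin (k + 1) → Finset S) :
    (∑ x : Fin (k + 1) → S,
        if ∀ i, x i ∈ A i then
          π (x 0) * ∏ i : Fin k, M i (x i.castSucc) (x i.succ)
        else 0) ≤
      Real.sqrt (∑ a ∈ A 0, π a) * Real.sqrt (∑ a ∈ A (Fin.last k), π a) *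
        ∏ i : Fin k,
          (1 - δ i * (1 - Real.sqrt (∑ a ∈ A i.castSucc, π a) *
            Real.sqrt (∑ a ∈ A i.succ, π a))) := by
  have H := aux_chain π hπpos hπsum k M hMrow hrev δ (fun i => (hδ0 i).le) hδ1 hgap A
    (fun _ => 1)
  have e2 : ∑ x, π x * (if x ∈ A 0 then (1:ℝ) else 0) ^ 2 = ∑ a ∈ A 0, π a := by
    rw [← Finset.sum_subset (Finset.subset_univ (A 0)) (fun x _ hx => by simp [hx])]
    refine Finset.sum_congr rfl fun x hx => by rw [if_pos hx]; ring
  rw [e2] at H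
  refine le_trans (le_of_eq ?_) H
  refine Finset.sum_congr rfl fun x _ => ?_
  by_cases h : ∀ i, x i ∈ A i <;> simp [h]
end

section
/- One-step norm bound. Let S be a finite nonempty set, π a probability distribution on S with π(x) > 0 for all x, and M a stochastic matrix on S reversible with respect to π. Suppose δ ∈ (0,1] is such that for every h : S → ℝ with Σ_x π(x)h(x) = 0, one has Σ_x π(x)·(Mh)(x)² ≤ (1-δ)²·Σ_x π(x)·h(x)², where (Mh)(x) = Σ_y M(x,y)h(y). Then for all subsets A_1, A_2 ⊆ S and all functions f, g : S → ℝ with f(x) = 0 for x ∉ A_1, g(x) = 0 for x ∉ A_2, Σ_x π(x)f(x)² ≤ 1, and Σ_x π(x)g(x)² ≤ 1, one has | Σ_x π(x)·g(x)·(Mf)(x) | ≤ 1 - δ·( 1 - √(π(A_1))·√(π(A_2)) ). -/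
open Finset

set_option maxHeartbeats 1000000


private lemma wcs {S : Type*} [Fintype S] (w u v : S → ℝ) (hw : ∀ x, 0 ≤ w x) :
    (∑ x, w x * u x * v x) ^ 2 ≤ (∑ x, w x * u x ^ 2) * (∑ x, w x * v x ^ 2) := by
  have e1 : ∀ x : S, w x * u x * v x = (Real.sqrt (w x) * u x) * (Real.sqrt (w x) * v x) := by
    intro x; linear_combination u x * v x * (Real.mul_self_sqrt (hw x)).symm
  have e2 : ∀ x : S, w x * u x ^ 2 = (Real.sqrt (w x) * u x) ^ 2 := by
    intro x; rw [mul_pow, Real.sq_sqrt (hw x)]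
  have e3 : ∀ x : S, w x * v x ^ 2 = (Real.sqrt (w x) * v x) ^ 2 := by
    intro x; rw [mul_pow, Real.sq_sqrt (hw x)]
  simp_rw [e1, e2, e3]
  exact Finset.sum_mul_sq_le_sq_mul_sq _ _ _


/-- **One-step norm bound.** Let `π` be a fully supported probability distribution
on a finite nonempty set `S`, and `M` a stochastic matrix on `S` reversible with
respect to `π` with spectral gap at least `δ ∈ (0,1]` (expressed by the contraction
property on mean-zero functions). Then for all `A₁, A₂ ⊆ S` and all `f, g : S → ℝ`
supported on `A₁`, `A₂` respectively with `‖f‖_{L²(π)} ≤ 1` and `‖g‖_{L²(π)} ≤ 1`: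
`|⟨g, Mf⟩_π| ≤ 1 - δ (1 - √(π(A₁)) √(π(A₂)))`. -/
theorem one_step_operator_norm_bound {S : Type*} [Fintype S] [Nonempty S]
    (π : S → ℝ) (hπpos : ∀ x, 0 < π x) (hπsum : ∑ x, π x = 1)
    (M : S → S → ℝ) (hMnn : ∀ x y, 0 ≤ M x y) (hMrow : ∀ x, ∑ y, M x y = 1)
    (hrev : ∀ x y, π x * M x y = π y * M y x)
    (δ : ℝ) (hδ0 : 0 < δ) (hδ1 : δ ≤ 1)
    (hgap : ∀ h : S → ℝ, (∑ x, π x * h x) = 0 →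
      ∑ x, π x * (∑ y, M x y * h y) ^ 2 ≤ (1 - δ) ^ 2 * ∑ x, π x * h x ^ 2)
    (A₁ A₂ : Finset S) (f g : S → ℝ)
    (hf0 : ∀ x, x ∉ A₁ → f x = 0) (hg0 : ∀ x, x ∉ A₂ → g x = 0)
    (hfnorm : ∑ x, π x * f x ^ 2 ≤ 1) (hgnorm : ∑ x, π x * g x ^ 2 ≤ 1) :
    |∑ x, π x * g x * (∑ y, M x y * f y)| ≤
      1 - δ * (1 - Real.sqrt (∑ a ∈ A₁, π a) * Real.sqrt (∑ a ∈ A₂, π a)) := by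
  classical
  have hπnn : ∀ x, 0 ≤ π x := fun x => (hπpos x).le
  set a : ℝ := ∑ x, π x * f x with ha
  set b : ℝ := ∑ x, π x * g x with hb
  set T : ℝ := ∑ x, π x * g x * (∑ y, M x y * f y) with hT
  -- stationarity
  have stat : ∀ h : S → ℝ, ∑ x, π x * (∑ y, M x y * h y) = ∑ x, π x * h x := by
    intro h
    simp_rw [Finset.mul_sum]
    rw [Finset.sum_comm]
    apply Finset.sum_congr rfl
    intro y _
    have e : ∀ x : S, π x * (M x y * h y) = (π y * h y) * M y x := by
      intro x; rw [← mul_assoc, hrev]; ring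
    simp_rw [e, ← Finset.mul_sum, hMrow, mul_one]
  -- squared masses
  set pA₁ : ℝ := ∑ x ∈ A₁, π x with hpA₁
  set pA₂ : ℝ := ∑ x ∈ A₂, π x with hpA₂
  have hpA₁nn : 0 ≤ pA₁ := Finset.sum_nonneg fun x _ => hπnn x
  have hpA₂nn : 0 ≤ pA₂ := Finset.sum_nonneg fun x _ => hπnn x
  have hpA₁le : pA₁ ≤ 1 := by
    rw [← hπsum]; exact Finset.sum_le_sum_of_subset_of_nonneg (Finset.subset_univ _)
      (fun x _ _ => hπnn x)
  have hpA₂le : pA₂ ≤ 1 := by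
    rw [← hπsum]; exact Finset.sum_le_sum_of_subset_of_nonneg (Finset.subset_univ _)
      (fun x _ _ => hπnn x)
  -- bound a² ≤ pA₁
  have indsum : ∀ (A : Finset S),
      (∑ x, π x * (if x ∈ A then (1:ℝ) else 0) ^ 2) = ∑ x ∈ A, π x := by
    intro A
    have : ∀ x : S, π x * (if x ∈ A then (1:ℝ) else 0) ^ 2
        = if x ∈ A then π x else 0 := by
      intro x; by_cases h : x ∈ A <;> simp [h]
    simp_rw [this, Finset.sum_ite_mem, Finset.univ_inter]
  have habd : ∀ (A : Finset S) (u : S → ℝ), (∀ x, x ∉ A → u x = 0) →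
      (∑ x, π x * u x ^ 2) ≤ 1 → (∑ x, π x * u x) ^ 2 ≤ ∑ x ∈ A, π x := by
    intro A u hu hunorm
    have e : ∀ x : S, π x * u x = π x * (if x ∈ A then (1:ℝ) else 0) * u x := by
      intro x; by_cases h : x ∈ A <;> simp [h, hu x]
    calc (∑ x, π x * u x) ^ 2
        = (∑ x, π x * (if x ∈ A then (1:ℝ) else 0) * u x) ^ 2 := by simp_rw [e]
      _ ≤ (∑ x, π x * (if x ∈ A then (1:ℝ) else 0) ^ 2) * (∑ x, π x * u x ^ 2) :=
          wcs π _ u hπnn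
      _ ≤ (∑ x ∈ A, π x) * 1 := by
          rw [indsum]
          exact mul_le_mul_of_nonneg_left hunorm (Finset.sum_nonneg fun x _ => hπnn x)
      _ = ∑ x ∈ A, π x := mul_one _
  have ha2 : a ^ 2 ≤ pA₁ := habd A₁ f hf0 hfnorm
  have hb2 : b ^ 2 ≤ pA₂ := habd A₂ g hg0 hgnorm
  -- centered functions
  set f' : S → ℝ := fun x => f x - a with hf'
  set g' : S → ℝ := fun x => g x - b with hg'
  have hf'mean : ∑ x, π x * f' x = 0 := by
    simp_rw [hf', mul_sub, Finset.sum_sub_distrib, ← Finset.sum_mul, hπsum, ← ha]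
    ring
  have nf' : ∑ x, π x * f' x ^ 2 = (∑ x, π x * f x ^ 2) - a ^ 2 := by
    have e : ∀ x : S, π x * f' x ^ 2
        = π x * f x ^ 2 - 2 * a * (π x * f x) + a ^ 2 * π x := by
      intro x; simp only [hf']; ring
    simp_rw [e, Finset.sum_add_distrib, Finset.sum_sub_distrib, ← Finset.mul_sum, ← ha, hπsum]
    ring
  have ng' : ∑ x, π x * g' x ^ 2 = (∑ x, π x * g x ^ 2) - b ^ 2 := by
    have e : ∀ x : S, π x * g' x ^ 2
        = π x * g x ^ 2 - 2 * b * (π x * g x) + b ^ 2 * π x := by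
      intro x; simp only [hg']; ring
    simp_rw [e, Finset.sum_add_distrib, Finset.sum_sub_distrib, ← Finset.mul_sum, ← hb, hπsum]
    ring
  have nf'nn : 0 ≤ ∑ x, π x * f' x ^ 2 :=
    Finset.sum_nonneg fun x _ => mul_nonneg (hπnn x) (sq_nonneg _)
  have ng'nn : 0 ≤ ∑ x, π x * g' x ^ 2 :=
    Finset.sum_nonneg fun x _ => mul_nonneg (hπnn x) (sq_nonneg _)
  have nf'le : ∑ x, π x * f' x ^ 2 ≤ 1 - a ^ 2 := by rw [nf']; linarith
  have ng'le : ∑ x, π x * g' x ^ 2 ≤ 1 - b ^ 2 := by rw [ng']; linarith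
  -- decomposition : T = a*b + R
  set R : ℝ := ∑ x, π x * g' x * (∑ y, M x y * f' y) with hR
  have hMf' : ∀ x : S, (∑ y, M x y * f' y) = (∑ y, M x y * f y) - a := by
    intro x
    simp_rw [hf', mul_sub, Finset.sum_sub_distrib, ← Finset.sum_mul, hMrow, one_mul]
  have hTdec : T = a * b + R := by
    have e : ∀ x : S, π x * g' x * (∑ y, M x y * f' y)
        = π x * g x * (∑ y, M x y * f y) - a * (π x * g x)
          - b * (π x * (∑ y, M x y * f y)) + (a * b) * π x := by
      intro x; rw [hMf' x]; simp only [hg']; ring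
    have : R = T - a * b := by
      rw [hR]
      simp_rw [e, Finset.sum_add_distrib, Finset.sum_sub_distrib, ← Finset.mul_sum,
        ← hT, ← hb, stat f, ← ha, hπsum]
      ring
    linarith
  -- bound on R
  have hRsq : R ^ 2 ≤ (∑ x, π x * g' x ^ 2) * ((1 - δ) ^ 2 * ∑ x, π x * f' x ^ 2) := by
    calc R ^ 2 ≤ (∑ x, π x * g' x ^ 2) * (∑ x, π x * (∑ y, M x y * f' y) ^ 2) :=
          wcs π g' (fun x => ∑ y, M x y * f' y) hπnn
      _ ≤ (∑ x, π x * g' x ^ 2) * ((1 - δ) ^ 2 * ∑ x, π x * f' x ^ 2) :=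
          mul_le_mul_of_nonneg_left (hgap f' hf'mean) ng'nn
  have hRsq2 : R ^ 2 ≤ (1 - δ) ^ 2 * ((1 - a ^ 2) * (1 - b ^ 2)) := by
    have h1 : (∑ x, π x * g' x ^ 2) * ((1 - δ) ^ 2 * ∑ x, π x * f' x ^ 2)
        ≤ (1 - b ^ 2) * ((1 - δ) ^ 2 * (1 - a ^ 2)) := by
      apply mul_le_mul ng'le _ (mul_nonneg (sq_nonneg _) nf'nn) (by linarith [sq_nonneg b, hb2, hpA₂le])
      exact mul_le_mul_of_nonneg_left nf'le (sq_nonneg _)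
    calc R ^ 2 ≤ (∑ x, π x * g' x ^ 2) * ((1 - δ) ^ 2 * ∑ x, π x * f' x ^ 2) := hRsq
      _ ≤ (1 - b ^ 2) * ((1 - δ) ^ 2 * (1 - a ^ 2)) := h1
      _ = (1 - δ) ^ 2 * ((1 - a ^ 2) * (1 - b ^ 2)) := by ring
  have ha2' : a ^ 2 ≤ 1 := le_trans ha2 hpA₁le
  have hb2' : b ^ 2 ≤ 1 := le_trans hb2 hpA₂le
  set u : ℝ := Real.sqrt (1 - a ^ 2) with hu
  set v : ℝ := Real.sqrt (1 - b ^ 2) with hv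
  have hu2 : u ^ 2 = 1 - a ^ 2 := Real.sq_sqrt (by linarith)
  have hv2 : v ^ 2 = 1 - b ^ 2 := Real.sq_sqrt (by linarith)
  have hu0 : 0 ≤ u := Real.sqrt_nonneg _
  have hv0 : 0 ≤ v := Real.sqrt_nonneg _
  have hδ' : (0:ℝ) ≤ 1 - δ := by linarith
  have hRle : |R| ≤ (1 - δ) * (u * v) := by
    have h : R ^ 2 ≤ ((1 - δ) * (u * v)) ^ 2 := by
      rw [mul_pow, mul_pow, hu2, hv2]; exact hRsq2
    have hc : 0 ≤ (1 - δ) * (u * v) := mul_nonneg hδ' (mul_nonneg hu0 hv0)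
    calc |R| = Real.sqrt (R ^ 2) := (Real.sqrt_sq_eq_abs R).symm
      _ ≤ Real.sqrt (((1 - δ) * (u * v)) ^ 2) := Real.sqrt_le_sqrt h
      _ = (1 - δ) * (u * v) := Real.sqrt_sq hc
  -- bounds on |a|, |b|
  set α : ℝ := Real.sqrt pA₁ with hα
  set β : ℝ := Real.sqrt pA₂ with hβ
  have haα : |a| ≤ α := by
    rw [hα, ← Real.sqrt_sq_eq_abs]; exact Real.sqrt_le_sqrt ha2
  have hbβ : |b| ≤ β := by
    rw [hβ, ← Real.sqrt_sq_eq_abs]; exact Real.sqrt_le_sqrt hb2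
  have hα0 : 0 ≤ α := Real.sqrt_nonneg _
  have hβ0 : 0 ≤ β := Real.sqrt_nonneg _
  -- 2D Cauchy-Schwarz: |a||b| + u v ≤ 1
  have hcs : |a| * |b| + u * v ≤ 1 := by
    have e : (|a| - |b|) ^ 2 + (u - v) ^ 2
        = (a ^ 2 + u ^ 2) + (b ^ 2 + v ^ 2) - 2 * (|a| * |b| + u * v) := by
      rw [← sq_abs a, ← sq_abs b]; ring
    have h1 := sq_nonneg (|a| - |b|)
    have h2 := sq_nonneg (u - v)
    linarith [e, hu2, hv2]
  have hTabs : |T| ≤ |a| * |b| + (1 - δ) * (u * v) := by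
    rw [hTdec]
    calc |a * b + R| ≤ |a * b| + |R| := abs_add_le _ _
      _ ≤ |a| * |b| + (1 - δ) * (u * v) := by rw [abs_mul]; linarith
  have habαβ : |a| * |b| ≤ α * β :=
    mul_le_mul haα hbβ (abs_nonneg _) hα0
  calc |T| ≤ |a| * |b| + (1 - δ) * (u * v) := hTabs
    _ = δ * (|a| * |b|) + (1 - δ) * (|a| * |b| + u * v) := by ring
    _ ≤ δ * (α * β) + (1 - δ) * 1 := by
        have h1 : δ * (|a| * |b|) ≤ δ * (α * β) :=
          mul_le_mul_of_nonneg_left habαβ hδ0.le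
        have h2 : (1 - δ) * (|a| * |b| + u * v) ≤ (1 - δ) * 1 :=
          mul_le_mul_of_nonneg_left hcs hδ'
        linarith
    _ = 1 - δ * (1 - α * β) := by ring
end

section
/- Reduction of the FKG lattice condition to pairs differing in two coordinates. Let D be a finite linearly ordered set, let m ≥ 1, and let μ : D^m → ℝ be a strictly positive function (full support). If μ(η)·μ(δ) ≤ μ(η ∨ δ)·μ(η ∧ δ) holds for all η, δ ∈ D^m that agree at all but at most two coordinates, then μ(η)·μ(δ) ≤ μ(η ∨ δ)·μ(η ∧ δ) holds for all η, δ ∈ D^m. -/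
open Finset

section Aux

variable {D : Type*} [LinearOrder D] {m : ℕ} (μ : (Fin m → D) → ℝ)

/-- Increasing differences for a single coordinate update, bases agreeing at `i`. -/
lemma fkg_lemB (hμ : ∀ η, 0 < μ η)
    (h2 : ∀ η δ : Fin m → D,
      (Finset.univ.filter fun i => η i ≠ δ i).card ≤ 2 →
      μ η * μ δ ≤ μ (fun i => max (η i) (δ i)) * μ (fun i => min (η i) (δ i))) :
    ∀ (n : ℕ) (y y' : Fin m → D) (i : Fin m) (d : D),
      (Finset.univ.filter fun j => y j ≠ y' j).card ≤ n → y ≤ y' → y i = y' i → y i ≤ d →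
      μ (Function.update y i d) * μ y' ≤ μ (Function.update y' i d) * μ y := by
  intro n
  induction n with
  | zero =>
    intro y y' i d hc hle hi hd
    have : y = y' := by
      funext j
      by_contra hj
      have : j ∈ Finset.univ.filter fun j => y j ≠ y' j := by simp [hj]
      simp [Finset.card_eq_zero.mp (Nat.le_zero.mp hc)] at this
    rw [this]
  | succ n ih =>
    intro y y' i d hc hle hi hd
    by_cases hyy : y = y'
    · rw [hyy]
    · have hex : ∃ j, y j ≠ y' j := by
        by_contra h
        push_neg at h
        exact hyy (funext h)
      obtain ⟨j, hj⟩ := hex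
      have hjlt : y j < y' j := lt_of_le_of_ne (hle j) hj
      have hji : j ≠ i := fun h => hj (h ▸ hi)
      set z := Function.update y j (y' j) with hz
      have hzi : z i = y i := Function.update_of_ne (fun h => hji h.symm) _ _
      have hzk : ∀ k, k ≠ j → z k = y k := fun k hk => Function.update_of_ne hk _ _
      have hzj : z j = y' j := Function.update_self _ _ _
      have hyz : y ≤ z := by
        intro k
        by_cases hk : k = j
        · subst hk; rw [hzj]; exact hle k
        · rw [hzk k hk]
      have hzy' : z ≤ y' := by
        intro k
        by_cases hk : k = j
        · subst hk; rw [hzj]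
        · rw [hzk k hk]; exact hle k
      -- card bound for z vs y'
      have hcz : (Finset.univ.filter fun k => z k ≠ y' k).card ≤ n := by
        have hsub : (Finset.univ.filter fun k => z k ≠ y' k) ⊆
            (Finset.univ.filter fun k => y k ≠ y' k).erase j := by
          intro k hk
          simp only [Finset.mem_filter, Finset.mem_univ, true_and] at hk
          have hkj : k ≠ j := by
            intro h; subst h; exact hk hzj
          refine Finset.mem_erase.mpr ⟨hkj, ?_⟩
          simp only [Finset.mem_filter, Finset.mem_univ, true_and]
          rwa [hzk k hkj] at hk
        have hjm : j ∈ Finset.univ.filter fun k => y k ≠ y' k := by simp [hj]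
        calc (Finset.univ.filter fun k => z k ≠ y' k).card
            ≤ ((Finset.univ.filter fun k => y k ≠ y' k).erase j).card := Finset.card_le_card hsub
          _ = (Finset.univ.filter fun k => y k ≠ y' k).card - 1 := Finset.card_erase_of_mem hjm
          _ ≤ (n + 1) - 1 := Nat.sub_le_sub_right hc 1
          _ = n := rfl
      -- step 1: h2 applied to η = z, δ = update y i d
      have step1 : μ (Function.update y i d) * μ z ≤ μ (Function.update z i d) * μ y := by
        have hcard : (Finset.univ.filter fun k => z k ≠ Function.update y i d k).card ≤ 2 := by
          have hsub : (Finset.univ.filter fun k => z k ≠ Function.update y i d k) ⊆ {i, j} := by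
            intro k hk
            simp only [Finset.mem_filter, Finset.mem_univ, true_and] at hk
            by_contra hkij
            simp only [Finset.mem_insert, Finset.mem_singleton, not_or] at hkij
            obtain ⟨hki, hkj⟩ := hkij
            rw [hzk k hkj, Function.update_of_ne hki] at hk
            exact hk rfl
          calc (Finset.univ.filter fun k => z k ≠ Function.update y i d k).card
              ≤ ({i, j} : Finset (Fin m)).card := Finset.card_le_card hsub
            _ ≤ 2 := Finset.card_insert_le _ _ |>.trans (by simp)
        have h := h2 z (Function.update y i d) hcard
        have hmax : (fun k => max (z k) (Function.update y i d k)) = Function.update z i d := by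
          funext k
          by_cases hki : k = i
          · subst hki
            rw [hzi, Function.update_self, Function.update_self]
            exact max_eq_right hd
          · rw [Function.update_of_ne hki, Function.update_of_ne hki]
            exact max_eq_left (hyz k)
        have hmin : (fun k => min (z k) (Function.update y i d k)) = y := by
          funext k
          by_cases hki : k = i
          · subst hki
            rw [hzi, Function.update_self]
            exact min_eq_left hd
          · rw [Function.update_of_ne hki]
            exact min_eq_right (hyz k)
        rw [hmax, hmin] at h
        linarith [h]
      -- step 2: induction hypothesis for z vs y'
      have hzi' : z i = y' i := hzi.trans hi
      have hzd : z i ≤ d := by rw [hzi]; exact hd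
      have step2 := ih z y' i d hcz hzy' hzi' hzd
      -- combine
      have p1 := hμ z
      have p2 := hμ y
      have p3 := hμ y'
      have p4 := hμ (Function.update y i d)
      have p5 := hμ (Function.update z i d)
      have p6 := hμ (Function.update y' i d)
      nlinarith [mul_le_mul_of_nonneg_right step1 (le_of_lt p3),
                 mul_le_mul_of_nonneg_right step2 (le_of_lt p2)]

/-- Raising a set of coordinates: the main induction. -/
lemma fkg_lemC (hμ : ∀ η, 0 < μ η)
    (h2 : ∀ η δ : Fin m → D,
      (Finset.univ.filter fun i => η i ≠ δ i).card ≤ 2 →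
      μ η * μ δ ≤ μ (fun i => max (η i) (δ i)) * μ (fun i => min (η i) (δ i))) :
    ∀ (S : Finset (Fin m)) (x u v : Fin m → D), u ≤ v → (∀ i ∈ S, u i = v i) →
      (∀ i ∈ S, v i ≤ x i) →
      μ (S.piecewise x u) * μ v ≤ μ (S.piecewise x v) * μ u := by
  intro S
  induction S using Finset.induction_on with
  | empty =>
    intro x u v huv _ _
    simp [mul_comm]
  | @insert i S hiS ih =>
    intro x u v huv hagree hlex
    rw [Finset.piecewise_insert, Finset.piecewise_insert]
    set U := S.piecewise x u with hU
    set V := S.piecewise x v with hV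
    have hUV : U ≤ V := by
      intro k
      by_cases hk : k ∈ S
      · rw [hU, hV, Finset.piecewise_eq_of_mem _ _ _ hk, Finset.piecewise_eq_of_mem _ _ _ hk]
      · rw [hU, hV, Finset.piecewise_eq_of_notMem _ _ _ hk,
          Finset.piecewise_eq_of_notMem _ _ _ hk]
        exact huv k
    have hUi : U i = u i := Finset.piecewise_eq_of_notMem _ _ _ hiS
    have hVi : V i = v i := Finset.piecewise_eq_of_notMem _ _ _ hiS
    have hUVi : U i = V i := by
      rw [hUi, hVi]; exact hagree i (Finset.mem_insert_self i S)
    have hUd : U i ≤ x i := by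
      rw [hUi, hagree i (Finset.mem_insert_self i S)]
      exact hlex i (Finset.mem_insert_self i S)
    have hcard : (Finset.univ.filter fun j => U j ≠ V j).card ≤ m := by
      calc (Finset.univ.filter fun j => U j ≠ V j).card
          ≤ (Finset.univ : Finset (Fin m)).card := Finset.card_filter_le _ _
        _ = m := by simp
    have stepB := fkg_lemB μ hμ h2 m U V i (x i) hcard hUV hUVi hUd
    have stepC := ih x u v huv (fun k hk => hagree k (Finset.mem_insert_of_mem hk))
      (fun k hk => hlex k (Finset.mem_insert_of_mem hk))
    rw [← hU, ← hV] at stepC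
    have p1 := hμ U
    have p2 := hμ V
    have p3 := hμ u
    have p4 := hμ v
    have p5 := hμ (Function.update U i (x i))
    have p6 := hμ (Function.update V i (x i))
    nlinarith [mul_le_mul_of_nonneg_right stepB (le_of_lt p4),
               mul_le_mul_of_nonneg_right stepC (le_of_lt p6)]

end Aux

/-- **Reduction of the FKG lattice condition to pairs differing in at most two
coordinates.** Let `D` be a finite linearly ordered set, `m ≥ 1`, and
`μ : D^m → ℝ` strictly positive. If `μ(η) μ(δ) ≤ μ(η ∨ δ) μ(η ∧ δ)` holds whenever
`η` and `δ` agree at all but at most two coordinates, then it holds for all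
`η, δ ∈ D^m`, where `∨` and `∧` are the coordinatewise max and min. -/
theorem fkg_condition_from_small_boxes {D : Type*} [Fintype D] [LinearOrder D]
    (m : ℕ) (hm : 1 ≤ m) (μ : (Fin m → D) → ℝ) (hμ : ∀ η, 0 < μ η)
    (h2 : ∀ η δ : Fin m → D,
      (Finset.univ.filter fun i => η i ≠ δ i).card ≤ 2 →
      μ η * μ δ ≤ μ (fun i => max (η i) (δ i)) * μ (fun i => min (η i) (δ i))) :
    ∀ η δ : Fin m → D,
      μ η * μ δ ≤ μ (fun i => max (η i) (δ i)) * μ (fun i => min (η i) (δ i)) := by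
  intro η δ
  set S : Finset (Fin m) := Finset.univ.filter fun i => δ i < η i with hS
  set x : Fin m → D := fun i => max (η i) (δ i) with hx
  set u : Fin m → D := fun i => min (η i) (δ i) with hu
  have hmemS : ∀ i, i ∈ S ↔ δ i < η i := by
    intro i; simp [hS]
  have huv : u ≤ δ := fun i => min_le_right _ _
  have hagree : ∀ i ∈ S, u i = δ i := by
    intro i hi
    exact min_eq_right (le_of_lt ((hmemS i).mp hi))
  have hlex : ∀ i ∈ S, δ i ≤ x i := fun i _ => le_max_right _ _
  have h1 : S.piecewise x u = η := by
    funext i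
    by_cases hi : i ∈ S
    · rw [Finset.piecewise_eq_of_mem _ _ _ hi, hx]
      exact max_eq_left (le_of_lt ((hmemS i).mp hi))
    · rw [Finset.piecewise_eq_of_notMem _ _ _ hi, hu]
      exact min_eq_left (not_lt.mp (fun h => hi ((hmemS i).mpr h)))
  have h2' : S.piecewise x δ = x := by
    funext i
    by_cases hi : i ∈ S
    · rw [Finset.piecewise_eq_of_mem _ _ _ hi]
    · rw [Finset.piecewise_eq_of_notMem _ _ _ hi, hx]
      exact (max_eq_right (not_lt.mp (fun h => hi ((hmemS i).mpr h)))).symm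
  have := fkg_lemC μ hμ h2 S x u δ huv hagree hlex
  rw [h1, h2'] at this
  exact this
end
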